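/- arXiv:2505.00973 — 5 statements merged into one kernel-verified Lean document; each statement's English description precedes it below -/
import Mathlib

section
/- Optimal robust competitive ratio for the Leontief utility: consider an RRAwP instance with d = 2, θ̲_{0,1} > 0, θ̲_{0,2} > 0, V > 0 and Leontief utility u(x, y; θ) = min(x/θ₁, y/θ₂). For τ ∈ {1,…,T}, let f_τ = max over θ₁ ∈ [θ̲_{0,1}, θ̄_{0,1} − Δ_{τ,1}] and θ₂ ∈ [θ̲_{0,2} + Δ_{τ,2}, θ̄_{0,2}] of (V/(V + Σ_{t=τ+1}^{T} V_t))·( θ₂/(θ₁ + θ₂) + (θ₁ + Δ_{τ,1})/(θ₁ + θ₂ + Δ_{τ,1} − Δ_{τ,2}) ), and set Φ* = min_{1 ≤ τ ≤ T} 1/f_τ. Then for every real Φ ≤ 1, there exists an allocation policy guaranteeing ratio Φ if and only if Φ ≤ Φ*; that is, the optimal robust competitive ratio equals Φ*. -/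
/-- An instance of the robust resource allocation with predictions (RRAwP) problem. -/
structure RRAwP where
  /-- number of periods -/
  T : ℕ
  /-- number of unknown parameters -/
  nd : ℕ
  /-- left endpoints of the initial prediction intervals -/
  θlo : ℕ → ℝ
  /-- right endpoints of the initial prediction intervals -/
  θhi : ℕ → ℝ
  /-- prediction-error upper bounds, indexed by period and parameter -/
  Δ : ℕ → ℕ → ℝ
  /-- resource supplies -/
  Vcap : ℕ → ℝ
  /-- the parametric utility function `u(x, y; θ)` -/
  u : ℝ → ℝ → (ℕ → ℝ) → ℝ

namespace RRAwP

variable (M : RRAwP)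

/-- The total available resource `V = V_1 + … + V_T`. -/
noncomputable def Vtot : ℝ := ∑ t ∈ Finset.Icc 1 M.T, M.Vcap t

/-- Membership of a parameter vector in the initial prediction box. -/
def InBox (θ : ℕ → ℝ) : Prop :=
  ∀ i, 1 ≤ i → i ≤ M.nd → M.θlo i ≤ θ i ∧ θ i ≤ M.θhi i

/-- The structural hypotheses on an RRAwP instance. -/
def IsValid : Prop :=
  1 ≤ M.T ∧ 1 ≤ M.nd ∧
  (∀ i, 1 ≤ i → i ≤ M.nd → 0 ≤ M.θlo i ∧ M.θlo i ≤ M.θhi i) ∧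
  (∀ t i, 1 ≤ t → t + 1 ≤ M.T → 1 ≤ i → i ≤ M.nd → M.Δ (t + 1) i ≤ M.Δ t i) ∧
  (∀ t i, 1 ≤ t → t ≤ M.T → 1 ≤ i → i ≤ M.nd → 0 ≤ M.Δ t i) ∧
  (∀ i, 1 ≤ i → i ≤ M.nd → M.Δ 1 i ≤ M.θhi i - M.θlo i) ∧
  (∀ t, 1 ≤ t → t ≤ M.T → 0 ≤ M.Vcap t) ∧
  (∀ θ, M.InBox θ →
    (∀ x y, x ∈ Set.Icc (0 : ℝ) M.Vtot → y ∈ Set.Icc (0 : ℝ) M.Vtot → 0 ≤ M.u x y θ) ∧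
    ContinuousOn (fun q : ℝ × ℝ => M.u q.1 q.2 θ)
      (Set.Icc (0 : ℝ) M.Vtot ×ˢ Set.Icc (0 : ℝ) M.Vtot) ∧
    (∀ x x' y, 0 ≤ x → x ≤ x' → x' ≤ M.Vtot → y ∈ Set.Icc (0 : ℝ) M.Vtot →
      M.u x y θ ≤ M.u x' y θ) ∧
    (∀ x y y', x ∈ Set.Icc (0 : ℝ) M.Vtot → 0 ≤ y → y ≤ y' → y' ≤ M.Vtot →
      M.u x y θ ≤ M.u x y' θ) ∧
    ConcaveOn ℝ (Set.Icc (0 : ℝ) M.Vtot ×ˢ Set.Icc (0 : ℝ) M.Vtot)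
      (fun q : ℝ × ℝ => M.u q.1 q.2 θ))

/-- An admissible scenario: regular multivariate prediction sequences together with a
consistent parameter vector. -/
def Scenario (lo hi : ℕ → ℕ → ℝ) (θ : ℕ → ℝ) : Prop :=
  ∀ i, 1 ≤ i → i ≤ M.nd →
    M.θlo i ≤ lo 1 i ∧ hi 1 i ≤ M.θhi i ∧
    (∀ t, 1 ≤ t → t ≤ M.T → lo t i ≤ hi t i ∧ hi t i - lo t i ≤ M.Δ t i) ∧
    (∀ t, 2 ≤ t → t ≤ M.T → lo (t - 1) i ≤ lo t i ∧ hi t i ≤ hi (t - 1) i) ∧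
    lo M.T i ≤ θ i ∧ θ i ≤ hi M.T i

/-- An allocation policy: its action lies in `[0, V_t]` whenever the input intervals have
lengths at most `Δ_{t,i}`. -/
def IsPolicy (π : ℕ → (ℕ → ℝ) → (ℕ → ℝ) → ℝ → ℝ) : Prop :=
  ∀ t a b x, 1 ≤ t → t ≤ M.T →
    (∀ i, 1 ≤ i → i ≤ M.nd → a i ≤ b i ∧ b i - a i ≤ M.Δ t i) →
    0 ≤ π t a b x ∧ π t a b x ≤ M.Vcap t

/-- The cumulative investments into sector A produced by a decision rule `π`:
`x_1 = 0` and `x_{t+1} = x_t + π_t(([lo_{t,i}, hi_{t,i}])_i, x_t)`. -/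
noncomputable def inv (π : ℕ → (ℕ → ℝ) → (ℕ → ℝ) → ℝ → ℝ) (lo hi : ℕ → ℕ → ℝ) : ℕ → ℝ
  | 0 => 0
  | t + 1 => if t = 0 then 0 else inv π lo hi t + π t (lo t) (hi t) (inv π lo hi t)

/-- The hindsight optimum `opt(θ) = max_{x ∈ [0,V]} u(x, V − x; θ)`. -/
noncomputable def opt (θ : ℕ → ℝ) : ℝ :=
  sSup ((fun x => M.u x (M.Vtot - x) θ) '' Set.Icc (0 : ℝ) M.Vtot)

/-- The policy `π` guarantees competitive ratio `Φ`: on every admissible scenario the final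
allocation achieves utility at least `Φ · opt(θ)`. -/
def Guarantees (π : ℕ → (ℕ → ℝ) → (ℕ → ℝ) → ℝ → ℝ) (Φ : ℝ) : Prop :=
  ∀ lo hi θ, M.Scenario lo hi θ →
    Φ * M.opt θ ≤ M.u (inv π lo hi (M.T + 1)) (M.Vtot - inv π lo hi (M.T + 1)) θ

/-- `L_{T+1}(θ)`: the smallest `x ∈ [0, V]` with `u(x, V−x; θ) ≥ Φ·opt(θ)`. -/
noncomputable def Lfin (Φ : ℝ) (θ : ℕ → ℝ) : ℝ :=
  sInf {x | x ∈ Set.Icc (0 : ℝ) M.Vtot ∧ Φ * M.opt θ ≤ M.u x (M.Vtot - x) θ}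

/-- `R_{T+1}(θ)`: the largest `x ∈ [0, V]` with `u(x, V−x; θ) ≥ Φ·opt(θ)`. -/
noncomputable def Rfin (Φ : ℝ) (θ : ℕ → ℝ) : ℝ :=
  sSup {x | x ∈ Set.Icc (0 : ℝ) M.Vtot ∧ Φ * M.opt θ ≤ M.u x (M.Vtot - x) θ}

end RRAwP

namespace RRAwP

/-- The quantity `f_τ` from the Leontief analysis:
`max` over `θ₁ ∈ [θ̲_{0,1}, θ̄_{0,1} − Δ_{τ,1}]` and `θ₂ ∈ [θ̲_{0,2} + Δ_{τ,2}, θ̄_{0,2}]` of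
`(V/(V + Σ_{t=τ+1}^{T} V_t)) · (θ₂/(θ₁+θ₂) + (θ₁+Δ_{τ,1})/(θ₁+θ₂+Δ_{τ,1}−Δ_{τ,2}))`. -/
noncomputable def leontiefF (M : RRAwP) (τ : ℕ) : ℝ :=
  sSup ((fun q : ℝ × ℝ =>
      (M.Vtot / (M.Vtot + ∑ t ∈ Finset.Icc (τ + 1) M.T, M.Vcap t)) *
        (q.2 / (q.1 + q.2) + (q.1 + M.Δ τ 1) / (q.1 + q.2 + M.Δ τ 1 - M.Δ τ 2))) ''
    (Set.Icc (M.θlo 1) (M.θhi 1 - M.Δ τ 1) ×ˢ Set.Icc (M.θlo 2 + M.Δ τ 2) (M.θhi 2)))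

/-- `Φ* = min_{1 ≤ τ ≤ T} (f_τ)⁻¹`. -/
noncomputable def leontiefPhiStar (M : RRAwP) : ℝ :=
  sInf ((fun τ => (M.leontiefF τ)⁻¹) '' Set.Icc 1 M.T)

end RRAwP

namespace RRAwP

variable {M : RRAwP}

private lemma ratio_mono {a b c d : ℝ} (ha : 0 < a) (hd : 0 < d) (hac : a ≤ c) (hdb : d ≤ b) :
    a / (a + b) ≤ c / (c + d) := by
  rw [div_le_div_iff₀ (by linarith) (by linarith)]
  nlinarith

lemma delta_mono (hM : M.IsValid) {i s t : ℕ} (hi1 : 1 ≤ i) (hi2 : i ≤ M.nd)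
    (hs : 1 ≤ s) (hst : s ≤ t) (ht : t ≤ M.T) : M.Δ t i ≤ M.Δ s i := by
  induction t, hst using Nat.le_induction with
  | base => exact le_rfl
  | succ t hst ih =>
      exact le_trans (hM.2.2.2.1 t i (by omega) ht hi1 hi2) (ih (by omega))

lemma delta_facts (hM : M.IsValid) (hd : M.nd = 2) {τ : ℕ} (h1τ : 1 ≤ τ) (hτ : τ ≤ M.T) :
    0 ≤ M.Δ τ 1 ∧ 0 ≤ M.Δ τ 2 ∧ M.Δ τ 1 ≤ M.θhi 1 - M.θlo 1 ∧ M.Δ τ 2 ≤ M.θhi 2 - M.θlo 2 := by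
  have hn1 : (1:ℕ) ≤ M.nd := by omega
  have hn2 : (2:ℕ) ≤ M.nd := by omega
  exact ⟨hM.2.2.2.2.1 τ 1 h1τ hτ le_rfl hn1, hM.2.2.2.2.1 τ 2 h1τ hτ one_le_two hn2,
    le_trans (delta_mono hM le_rfl hn1 le_rfl h1τ hτ) (hM.2.2.2.2.2.1 1 le_rfl hn1),
    le_trans (delta_mono hM one_le_two hn2 le_rfl h1τ hτ) (hM.2.2.2.2.2.1 2 one_le_two hn2)⟩

lemma S_nonneg (hM : M.IsValid) (τ : ℕ) : 0 ≤ ∑ t ∈ Finset.Icc (τ + 1) M.T, M.Vcap t := by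
  refine Finset.sum_nonneg fun t ht => ?_
  rw [Finset.mem_Icc] at ht
  exact hM.2.2.2.2.2.2.1 t (by omega) ht.2

lemma opt_leontief (hu : M.u = fun x y θ => min (x / θ 1) (y / θ 2)) (hV : 0 < M.Vtot)
    {θ : ℕ → ℝ} (h1 : 0 < θ 1) (h2 : 0 < θ 2) :
    M.opt θ = M.Vtot / (θ 1 + θ 2) := by
  have hs : 0 < θ 1 + θ 2 := by linarith
  have hub : ∀ y ∈ (fun x => M.u x (M.Vtot - x) θ) '' Set.Icc (0:ℝ) M.Vtot,
      y ≤ M.Vtot / (θ 1 + θ 2) := by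
    rintro y ⟨x, _, rfl⟩
    simp only [hu]
    rcases le_total (x / θ 1) ((M.Vtot - x) / θ 2) with h | h
    · rw [min_eq_left h]
      rw [div_le_div_iff₀ h1 h2] at h
      rw [div_le_div_iff₀ h1 hs]
      nlinarith
    · rw [min_eq_right h]
      rw [div_le_div_iff₀ h2 h1] at h
      rw [div_le_div_iff₀ h2 hs]
      nlinarith
  refine le_antisymm (Real.sSup_le hub (by positivity)) ?_
  apply le_csSup ⟨_, hub⟩
  refine ⟨M.Vtot * θ 1 / (θ 1 + θ 2), ⟨by positivity, ?_⟩, ?_⟩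
  · rw [div_le_iff₀ hs]; nlinarith
  · simp only [hu]
    have e1 : M.Vtot * θ 1 / (θ 1 + θ 2) / θ 1 = M.Vtot / (θ 1 + θ 2) := by
      field_simp
    have e2 : (M.Vtot - M.Vtot * θ 1 / (θ 1 + θ 2)) / θ 2 = M.Vtot / (θ 1 + θ 2) := by
      field_simp; ring
    rw [e1, e2, min_self]

end RRAwP
namespace RRAwP

variable {M : RRAwP}

lemma leontiefF_facts (hM : M.IsValid) (hd : M.nd = 2) (h1 : 0 < M.θlo 1) (h2 : 0 < M.θlo 2)
    (hV : 0 < M.Vtot) {τ : ℕ} (h1τ : 1 ≤ τ) (hτ : τ ≤ M.T) :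
    (∀ p w : ℝ, M.θlo 1 ≤ p → p ≤ M.θhi 1 - M.Δ τ 1 → M.θlo 2 + M.Δ τ 2 ≤ w → w ≤ M.θhi 2 →
      M.Vtot / (M.Vtot + ∑ t ∈ Finset.Icc (τ + 1) M.T, M.Vcap t) *
        (w / (p + w) + (p + M.Δ τ 1) / (p + w + M.Δ τ 1 - M.Δ τ 2)) ≤ M.leontiefF τ) ∧
    0 < M.leontiefF τ ∧
    ∀ C : ℝ, 0 ≤ C →
      (∀ p w : ℝ, M.θlo 1 ≤ p → p ≤ M.θhi 1 - M.Δ τ 1 → M.θlo 2 + M.Δ τ 2 ≤ w → w ≤ M.θhi 2 →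
        M.Vtot / (M.Vtot + ∑ t ∈ Finset.Icc (τ + 1) M.T, M.Vcap t) *
          (w / (p + w) + (p + M.Δ τ 1) / (p + w + M.Δ τ 1 - M.Δ τ 2)) ≤ C) →
      M.leontiefF τ ≤ C := by
  obtain ⟨hd1, hd2, hww1, hww2⟩ := delta_facts hM hd h1τ hτ
  have hS := S_nonneg hM τ
  have hVS : 0 < M.Vtot + ∑ t ∈ Finset.Icc (τ + 1) M.T, M.Vcap t := by linarith
  have hub : ∀ y ∈ ((fun q : ℝ × ℝ =>
      (M.Vtot / (M.Vtot + ∑ t ∈ Finset.Icc (τ + 1) M.T, M.Vcap t)) *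
        (q.2 / (q.1 + q.2) + (q.1 + M.Δ τ 1) / (q.1 + q.2 + M.Δ τ 1 - M.Δ τ 2))) ''
      (Set.Icc (M.θlo 1) (M.θhi 1 - M.Δ τ 1) ×ˢ Set.Icc (M.θlo 2 + M.Δ τ 2) (M.θhi 2))),
      y ≤ 2 := by
    rintro y ⟨⟨p, w⟩, hm, rfl⟩
    obtain ⟨⟨hp1, hp2⟩, ⟨hw1, hw2⟩⟩ := Set.mem_prod.1 hm
    dsimp only at hp1 hp2 hw1 hw2 ⊢
    have hp0 : 0 < p := lt_of_lt_of_le h1 hp1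
    have hw0 : 0 < w - M.Δ τ 2 := by linarith
    have hc : M.Vtot / (M.Vtot + ∑ t ∈ Finset.Icc (τ + 1) M.T, M.Vcap t) ≤ 1 :=
      (div_le_one hVS).2 (by linarith)
    have hc0 : 0 ≤ M.Vtot / (M.Vtot + ∑ t ∈ Finset.Icc (τ + 1) M.T, M.Vcap t) :=
      div_nonneg hV.le hVS.le
    have ht1 : w / (p + w) ≤ 1 := (div_le_one (by linarith)).2 (by linarith)
    have ht2 : (p + M.Δ τ 1) / (p + w + M.Δ τ 1 - M.Δ τ 2) ≤ 1 :=
      (div_le_one (by linarith)).2 (by linarith)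
    have ht10 : 0 ≤ w / (p + w) := div_nonneg (by linarith) (by linarith)
    have ht20 : 0 ≤ (p + M.Δ τ 1) / (p + w + M.Δ τ 1 - M.Δ τ 2) :=
      div_nonneg (by linarith) (by linarith)
    have := mul_le_mul hc (show w / (p + w) + (p + M.Δ τ 1) / (p + w + M.Δ τ 1 - M.Δ τ 2) ≤ 1 + 1 by linarith) (by linarith) zero_le_one
    linarith
  have hmemle : ∀ p w : ℝ, M.θlo 1 ≤ p → p ≤ M.θhi 1 - M.Δ τ 1 → M.θlo 2 + M.Δ τ 2 ≤ w →
      w ≤ M.θhi 2 →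
      M.Vtot / (M.Vtot + ∑ t ∈ Finset.Icc (τ + 1) M.T, M.Vcap t) *
        (w / (p + w) + (p + M.Δ τ 1) / (p + w + M.Δ τ 1 - M.Δ τ 2)) ≤ M.leontiefF τ := by
    intro p w hp1 hp2 hw1 hw2
    exact le_csSup ⟨2, hub⟩ ⟨(p, w), Set.mk_mem_prod (Set.mem_Icc.2 ⟨hp1, hp2⟩)
      (Set.mem_Icc.2 ⟨hw1, hw2⟩), rfl⟩
  have hθhi2 : M.θlo 2 ≤ M.θhi 2 := (hM.2.2.1 2 one_le_two (by omega)).2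
  refine ⟨hmemle, ?_, fun C hC hbd => Real.sSup_le ?_ hC⟩
  · have := hmemle (M.θlo 1) (M.θhi 2) le_rfl (by linarith) (by linarith) le_rfl
    refine lt_of_lt_of_le ?_ this
    have e1 : 0 < M.θhi 2 / (M.θlo 1 + M.θhi 2) := div_pos (by linarith) (by linarith)
    have e2 : 0 < (M.θlo 1 + M.Δ τ 1) / (M.θlo 1 + M.θhi 2 + M.Δ τ 1 - M.Δ τ 2) :=
      div_pos (by linarith) (by linarith)
    exact mul_pos (div_pos hV hVS) (by linarith)
  · rintro y ⟨⟨p, w⟩, hm, rfl⟩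
    obtain ⟨⟨hp1, hp2⟩, ⟨hw1, hw2⟩⟩ := Set.mem_prod.1 hm
    dsimp only at hp1 hp2 hw1 hw2 ⊢
    exact hbd p w hp1 hp2 hw1 hw2

lemma phiStar_le (hM : M.IsValid) {τ : ℕ} (h1τ : 1 ≤ τ) (hτ : τ ≤ M.T) :
    M.leontiefPhiStar ≤ (M.leontiefF τ)⁻¹ := by
  apply csInf_le ((Set.finite_Icc 1 M.T).image _).bddBelow
  exact ⟨τ, Set.mem_Icc.2 ⟨h1τ, hτ⟩, rfl⟩

lemma le_phiStar (hM : M.IsValid) {Φ : ℝ} (h : ∀ τ, 1 ≤ τ → τ ≤ M.T → Φ ≤ (M.leontiefF τ)⁻¹) :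
    Φ ≤ M.leontiefPhiStar := by
  refine le_csInf ⟨(M.leontiefF 1)⁻¹, ⟨1, Set.mem_Icc.2 ⟨le_rfl, hM.1⟩, rfl⟩⟩ ?_
  rintro b ⟨τ, hτ, rfl⟩
  rw [Set.mem_Icc] at hτ
  exact h τ hτ.1 hτ.2

lemma phiStar_pos (hM : M.IsValid) (hd : M.nd = 2) (h1 : 0 < M.θlo 1) (h2 : 0 < M.θlo 2)
    (hV : 0 < M.Vtot) : 0 < M.leontiefPhiStar := by
  have hne : ((fun τ => (M.leontiefF τ)⁻¹) '' Set.Icc 1 M.T).Nonempty :=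
    ⟨_, 1, Set.mem_Icc.2 ⟨le_rfl, hM.1⟩, rfl⟩
  obtain ⟨τ, hτ, hEq⟩ := hne.csInf_mem ((Set.finite_Icc 1 M.T).image _)
  rw [Set.mem_Icc] at hτ
  rw [leontiefPhiStar, ← hEq]
  exact inv_pos.2 (leontiefF_facts hM hd h1 h2 hV hτ.1 hτ.2).2.1

end RRAwP
namespace RRAwP

variable {M : RRAwP}

lemma inv_one (π : ℕ → (ℕ → ℝ) → (ℕ → ℝ) → ℝ → ℝ) (lo hi : ℕ → ℕ → ℝ) :
    inv π lo hi 1 = 0 := by simp [inv]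

lemma inv_succ (π : ℕ → (ℕ → ℝ) → (ℕ → ℝ) → ℝ → ℝ) (lo hi : ℕ → ℕ → ℝ) {t : ℕ} (ht : 1 ≤ t) :
    inv π lo hi (t + 1) = inv π lo hi t + π t (lo t) (hi t) (inv π lo hi t) := by
  rw [inv, if_neg (by omega)]

lemma inv_congr (π : ℕ → (ℕ → ℝ) → (ℕ → ℝ) → ℝ → ℝ) {lo hi lo' hi' : ℕ → ℕ → ℝ}
    (m : ℕ) (h : ∀ t, 1 ≤ t → t < m → lo t = lo' t ∧ hi t = hi' t) :
    inv π lo hi m = inv π lo' hi' m := by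
  induction m with
  | zero => rfl
  | succ t ih =>
      rcases Nat.eq_zero_or_pos t with rfl | ht
      · simp [inv]
      · rw [inv_succ _ _ _ ht, inv_succ _ _ _ ht,
          ih (fun s h1 h2 => h s h1 (by omega)),
          (h t ht (by omega)).1, (h t ht (by omega)).2]

lemma scen_nested {lo hi : ℕ → ℕ → ℝ} {θ : ℕ → ℝ} (hsc : M.Scenario lo hi θ)
    {i s t : ℕ} (hi1 : 1 ≤ i) (hi2 : i ≤ M.nd) (hs : 1 ≤ s) (hst : s ≤ t) (ht : t ≤ M.T) :
    lo s i ≤ lo t i ∧ hi t i ≤ hi s i := by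
  induction t, hst using Nat.le_induction with
  | base => exact ⟨le_rfl, le_rfl⟩
  | succ t h ih =>
      have h4 := (hsc i hi1 hi2).2.2.2.1 (t + 1) (by omega) ht
      simp only [Nat.add_sub_cancel] at h4
      obtain ⟨a, b⟩ := ih (by omega)
      exact ⟨a.trans h4.1, h4.2.trans b⟩

lemma scen_bounds {lo hi : ℕ → ℕ → ℝ} {θ : ℕ → ℝ} (hsc : M.Scenario lo hi θ)
    {i t : ℕ} (hi1 : 1 ≤ i) (hi2 : i ≤ M.nd) (h1t : 1 ≤ t) (ht : t ≤ M.T) :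
    M.θlo i ≤ lo t i ∧ hi t i ≤ M.θhi i ∧ lo t i ≤ hi t i ∧ hi t i - lo t i ≤ M.Δ t i := by
  have hn := scen_nested hsc hi1 hi2 le_rfl h1t ht
  exact ⟨(hsc i hi1 hi2).1.trans hn.1, hn.2.trans (hsc i hi1 hi2).2.1,
    ((hsc i hi1 hi2).2.2.1 t h1t ht).1, ((hsc i hi1 hi2).2.2.1 t h1t ht).2⟩

lemma step_bounds {π : ℕ → (ℕ → ℝ) → (ℕ → ℝ) → ℝ → ℝ} {lo hi : ℕ → ℕ → ℝ} {θ : ℕ → ℝ}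
    (hpol : M.IsPolicy π) (hsc : M.Scenario lo hi θ) {t : ℕ} (h1t : 1 ≤ t) (ht : t ≤ M.T)
    (x : ℝ) : 0 ≤ π t (lo t) (hi t) x ∧ π t (lo t) (hi t) x ≤ M.Vcap t :=
  hpol t _ _ _ h1t ht (fun i hi1 hi2 => (hsc i hi1 hi2).2.2.1 t h1t ht)

lemma inv_mono {π : ℕ → (ℕ → ℝ) → (ℕ → ℝ) → ℝ → ℝ} {lo hi : ℕ → ℕ → ℝ} {θ : ℕ → ℝ}
    (hpol : M.IsPolicy π) (hsc : M.Scenario lo hi θ) {s t : ℕ}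
    (hs : 1 ≤ s) (hst : s ≤ t) (ht : t ≤ M.T + 1) :
    inv π lo hi s ≤ inv π lo hi t := by
  induction t, hst using Nat.le_induction with
  | base => exact le_rfl
  | succ t h ih =>
      have h1t : 1 ≤ t := by omega
      have htT : t ≤ M.T := by omega
      refine le_trans (ih (by omega)) ?_
      rw [inv_succ _ _ _ h1t]
      linarith [(step_bounds hpol hsc h1t htT (inv π lo hi t)).1]

lemma inv_le_sum {π : ℕ → (ℕ → ℝ) → (ℕ → ℝ) → ℝ → ℝ} {lo hi : ℕ → ℕ → ℝ} {θ : ℕ → ℝ}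
    (hpol : M.IsPolicy π) (hsc : M.Scenario lo hi θ) {τ : ℕ} (h1τ : 1 ≤ τ)
    {m : ℕ} (hm : τ ≤ m) (hmT : m ≤ M.T) :
    inv π lo hi (m + 1) ≤ inv π lo hi (τ + 1) + ∑ t ∈ Finset.Icc (τ + 1) m, M.Vcap t := by
  induction m, hm using Nat.le_induction with
  | base => simp [Finset.Icc_eq_empty (by omega : ¬ τ + 1 ≤ τ)]
  | succ m h ih =>
      have hins : Finset.Icc (τ + 1) (m + 1) = insert (m + 1) (Finset.Icc (τ + 1) m) := by
        ext x; simp only [Finset.mem_Icc, Finset.mem_insert]; omega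
      rw [hins, Finset.sum_insert (by simp [Finset.mem_Icc])]
      have hstep := (step_bounds hpol hsc (t := m + 1) (by omega) hmT
        (inv π lo hi (m + 1))).2
      rw [inv_succ _ _ _ (by omega)]
      have := ih (by omega)
      linarith

end RRAwP
namespace RRAwP

variable {M : RRAwP}

lemma forward_pointwise (hM : M.IsValid) (hd : M.nd = 2)
    (hu : M.u = fun x y θ => min (x / θ 1) (y / θ 2))
    (h1 : 0 < M.θlo 1) (h2 : 0 < M.θlo 2) (hV : 0 < M.Vtot)
    {π : ℕ → (ℕ → ℝ) → (ℕ → ℝ) → ℝ → ℝ} (hpol : M.IsPolicy π) {Φ : ℝ} (hΦpos : 0 < Φ)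
    (hgu : M.Guarantees π Φ) {τ : ℕ} (h1τ : 1 ≤ τ) (hτ : τ ≤ M.T)
    {p w : ℝ} (hp1 : M.θlo 1 ≤ p) (hp2 : p ≤ M.θhi 1 - M.Δ τ 1)
    (hw1 : M.θlo 2 + M.Δ τ 2 ≤ w) (hw2 : w ≤ M.θhi 2) :
    Φ * (M.Vtot / (M.Vtot + ∑ t ∈ Finset.Icc (τ + 1) M.T, M.Vcap t) *
      (w / (p + w) + (p + M.Δ τ 1) / (p + w + M.Δ τ 1 - M.Δ τ 2))) ≤ 1 := by
  obtain ⟨hd1, hd2, hww1, hww2⟩ := delta_facts hM hd h1τ hτ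
  have hS := S_nonneg hM τ
  have hVS : 0 < M.Vtot + ∑ t ∈ Finset.Icc (τ + 1) M.T, M.Vcap t := by linarith
  have hp0 : 0 < p := lt_of_lt_of_le h1 hp1
  have hw0 : 0 < w - M.Δ τ 2 := by linarith
  classical
  set loA : ℕ → ℕ → ℝ :=
    fun t i => if i = 1 then (if t ≤ τ then p else p + M.Δ τ 1) else w - M.Δ τ 2 with hloA
  set hiA : ℕ → ℕ → ℝ :=
    fun t i => if i = 1 then p + M.Δ τ 1 else (if t ≤ τ then w else w - M.Δ τ 2) with hhiA
  set θA : ℕ → ℝ := fun i => if i = 1 then p + M.Δ τ 1 else w - M.Δ τ 2 with hθA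
  set loB : ℕ → ℕ → ℝ :=
    fun t i => if i = 1 then p else (if t ≤ τ then w - M.Δ τ 2 else w) with hloB
  set hiB : ℕ → ℕ → ℝ :=
    fun t i => if i = 1 then (if t ≤ τ then p + M.Δ τ 1 else p) else w with hhiB
  set θB : ℕ → ℝ := fun i => if i = 1 then p else w with hθB
  have hΔmono : ∀ i t, 1 ≤ i → i ≤ M.nd → 1 ≤ t → t ≤ τ → M.Δ τ i ≤ M.Δ t i :=
    fun i t a b c d => delta_mono hM a b c d hτ
  have hΔ0 : ∀ i t, 1 ≤ i → i ≤ M.nd → 1 ≤ t → t ≤ M.T → 0 ≤ M.Δ t i :=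
    fun i t a b c d => hM.2.2.2.2.1 t i c d a b
  have hscGen : ∀ lo' hi' θ', (lo' = loA ∧ hi' = hiA ∧ θ' = θA) ∨ (lo' = loB ∧ hi' = hiB ∧ θ' = θB) → M.Scenario lo' hi' θ' := by
    rintro lo' hi' θ' (⟨rfl, rfl, rfl⟩ | ⟨rfl, rfl, rfl⟩) <;>
    · intro i hi1 hi2
      have hi12 : i = 1 ∨ i = 2 := by omega
      have hΔm1 := fun t c d => hΔmono i t hi1 hi2 c d
      have hΔ01 := fun t c d => hΔ0 i t hi1 hi2 c d
      rcases hi12 with rfl | rfl <;>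
        refine ⟨?_, ?_, fun t h1t htT => ⟨?_, ?_⟩, fun t h2t htT => ⟨?_, ?_⟩, ?_, ?_⟩ <;>
        simp only [hloA, hhiA, hθA, hloB, hhiB, hθB] <;> norm_num <;>
        (try split_ifs) <;>
        first
        | linarith [hΔm1 t ‹1 ≤ t› ‹t ≤ τ›]
        | linarith [hΔ01 t ‹1 ≤ t› ‹t ≤ M.T›]
        | linarith
        | (exfalso; omega)
  have hscA : M.Scenario loA hiA θA := hscGen _ _ _ (Or.inl ⟨rfl, rfl, rfl⟩)
  have hscB : M.Scenario loB hiB θB := hscGen _ _ _ (Or.inr ⟨rfl, rfl, rfl⟩)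
  -- the two runs coincide up to time τ+1
  have hagree : ∀ t, 1 ≤ t → t < τ + 1 → loA t = loB t ∧ hiA t = hiB t := by
    intro t h1t htτ
    have ht : t ≤ τ := by omega
    constructor <;> funext i <;> simp [hloA, hloB, hhiA, hhiB, ht]
  have hxeq : inv π loA hiA (τ + 1) = inv π loB hiB (τ + 1) := inv_congr π (τ + 1) hagree
  have hguA := hgu loA hiA θA hscA
  have hguB := hgu loB hiB θB hscB
  have hθA1 : θA 1 = p + M.Δ τ 1 := by norm_num [hθA]
  have hθA2 : θA 2 = w - M.Δ τ 2 := by norm_num [hθA]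
  have hθB1 : θB 1 = p := by norm_num [hθB]
  have hθB2 : θB 2 = w := by norm_num [hθB]
  rw [opt_leontief hu hV (by rw [hθA1]; linarith) (by rw [hθA2]; linarith)] at hguA
  rw [opt_leontief hu hV (by rw [hθB1]; linarith) (by rw [hθB2]; linarith)] at hguB
  simp only [hu] at hguA hguB
  rw [hθA1, hθA2] at hguA
  rw [hθB1, hθB2] at hguB
  -- extract the two key inequalities
  have hA : Φ * (M.Vtot / ((p + M.Δ τ 1) + (w - M.Δ τ 2))) * (p + M.Δ τ 1) ≤
      inv π loA hiA (M.T + 1) := by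
    have h := hguA.trans (min_le_left _ _)
    rw [le_div_iff₀ (by linarith)] at h
    linarith
  have hB : Φ * (M.Vtot / (p + w)) * w ≤ M.Vtot - inv π loB hiB (M.T + 1) := by
    have h := hguB.trans (min_le_right _ _)
    rw [le_div_iff₀ (by linarith)] at h
    linarith
  have hxAle : inv π loA hiA (M.T + 1) ≤
      inv π loA hiA (τ + 1) + ∑ t ∈ Finset.Icc (τ + 1) M.T, M.Vcap t :=
    inv_le_sum hpol hscA h1τ hτ le_rfl
  have hxBge : inv π loB hiB (τ + 1) ≤ inv π loB hiB (M.T + 1) :=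
    inv_mono hpol hscB (by omega) (by omega) le_rfl
  have hchain : Φ * (M.Vtot / ((p + M.Δ τ 1) + (w - M.Δ τ 2))) * (p + M.Δ τ 1) +
      Φ * (M.Vtot / (p + w)) * w ≤
      M.Vtot + ∑ t ∈ Finset.Icc (τ + 1) M.T, M.Vcap t := by linarith
  have e : Φ * (M.Vtot / (M.Vtot + ∑ t ∈ Finset.Icc (τ + 1) M.T, M.Vcap t) *
      (w / (p + w) + (p + M.Δ τ 1) / (p + w + M.Δ τ 1 - M.Δ τ 2))) =
      (Φ * (M.Vtot / ((p + M.Δ τ 1) + (w - M.Δ τ 2))) * (p + M.Δ τ 1) +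
        Φ * (M.Vtot / (p + w)) * w) / (M.Vtot + ∑ t ∈ Finset.Icc (τ + 1) M.T, M.Vcap t) := by
    ring
  rw [e, div_le_one hVS]
  exact hchain

end RRAwP
namespace RRAwP

/-- The target point used by the corridor policy. -/
noncomputable def Qfun (M : RRAwP) (Φ : ℝ) (a b : ℕ → ℝ) : ℝ :=
  min (Φ * M.Vtot * b 1 / (b 1 + a 2)) (M.Vtot - Φ * M.Vtot * b 2 / (a 1 + b 2))

/-- The corridor policy: move the cumulative allocation toward the target, within supply. -/
noncomputable def corridorPolicy (M : RRAwP) (Φ : ℝ) : ℕ → (ℕ → ℝ) → (ℕ → ℝ) → ℝ → ℝ :=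
  fun t a b x => min (max x (M.Qfun Φ a b) - x) (M.Vcap t)

variable {M : RRAwP}

lemma corridorPolicy_isPolicy (hM : M.IsValid) (Φ : ℝ) : M.IsPolicy (M.corridorPolicy Φ) := by
  intro t a b x h1t ht _
  refine ⟨le_min ?_ (hM.2.2.2.2.2.2.1 t h1t ht), min_le_right _ _⟩
  exact sub_nonneg.2 (le_max_left _ _)

lemma corridor_step (Φ : ℝ) (lo hi : ℕ → ℕ → ℝ) {t : ℕ} (h1t : 1 ≤ t) :
    inv (M.corridorPolicy Φ) lo hi (t + 1) =
      min (max (inv (M.corridorPolicy Φ) lo hi t) (M.Qfun Φ (lo t) (hi t)))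
        (inv (M.corridorPolicy Φ) lo hi t + M.Vcap t) := by
  rw [inv_succ _ _ _ h1t]
  simp only [corridorPolicy]
  rcases le_total (max (inv (M.corridorPolicy Φ) lo hi t) (M.Qfun Φ (lo t) (hi t)) -
      inv (M.corridorPolicy Φ) lo hi t) (M.Vcap t) with h | h
  · rw [min_eq_left h, min_eq_left (by linarith)]
    ring
  · rw [min_eq_right h, min_eq_right (by linarith)]

/-- the key corridor inequality, derived from `Φ ≤ (f_τ)⁻¹`. -/
lemma corridor_key (hM : M.IsValid) (hd : M.nd = 2) (h1 : 0 < M.θlo 1) (h2 : 0 < M.θlo 2)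
    (hV : 0 < M.Vtot) {Φ : ℝ} (hΦpos : 0 < Φ) {τ : ℕ} (h1τ : 1 ≤ τ) (hτ : τ ≤ M.T)
    (hΦF : Φ * M.leontiefF τ ≤ 1) {a₁ b₁ a₂ b₂ : ℝ}
    (ha1 : M.θlo 1 ≤ a₁) (hb1 : b₁ ≤ M.θhi 1) (hab1 : a₁ ≤ b₁) (h1w : b₁ - a₁ ≤ M.Δ τ 1)
    (ha2 : M.θlo 2 ≤ a₂) (hb2 : b₂ ≤ M.θhi 2) (hab2 : a₂ ≤ b₂) (h2w : b₂ - a₂ ≤ M.Δ τ 2) :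
    Φ * M.Vtot * b₁ / (b₁ + a₂) ≤
      M.Vtot - Φ * M.Vtot * b₂ / (a₁ + b₂) + ∑ t ∈ Finset.Icc (τ + 1) M.T, M.Vcap t := by
  obtain ⟨hd1, hd2, hww1, hww2⟩ := delta_facts hM hd h1τ hτ
  have hS := S_nonneg hM τ
  have hVS : 0 < M.Vtot + ∑ t ∈ Finset.Icc (τ + 1) M.T, M.Vcap t := by linarith
  obtain ⟨p, v, hpl, hpu, hvl, hvu, hb1p, hva2, hpa1, hb2v⟩ :
      ∃ p v : ℝ, M.θlo 1 ≤ p ∧ p ≤ M.θhi 1 - M.Δ τ 1 ∧ M.θlo 2 + M.Δ τ 2 ≤ v ∧ v ≤ M.θhi 2 ∧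
        b₁ ≤ p + M.Δ τ 1 ∧ v - M.Δ τ 2 ≤ a₂ ∧ p ≤ a₁ ∧ b₂ ≤ v := by
    refine ⟨min a₁ (M.θhi 1 - M.Δ τ 1), max b₂ (M.θlo 2 + M.Δ τ 2),
      le_min ha1 (by linarith), min_le_right _ _, le_max_right _ _,
      max_le hb2 (by linarith), ?_, ?_, min_le_left _ _, le_max_left _ _⟩
    · have := le_min (show b₁ - M.Δ τ 1 ≤ a₁ by linarith)
        (show b₁ - M.Δ τ 1 ≤ M.θhi 1 - M.Δ τ 1 by linarith)
      linarith
    · have := max_le (show b₂ ≤ a₂ + M.Δ τ 2 by linarith)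
        (show M.θlo 2 + M.Δ τ 2 ≤ a₂ + M.Δ τ 2 by linarith)
      linarith
  have hp0 : 0 < p := lt_of_lt_of_le h1 hpl
  have hv0 : 0 < v - M.Δ τ 2 := by linarith
  have hb10 : 0 < b₁ := by linarith
  have hb20 : 0 < b₂ := by linarith
  have ha20 : 0 < a₂ := by linarith
  have hF1 := (leontiefF_facts hM hd h1 h2 hV h1τ hτ).1 p v hpl hpu hvl hvu
  have hden : p + v + M.Δ τ 1 - M.Δ τ 2 = (p + M.Δ τ 1) + (v - M.Δ τ 2) := by ring
  rw [hden] at hF1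
  have r1 : b₂ / (a₁ + b₂) ≤ v / (p + v) := by
    have := ratio_mono (a := b₂) (b := a₁) (c := v) (d := p) hb20 hp0 hb2v hpa1
    calc b₂ / (a₁ + b₂) = b₂ / (b₂ + a₁) := by rw [add_comm]
    _ ≤ v / (v + p) := this
    _ = v / (p + v) := by rw [add_comm]
  have r2 : b₁ / (b₁ + a₂) ≤ (p + M.Δ τ 1) / ((p + M.Δ τ 1) + (v - M.Δ τ 2)) :=
    ratio_mono hb10 hv0 hb1p hva2
  have ht10 : 0 ≤ b₂ / (a₁ + b₂) := div_nonneg hb20.le (by linarith)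
  have ht20 : 0 ≤ b₁ / (b₁ + a₂) := div_nonneg hb10.le (by linarith)
  have hc0 : 0 ≤ M.Vtot / (M.Vtot + ∑ t ∈ Finset.Icc (τ + 1) M.T, M.Vcap t) :=
    div_nonneg hV.le hVS.le
  have hmain : Φ * (M.Vtot / (M.Vtot + ∑ t ∈ Finset.Icc (τ + 1) M.T, M.Vcap t) *
      (b₂ / (a₁ + b₂) + b₁ / (b₁ + a₂))) ≤ 1 := by
    have step1 : M.Vtot / (M.Vtot + ∑ t ∈ Finset.Icc (τ + 1) M.T, M.Vcap t) *
        (b₂ / (a₁ + b₂) + b₁ / (b₁ + a₂)) ≤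
        M.Vtot / (M.Vtot + ∑ t ∈ Finset.Icc (τ + 1) M.T, M.Vcap t) *
        (v / (p + v) + (p + M.Δ τ 1) / ((p + M.Δ τ 1) + (v - M.Δ τ 2))) :=
      mul_le_mul_of_nonneg_left (add_le_add r1 r2) hc0
    have step2 : Φ * (M.Vtot / (M.Vtot + ∑ t ∈ Finset.Icc (τ + 1) M.T, M.Vcap t) *
        (b₂ / (a₁ + b₂) + b₁ / (b₁ + a₂))) ≤ Φ * M.leontiefF τ :=
      mul_le_mul_of_nonneg_left (step1.trans hF1) hΦpos.le
    exact step2.trans hΦF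
  have e : Φ * (M.Vtot / (M.Vtot + ∑ t ∈ Finset.Icc (τ + 1) M.T, M.Vcap t) *
      (b₂ / (a₁ + b₂) + b₁ / (b₁ + a₂))) =
      (Φ * M.Vtot * b₂ / (a₁ + b₂) + Φ * M.Vtot * b₁ / (b₁ + a₂)) /
        (M.Vtot + ∑ t ∈ Finset.Icc (τ + 1) M.T, M.Vcap t) := by ring
  rw [e, div_le_one hVS] at hmain
  linarith

end RRAwP
namespace RRAwP

variable {M : RRAwP}

lemma inv_zero_policy (lo hi : ℕ → ℕ → ℝ) (n : ℕ) :
    inv (fun _ _ _ _ => (0:ℝ)) lo hi n = 0 := by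
  induction n with
  | zero => rfl
  | succ t ih =>
      rcases Nat.eq_zero_or_pos t with rfl | ht
      · simp [inv]
      · rw [inv_succ _ _ _ ht, ih]; simp

lemma corridor_guarantees (hM : M.IsValid) (hd : M.nd = 2)
    (hu : M.u = fun x y θ => min (x / θ 1) (y / θ 2))
    (h1 : 0 < M.θlo 1) (h2 : 0 < M.θlo 2) (hV : 0 < M.Vtot)
    {Φ : ℝ} (hΦpos : 0 < Φ) (hΦ1 : Φ ≤ 1)
    (hΦF : ∀ τ, 1 ≤ τ → τ ≤ M.T → Φ * M.leontiefF τ ≤ 1) :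
    M.Guarantees (M.corridorPolicy Φ) Φ := by
  intro lo hi θ hsc
  have hT : 1 ≤ M.T := hM.1
  have hn1 : (1:ℕ) ≤ M.nd := by omega
  have hn2 : (2:ℕ) ≤ M.nd := by omega
  have hθT1 := (hsc 1 le_rfl hn1).2.2.2.2
  have hθT2 := (hsc 2 one_le_two hn2).2.2.2.2
  have hbT1 := scen_bounds hsc le_rfl hn1 hT le_rfl
  have hbT2 := scen_bounds hsc one_le_two hn2 hT le_rfl
  have hθ1 : 0 < θ 1 := lt_of_lt_of_le h1 (hbT1.1.trans hθT1.1)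
  have hθ2 : 0 < θ 2 := lt_of_lt_of_le h2 (hbT2.1.trans hθT2.1)
  have hθs : 0 < θ 1 + θ 2 := by linarith
  have hΦV : 0 ≤ Φ * M.Vtot := by positivity
  -- the final-target bounds L(θ) and R(θ)
  have hLV : Φ * M.Vtot * θ 1 / (θ 1 + θ 2) ≤ M.Vtot := by
    rw [div_le_iff₀ hθs]
    nlinarith [mul_le_mul_of_nonneg_right hΦ1 (mul_nonneg hV.le hθ1.le),
      mul_nonneg hV.le hθ2.le, mul_nonneg hV.le hθ1.le]
  have hRV : Φ * M.Vtot * θ 2 / (θ 1 + θ 2) ≤ M.Vtot := by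
    rw [div_le_iff₀ hθs]
    nlinarith [mul_le_mul_of_nonneg_right hΦ1 (mul_nonneg hV.le hθ2.le),
      mul_nonneg hV.le hθ2.le, mul_nonneg hV.le hθ1.le]
  -- pointwise bounds on the targets
  have hQR : ∀ m, 1 ≤ m → m ≤ M.T → M.Qfun Φ (lo m) (hi m) ≤
      M.Vtot - Φ * M.Vtot * θ 2 / (θ 1 + θ 2) := by
    intro m h1m hmT
    have hbm1 := scen_bounds hsc le_rfl hn1 h1m hmT
    have hbm2 := scen_bounds hsc one_le_two hn2 h1m hmT
    have hnm1 := scen_nested hsc le_rfl hn1 h1m hmT le_rfl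
    have hnm2 := scen_nested hsc one_le_two hn2 h1m hmT le_rfl
    have hlom1 : 0 < lo m 1 := lt_of_lt_of_le h1 hbm1.1
    have key : Φ * M.Vtot * θ 2 / (θ 1 + θ 2) ≤
        Φ * M.Vtot * hi m 2 / (lo m 1 + hi m 2) := by
      have h := ratio_mono (a := θ 2) (b := θ 1) (c := hi m 2) (d := lo m 1) hθ2 hlom1
        (hθT2.2.trans hnm2.2) (hnm1.1.trans hθT1.1)
      have h' := mul_le_mul_of_nonneg_left h hΦV
      calc Φ * M.Vtot * θ 2 / (θ 1 + θ 2) = Φ * M.Vtot * (θ 2 / (θ 2 + θ 1)) := by ring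
      _ ≤ Φ * M.Vtot * (hi m 2 / (hi m 2 + lo m 1)) := h'
      _ = Φ * M.Vtot * hi m 2 / (lo m 1 + hi m 2) := by ring
    refine (min_le_right _ _).trans ?_
    linarith
  have hQL : ∀ m, 1 ≤ m → m ≤ M.T → Φ * M.Vtot * θ 1 / (θ 1 + θ 2) ≤
      M.Qfun Φ (lo m) (hi m) + ∑ t ∈ Finset.Icc (m + 1) M.T, M.Vcap t := by
    intro m h1m hmT
    have hbm1 := scen_bounds hsc le_rfl hn1 h1m hmT
    have hbm2 := scen_bounds hsc one_le_two hn2 h1m hmT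
    have hnm1 := scen_nested hsc le_rfl hn1 h1m hmT le_rfl
    have hnm2 := scen_nested hsc one_le_two hn2 h1m hmT le_rfl
    have hlom2 : 0 < lo m 2 := lt_of_lt_of_le h2 hbm2.1
    have hS := S_nonneg hM m
    have hL : Φ * M.Vtot * θ 1 / (θ 1 + θ 2) ≤
        Φ * M.Vtot * hi m 1 / (hi m 1 + lo m 2) := by
      have h := ratio_mono (a := θ 1) (b := θ 2) (c := hi m 1) (d := lo m 2) hθ1 hlom2
        (hθT1.2.trans hnm1.2) (hnm2.1.trans hθT2.1)
      have h' := mul_le_mul_of_nonneg_left h hΦV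
      calc Φ * M.Vtot * θ 1 / (θ 1 + θ 2) = Φ * M.Vtot * (θ 1 / (θ 1 + θ 2)) := by ring
      _ ≤ Φ * M.Vtot * (hi m 1 / (hi m 1 + lo m 2)) := h'
      _ = Φ * M.Vtot * hi m 1 / (hi m 1 + lo m 2) := by ring
    have hck := corridor_key hM hd h1 h2 hV hΦpos h1m hmT (hΦF m h1m hmT)
      hbm1.1 hbm1.2.1 hbm1.2.2.1 hbm1.2.2.2 hbm2.1 hbm2.2.1 hbm2.2.2.1 hbm2.2.2.2
    rcases le_total (Φ * M.Vtot * hi m 1 / (hi m 1 + lo m 2))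
        (M.Vtot - Φ * M.Vtot * hi m 2 / (lo m 1 + hi m 2)) with h | h
    · rw [Qfun, min_eq_left h]; linarith
    · rw [Qfun, min_eq_right h]; linarith
  -- upper bound by induction
  have hupper : ∀ t, 1 ≤ t → t ≤ M.T + 1 →
      inv (M.corridorPolicy Φ) lo hi t ≤ M.Vtot - Φ * M.Vtot * θ 2 / (θ 1 + θ 2) := by
    intro t h1t
    induction t, h1t using Nat.le_induction with
    | base => intro _; rw [inv_one]; linarith
    | succ t h1t ih =>
        intro ht1
        have htT : t ≤ M.T := by omega
        rw [corridor_step Φ lo hi h1t]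
        exact le_trans (min_le_left _ _) (max_le (ih (by omega)) (hQR t h1t htT))
  -- lower bound by downward induction
  have hlower : ∀ k, k ≤ M.T →
      min (inv (M.corridorPolicy Φ) lo hi (M.T + 1 - k) +
          ∑ t ∈ Finset.Icc (M.T + 1 - k) M.T, M.Vcap t)
        (Φ * M.Vtot * θ 1 / (θ 1 + θ 2)) ≤ inv (M.corridorPolicy Φ) lo hi (M.T + 1) := by
    intro k hk
    induction k with
    | zero =>
        rw [Nat.sub_zero, Finset.Icc_eq_empty (by omega : ¬ M.T + 1 ≤ M.T),
          Finset.sum_empty, add_zero]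
        exact min_le_left _ _
    | succ k ih =>
        have hk' : k ≤ M.T := by omega
        have hm : M.T + 1 - (k + 1) = M.T - k := by omega
        rw [hm]
        have h1m : 1 ≤ M.T - k := by omega
        have hmT : M.T - k ≤ M.T := by omega
        have hmsucc : M.T - k + 1 = M.T + 1 - k := by omega
        have hstep : min (M.Qfun Φ (lo (M.T - k)) (hi (M.T - k)))
            (inv (M.corridorPolicy Φ) lo hi (M.T - k) + M.Vcap (M.T - k)) ≤
            inv (M.corridorPolicy Φ) lo hi (M.T - k + 1) := by
          rw [corridor_step Φ lo hi h1m]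
          exact le_min ((min_le_left _ _).trans (le_max_right _ _)) (min_le_right _ _)
        have hsum : ∑ t ∈ Finset.Icc (M.T - k) M.T, M.Vcap t =
            M.Vcap (M.T - k) + ∑ t ∈ Finset.Icc (M.T - k + 1) M.T, M.Vcap t := by
          rw [show Finset.Icc (M.T - k) M.T = insert (M.T - k) (Finset.Icc (M.T - k + 1) M.T)
            from by ext z; simp only [Finset.mem_Icc, Finset.mem_insert]; omega,
            Finset.sum_insert (by simp only [Finset.mem_Icc]; omega)]
        have hQLm := hQL (M.T - k) h1m hmT
        have ihm := ih hk'
        rw [← hmsucc] at ihm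
        refine le_trans (le_min ?_ (min_le_right _ _)) ihm
        · rcases le_total (M.Qfun Φ (lo (M.T - k)) (hi (M.T - k)))
              (inv (M.corridorPolicy Φ) lo hi (M.T - k) + M.Vcap (M.T - k)) with hc | hc
          · rw [min_eq_left hc] at hstep
            have h5 := min_le_right (inv (M.corridorPolicy Φ) lo hi (M.T - k) +
              ∑ t ∈ Finset.Icc (M.T - k) M.T, M.Vcap t) (Φ * M.Vtot * θ 1 / (θ 1 + θ 2))
            linarith
          · rw [min_eq_right hc] at hstep
            have h5 := min_le_left (inv (M.corridorPolicy Φ) lo hi (M.T - k) +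
              ∑ t ∈ Finset.Icc (M.T - k) M.T, M.Vcap t) (Φ * M.Vtot * θ 1 / (θ 1 + θ 2))
            linarith
  have hfin1 : Φ * M.Vtot * θ 1 / (θ 1 + θ 2) ≤ inv (M.corridorPolicy Φ) lo hi (M.T + 1) := by
    have h := hlower M.T le_rfl
    rw [show M.T + 1 - M.T = 1 from by omega, inv_one, zero_add] at h
    refine le_trans ?_ h
    rw [show ∑ t ∈ Finset.Icc 1 M.T, M.Vcap t = M.Vtot from rfl]
    exact le_min hLV le_rfl
  have hfin2 := hupper (M.T + 1) (by omega) le_rfl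
  rw [opt_leontief hu hV hθ1 hθ2]
  simp only [hu]
  refine le_min ?_ ?_
  · rw [le_div_iff₀ hθ1]
    have e : Φ * (M.Vtot / (θ 1 + θ 2)) * θ 1 = Φ * M.Vtot * θ 1 / (θ 1 + θ 2) := by ring
    rw [e]; exact hfin1
  · rw [le_div_iff₀ hθ2]
    have e : Φ * (M.Vtot / (θ 1 + θ 2)) * θ 2 = Φ * M.Vtot * θ 2 / (θ 1 + θ 2) := by ring
    rw [e]; linarith

end RRAwP

/-- **Proposition (Optimal robust competitive ratio for the Leontief utility).**
For an RRAwP instance with `d = 2`, Leontief utility `u(x, y; θ) = min(x/θ₁, y/θ₂)`,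
`θ̲_{0,1}, θ̲_{0,2} > 0` and `V > 0`, and for every `Φ ≤ 1`, an allocation policy guaranteeing
ratio `Φ` exists if and only if `Φ ≤ Φ*`. -/
theorem rrawp_leontief_optimal_ratio (M : RRAwP) (hM : M.IsValid)
    (hd : M.nd = 2)
    (hu : M.u = fun x y θ => min (x / θ 1) (y / θ 2))
    (h1 : 0 < M.θlo 1) (h2 : 0 < M.θlo 2) (hV : 0 < M.Vtot)
    (Φ : ℝ) (hΦ : Φ ≤ 1) :
    (∃ π, M.IsPolicy π ∧ M.Guarantees π Φ) ↔ Φ ≤ M.leontiefPhiStar := by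
  constructor
  · rintro ⟨π, hpol, hgu⟩
    rcases le_or_gt Φ 0 with hneg | hpos
    · exact hneg.trans (RRAwP.phiStar_pos hM hd h1 h2 hV).le
    · refine RRAwP.le_phiStar hM fun τ h1τ hτ => ?_
      obtain ⟨hFub, hFpos, hFle⟩ := RRAwP.leontiefF_facts hM hd h1 h2 hV h1τ hτ
      have hF : M.leontiefF τ ≤ Φ⁻¹ := by
        refine hFle Φ⁻¹ (by positivity) fun p w hp1 hp2 hw1 hw2 => ?_
        have hpt := RRAwP.forward_pointwise hM hd hu h1 h2 hV hpol hpos hgu h1τ hτ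
          hp1 hp2 hw1 hw2
        have h3 : Φ * (M.Vtot / (M.Vtot + ∑ t ∈ Finset.Icc (τ + 1) M.T, M.Vcap t) *
            (w / (p + w) + (p + M.Δ τ 1) / (p + w + M.Δ τ 1 - M.Δ τ 2))) ≤ Φ * Φ⁻¹ := by
          rw [mul_inv_cancel₀ hpos.ne']; exact hpt
        exact le_of_mul_le_mul_left h3 hpos
      calc Φ = (Φ⁻¹)⁻¹ := (inv_inv Φ).symm
      _ ≤ (M.leontiefF τ)⁻¹ := by
          apply inv_anti₀ hFpos hF
  · intro hle
    rcases le_or_gt Φ 0 with hneg | hpos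
    · refine ⟨fun _ _ _ _ => 0, ?_, ?_⟩
      · intro t a b x h1t ht _
        exact ⟨le_rfl, hM.2.2.2.2.2.2.1 t h1t ht⟩
      · intro lo hi θ hsc
        have hT : 1 ≤ M.T := hM.1
        have hn1 : (1:ℕ) ≤ M.nd := by omega
        have hn2 : (2:ℕ) ≤ M.nd := by omega
        have hθ1 : 0 < θ 1 := lt_of_lt_of_le h1
          ((RRAwP.scen_bounds hsc le_rfl hn1 hT le_rfl).1.trans (hsc 1 le_rfl hn1).2.2.2.2.1)
        have hθ2 : 0 < θ 2 := lt_of_lt_of_le h2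
          ((RRAwP.scen_bounds hsc one_le_two hn2 hT le_rfl).1.trans
            (hsc 2 one_le_two hn2).2.2.2.2.1)
        rw [RRAwP.inv_zero_policy, RRAwP.opt_leontief hu hV hθ1 hθ2]
        simp only [hu]
        have h0 : Φ * (M.Vtot / (θ 1 + θ 2)) ≤ 0 :=
          mul_nonpos_iff.2 (Or.inr ⟨hneg, by positivity⟩)
        refine h0.trans (le_min ?_ ?_)
        · rw [zero_div]
        · rw [sub_zero]
          positivity
    · refine ⟨M.corridorPolicy Φ, RRAwP.corridorPolicy_isPolicy hM Φ,
        RRAwP.corridor_guarantees hM hd hu h1 h2 hV hpos hΦ ?_⟩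
      intro τ h1τ hτ
      have hFpos := (RRAwP.leontiefF_facts hM hd h1 h2 hV h1τ hτ).2.1
      have hΦτ : Φ ≤ (M.leontiefF τ)⁻¹ := hle.trans (RRAwP.phiStar_le hM h1τ hτ)
      calc Φ * M.leontiefF τ ≤ (M.leontiefF τ)⁻¹ * M.leontiefF τ :=
            mul_le_mul_of_nonneg_right hΦτ hFpos.le
      _ = 1 := inv_mul_cancel₀ hFpos.ne'
end

section
/- Lipschitz continuity of constrained sliding-window maxima: let g, f : ℝ → ℝ be Lipschitz with constants L_g ≥ 0 and L_f ≥ 0 respectively, and let Δ > 0 and h > 0 be real numbers. Define w : ℝ → ℝ by w(x) = max{ g(y) + f(z) : y, z ∈ [x, x+Δ] and |y − z| ≤ h }. Then w is Lipschitz with constant L_g + 4·L_f; in particular, w is continuous. -/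
/-!
Parametrise the window at `x` by the offsets `(y - x, z - x)`, which range over a compact set
`K` independent of `x`. Then `w x` is the supremum over `K` of `p ↦ g (x + p.1) + f (x + p.2)`,
and moving `x` to `x'` changes every member of this family by at most `(L_g + L_f) |x - x'|`,
hence changes the supremum by at most that much.
-/

open Set

theorem csSup_image_le_csSup_image_add {α : Type*} {K : Set α} (hK : K.Nonempty)
    {F G : α → ℝ} (hG : BddAbove (G '' K)) {c : ℝ} (h : ∀ p ∈ K, F p ≤ G p + c) :
    sSup (F '' K) ≤ sSup (G '' K) + c := by
  refine csSup_le (hK.image F) ?_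
  rintro _ ⟨p, hp, rfl⟩
  exact (h p hp).trans (add_le_add_left (le_csSup hG (mem_image_of_mem G hp)) c)

theorem abs_csSup_image_sub_csSup_image_le {α : Type*} {K : Set α} (hK : K.Nonempty)
    {F G : α → ℝ} (hF : BddAbove (F '' K)) (hG : BddAbove (G '' K)) {c : ℝ}
    (h : ∀ p ∈ K, |F p - G p| ≤ c) :
    |sSup (F '' K) - sSup (G '' K)| ≤ c := by
  have hFG : sSup (F '' K) ≤ sSup (G '' K) + c :=
    csSup_image_le_csSup_image_add hK hG fun p hp => by
      linarith [(abs_sub_le_iff.1 (h p hp)).1]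
  have hGF : sSup (G '' K) ≤ sSup (F '' K) + c :=
    csSup_image_le_csSup_image_add hK hF fun p hp => by
      linarith [(abs_sub_le_iff.1 (h p hp)).2]
  exact abs_sub_le_iff.2 ⟨by linarith, by linarith⟩

theorem lipschitzWith_of_abs_sub_le {f : ℝ → ℝ} {L : ℝ}
    (hf : ∀ x y, |f x - f y| ≤ L * |x - y|) : LipschitzWith (Real.toNNReal L) f :=
  LipschitzWith.of_dist_le' fun x y => by simpa only [Real.dist_eq] using hf x y

def windowOffsets (Δ h : ℝ) : Set (ℝ × ℝ) :=
  Icc 0 Δ ×ˢ Icc 0 Δ ∩ {p | |p.1 - p.2| ≤ h}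

theorem isCompact_windowOffsets (Δ h : ℝ) : IsCompact (windowOffsets Δ h) :=
  (isCompact_Icc.prod isCompact_Icc).inter_right (isClosed_le (by fun_prop) continuous_const)

theorem zero_mem_windowOffsets {Δ h : ℝ} (hΔ : 0 ≤ Δ) (hh : 0 ≤ h) :
    (0 : ℝ × ℝ) ∈ windowOffsets Δ h :=
  ⟨⟨⟨le_rfl, hΔ⟩, ⟨le_rfl, hΔ⟩⟩, by simpa using hh⟩

theorem window_values_eq_image (g f : ℝ → ℝ) (Δ h x : ℝ) :
    {v | ∃ y z, y ∈ Icc x (x + Δ) ∧ z ∈ Icc x (x + Δ) ∧ |y - z| ≤ h ∧ v = g y + f z} =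
      (fun p : ℝ × ℝ => g (x + p.1) + f (x + p.2)) '' windowOffsets Δ h := by
  ext v
  constructor
  · rintro ⟨y, z, ⟨hxy, hyΔ⟩, ⟨hxz, hzΔ⟩, hyz, rfl⟩
    refine ⟨(y - x, z - x), ⟨⟨⟨?_, ?_⟩, ?_, ?_⟩, ?_⟩, ?_⟩
    any_goals dsimp only; linarith
    · simpa only [mem_ofPred_eq, sub_sub_sub_cancel_right] using hyz
    · simp only [add_sub_cancel]
  · rintro ⟨⟨a, b⟩, ⟨⟨⟨ha₀, haΔ⟩, hb₀, hbΔ⟩, hab⟩, rfl⟩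
    refine ⟨x + a, x + b, ⟨?_, ?_⟩, ⟨?_, ?_⟩, ?_, rfl⟩
    any_goals linarith
    simpa only [mem_ofPred_eq, add_sub_add_left_eq_sub] using hab

theorem sliding_window_max_lipschitz_general
    (g f : ℝ → ℝ) (Lg Lf : ℝ) (hLf : 0 ≤ Lf)
    (hg : ∀ x y, |g x - g y| ≤ Lg * |x - y|)
    (hf : ∀ x y, |f x - f y| ≤ Lf * |x - y|)
    (Δ h : ℝ) (hΔ : 0 < Δ) (hh : 0 < h)
    (w : ℝ → ℝ)
    (hw : ∀ x, w x = sSup {v | ∃ y z, y ∈ Set.Icc x (x + Δ) ∧ z ∈ Set.Icc x (x + Δ) ∧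
      |y - z| ≤ h ∧ v = g y + f z}) :
    (∀ x y, |w x - w y| ≤ (Lg + 4 * Lf) * |x - y|) ∧ Continuous w := by
  set F : ℝ → ℝ × ℝ → ℝ := fun x p => g (x + p.1) + f (x + p.2)
  have hK : (windowOffsets Δ h).Nonempty := ⟨0, zero_mem_windowOffsets hΔ.le hh.le⟩
  have hF_bdd (x : ℝ) : BddAbove (F x '' windowOffsets Δ h) :=
    (isCompact_windowOffsets Δ h).bddAbove_image <| Continuous.continuousOn <| by
      have := (lipschitzWith_of_abs_sub_le hg).continuous
      have := (lipschitzWith_of_abs_sub_le hf).continuous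
      fun_prop
  have hF_close (x x' : ℝ) (p : ℝ × ℝ) : |F x p - F x' p| ≤ (Lg + Lf) * |x - x'| := by
    have hg' := hg (x + p.1) (x' + p.1)
    have hf' := hf (x + p.2) (x' + p.2)
    simp only [add_sub_add_right_eq_sub] at hg' hf'
    calc |F x p - F x' p| = |(g (x + p.1) - g (x' + p.1)) + (f (x + p.2) - f (x' + p.2))| := by
          congr 1; ring
      _ ≤ _ := (abs_add_le _ _).trans (by linarith)
  have hlip (x y : ℝ) : |w x - w y| ≤ (Lg + 4 * Lf) * |x - y| := by
    rw [hw, hw, window_values_eq_image, window_values_eq_image]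
    refine (abs_csSup_image_sub_csSup_image_le hK (hF_bdd x) (hF_bdd y)
      fun p _ => hF_close x y p).trans ?_
    exact mul_le_mul_of_nonneg_right (by linarith) (abs_nonneg _)
  exact ⟨hlip, (lipschitzWith_of_abs_sub_le hlip).continuous⟩

/-- **Lipschitz continuity of constrained sliding-window maxima.** If `g` is Lipschitz with
constant `L_g` and `f` is Lipschitz with constant `L_f`, and `Δ, h > 0`, then the function
`w(x) = max { g(y) + f(z) : y, z ∈ [x, x+Δ], |y − z| ≤ h }` is Lipschitz with constant
`L_g + 4·L_f`; in particular, `w` is continuous. -/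
theorem sliding_window_max_lipschitz
    (g f : ℝ → ℝ) (Lg Lf : ℝ) (hLg : 0 ≤ Lg) (hLf : 0 ≤ Lf)
    (hg : ∀ x y, |g x - g y| ≤ Lg * |x - y|)
    (hf : ∀ x y, |f x - f y| ≤ Lf * |x - y|)
    (Δ h : ℝ) (hΔ : 0 < Δ) (hh : 0 < h)
    (w : ℝ → ℝ)
    (hw : ∀ x, w x = sSup {v | ∃ y z, y ∈ Set.Icc x (x + Δ) ∧ z ∈ Set.Icc x (x + Δ) ∧
      |y - z| ≤ h ∧ v = g y + f z}) :
    (∀ x y, |w x - w y| ≤ (Lg + 4 * Lf) * |x - y|) ∧ Continuous w :=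
  sliding_window_max_lipschitz_general g f Lg Lf hLf hg hf Δ h hΔ hh w hw
end

section
/- Worst-case prediction sequences have maximal interval lengths: for every changing-cost RMOwP instance, the supremum over history-dependent ordering policies π of the robust competitive ratio φ_π equals the supremum over history-dependent ordering policies π of the restricted robust competitive ratio φ̃_π (in which the adversary is restricted to exact-length admissible scenarios). Moreover, for every history-dependent ordering policy π there exists a history-dependent ordering policy π̂ with φ_{π̂} ≥ φ̃_π. -/
/-- An instance of the robust multi-period ordering with predictions problem under
changing ordering costs. -/
structure CCRMOwP where
  /-- number of preparation days -/
  T : ℕ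
  /-- number of cost phases -/
  K : ℕ
  /-- left endpoint of the initial prediction interval -/
  dlo : ℝ
  /-- right endpoint of the initial prediction interval -/
  dhi : ℝ
  /-- prediction-error upper bounds -/
  Δ : ℕ → ℝ
  /-- per-unit revenue -/
  p : ℝ
  /-- the grid vector `τ₀ = 1 < τ₁ < … < τ_K = T+1` -/
  grid : ℕ → ℕ
  /-- phase costs `γ₁ ≤ … ≤ γ_K` -/
  γ : ℕ → ℝ
  /-- induced daily costs `c_t` -/
  cost : ℕ → ℝ
  /-- daily supply capacities -/
  Vcap : ℕ → ℝ

namespace CCRMOwP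

variable (J : CCRMOwP)

/-- The structural hypotheses on a changing-cost RMOwP instance. -/
def IsValid : Prop :=
  1 ≤ J.T ∧ 0 < J.dlo ∧ J.dlo ≤ J.dhi ∧
  (∀ t, 1 ≤ t → t + 1 ≤ J.T → J.Δ (t + 1) ≤ J.Δ t) ∧
  (∀ t, 1 ≤ t → t ≤ J.T → 0 ≤ J.Δ t) ∧
  J.Δ 1 ≤ J.dhi - J.dlo ∧
  1 ≤ J.K ∧ J.grid 0 = 1 ∧ J.grid J.K = J.T + 1 ∧
  (∀ v, v < J.K → J.grid v < J.grid (v + 1)) ∧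
  (∀ v, 1 ≤ v → v + 1 ≤ J.K → J.γ v ≤ J.γ (v + 1)) ∧
  0 < J.γ 1 ∧ J.γ J.K < J.p ∧
  (∀ v t, 1 ≤ v → v ≤ J.K → J.grid (v - 1) ≤ t → t < J.grid v → J.cost t = J.γ v) ∧
  (∀ t, 1 ≤ t → t ≤ J.T → 0 ≤ J.Vcap t) ∧
  0 < ∑ t ∈ Finset.Icc 1 J.T, J.Vcap t

/-- An admissible scenario: a regular prediction sequence together with a demand. -/
def Scenario (lo hi : ℕ → ℝ) (d : ℝ) : Prop :=
  J.dlo ≤ lo 1 ∧ hi 1 ≤ J.dhi ∧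
  (∀ t, 1 ≤ t → t ≤ J.T → lo t ≤ hi t ∧ hi t - lo t ≤ J.Δ t) ∧
  (∀ t, 2 ≤ t → t ≤ J.T → lo (t - 1) ≤ lo t ∧ hi t ≤ hi (t - 1)) ∧
  lo J.T ≤ d ∧ d ≤ hi J.T

/-- An exact-length admissible scenario: an admissible scenario in which every prediction
interval has length exactly `Δ_t`. -/
def ExactScenario (lo hi : ℕ → ℝ) (d : ℝ) : Prop :=
  J.Scenario lo hi d ∧ ∀ t, 1 ≤ t → t ≤ J.T → hi t - lo t = J.Δ t

/-- A history-dependent ordering policy: on day `t` it looks only at the intervals revealed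
on days `1,…,t`, and its action lies in `[0, V_t]` whenever those intervals have lengths at
most `Δ_s`. -/
def IsHistPolicy (π : ℕ → (ℕ → ℝ) → (ℕ → ℝ) → ℝ) : Prop :=
  (∀ t lo hi lo' hi', (∀ s, 1 ≤ s → s ≤ t → lo s = lo' s ∧ hi s = hi' s) →
    π t lo hi = π t lo' hi') ∧
  (∀ t lo hi, 1 ≤ t → t ≤ J.T →
    (∀ s, 1 ≤ s → s ≤ t → lo s ≤ hi s ∧ hi s - lo s ≤ J.Δ s) →
    0 ≤ π t lo hi ∧ π t lo hi ≤ J.Vcap t)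

/-- The profit of a history-dependent policy on a scenario. -/
noncomputable def profit (π : ℕ → (ℕ → ℝ) → (ℕ → ℝ) → ℝ) (lo hi : ℕ → ℝ) (d : ℝ) : ℝ :=
  J.p * min d (∑ t ∈ Finset.Icc 1 J.T, π t lo hi) -
    ∑ t ∈ Finset.Icc 1 J.T, J.cost t * π t lo hi

/-- The hindsight-optimal profit. -/
noncomputable def hindsight (d : ℝ) : ℝ :=
  ∑ t ∈ Finset.Icc 1 J.T,
    (J.p - J.cost t) * min (J.Vcap t) (max (d - ∑ i ∈ Finset.Icc 1 (t - 1), J.Vcap i) 0)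

/-- The robust competitive ratio of a history-dependent policy. -/
noncomputable def ratio (π : ℕ → (ℕ → ℝ) → (ℕ → ℝ) → ℝ) : ℝ :=
  sInf {r | ∃ lo hi d, J.Scenario lo hi d ∧ r = J.profit π lo hi d / J.hindsight d}

/-- The restricted robust competitive ratio, where the adversary is restricted to
exact-length admissible scenarios. -/
noncomputable def ratioEx (π : ℕ → (ℕ → ℝ) → (ℕ → ℝ) → ℝ) : ℝ :=
  sInf {r | ∃ lo hi d, J.ExactScenario lo hi d ∧ r = J.profit π lo hi d / J.hindsight d}

end CCRMOwP

namespace CCRMOwP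

/-- Monotonicity of the phase costs along the chain. -/
lemma gamma_mono {J : CCRMOwP}
    (hγ : ∀ v, 1 ≤ v → v + 1 ≤ J.K → J.γ v ≤ J.γ (v + 1)) :
    ∀ b a, 1 ≤ a → a ≤ b → b ≤ J.K → J.γ a ≤ J.γ b := by
  intro b
  induction b with
  | zero => intro a h1 h2 _; omega
  | succ b ih =>
    intro a h1 h2 hb
    rcases Nat.lt_or_ge a (b + 1) with h | h
    · have hb1 : 1 ≤ b := by omega
      exact le_trans (ih a h1 (by omega) (by omega)) (hγ b hb1 hb)
    · have : a = b + 1 := by omega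
      rw [this]

/-- Every day's cost is strictly between 0 and `p`. -/
lemma cost_bounds {J : CCRMOwP} (hJ : J.IsValid) {t : ℕ} (h1 : 1 ≤ t) (h2 : t ≤ J.T) :
    0 < J.cost t ∧ J.cost t < J.p := by
  obtain ⟨hT, hdlo, hdle, hΔmono, hΔnn, hΔ1, hK, hg0, hgK, hgmono, hγmono, hγ1, hγK,
    hcost, hVnn, hVsum⟩ := hJ
  classical
  have hex : ∃ v, t < J.grid v := ⟨J.K, by omega⟩
  have hvP : t < J.grid (Nat.find hex) := Nat.find_spec hex
  set v := Nat.find hex with hv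
  have hv1 : 1 ≤ v := by
    by_contra h
    have h0 : v = 0 := by omega
    rw [h0, hg0] at hvP; omega
  have hvK : v ≤ J.K := Nat.find_min' hex (by omega)
  have hprev : J.grid (v - 1) ≤ t := by
    have := Nat.find_min hex (show v - 1 < v by omega)
    omega
  have hc : J.cost t = J.γ v := hcost v t hv1 hvK hprev hvP
  have h1v : J.γ 1 ≤ J.γ v := gamma_mono hγmono v 1 le_rfl hv1 hvK
  have hvKγ : J.γ v ≤ J.γ J.K := gamma_mono hγmono J.K v hv1 hvK le_rfl
  constructor <;> [skip; skip] <;> rw [hc] <;> linarith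

/-- In a scenario the left ends grow and the right ends shrink. -/
lemma scen_mono {J : CCRMOwP} {lo hi : ℕ → ℝ} {d : ℝ} (hs : J.Scenario lo hi d) :
    ∀ t, 1 ≤ t → t ≤ J.T → lo 1 ≤ lo t ∧ hi t ≤ hi 1 := by
  have hnest := hs.2.2.2.1
  intro t
  induction t with
  | zero => omega
  | succ u ih =>
    intro h1 h2
    by_cases hu : u = 0
    · subst hu; exact ⟨le_refl _, le_refl _⟩
    · have hu1 : 1 ≤ u := by omega
      have hih := ih hu1 (by omega)
      have hn := hnest (u + 1) (by omega) h2
      simp only [Nat.add_sub_cancel] at hn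
      exact ⟨le_trans hih.1 hn.1, le_trans hn.2 hih.2⟩

/-- The demand in a scenario lies in `[dlo, dhi]`. -/
lemma scen_d_bounds {J : CCRMOwP} (hJ : J.IsValid) {lo hi : ℕ → ℝ} {d : ℝ}
    (hs : J.Scenario lo hi d) : J.dlo ≤ d ∧ d ≤ J.dhi := by
  have hT : 1 ≤ J.T := hJ.1
  have hm := scen_mono hs J.T hT le_rfl
  exact ⟨le_trans hs.1 (le_trans hm.1 hs.2.2.2.2.1),
    le_trans hs.2.2.2.2.2 (le_trans hm.2 hs.2.1)⟩

/-- The exactified right-endpoint sequence. -/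
noncomputable def exthi (J : CCRMOwP) (lo : ℕ → ℝ) : ℕ → ℝ
  | 0 => J.dhi
  | t + 1 => min (exthi J lo t) (lo (t + 1) + J.Δ (t + 1))

lemma exthi_zero (J : CCRMOwP) (lo : ℕ → ℝ) : exthi J lo 0 = J.dhi := rfl

lemma exthi_succ (J : CCRMOwP) (lo : ℕ → ℝ) (t : ℕ) :
    exthi J lo (t + 1) = min (exthi J lo t) (lo (t + 1) + J.Δ (t + 1)) := rfl

lemma exthi_le_dhi (J : CCRMOwP) (lo : ℕ → ℝ) : ∀ t, exthi J lo t ≤ J.dhi := by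
  intro t
  induction t with
  | zero => exact le_refl _
  | succ u ih => exact le_trans (min_le_left _ _) ih

lemma exthi_le_lo_add (J : CCRMOwP) (lo : ℕ → ℝ) {t : ℕ} (h : 1 ≤ t) :
    exthi J lo t ≤ lo t + J.Δ t := by
  obtain ⟨w, rfl⟩ := Nat.exists_eq_succ_of_ne_zero (show t ≠ 0 by omega)
  exact min_le_right _ _

lemma exthi_congr (J : CCRMOwP) {lo lo' : ℕ → ℝ} :
    ∀ t, (∀ s, 1 ≤ s → s ≤ t → lo s = lo' s) → exthi J lo t = exthi J lo' t := by
  intro t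
  induction t with
  | zero => intro _; rfl
  | succ u ih =>
    intro h
    rw [exthi_succ, exthi_succ, ih (fun s h1 h2 => h s h1 (by omega)),
      h (u + 1) (by omega) le_rfl]

lemma hi_le_exthi {J : CCRMOwP} {lo hi : ℕ → ℝ} {d : ℝ} (hs : J.Scenario lo hi d) :
    ∀ t, 1 ≤ t → t ≤ J.T → hi t ≤ exthi J lo t := by
  intro t
  induction t with
  | zero => omega
  | succ u ih =>
    intro h1 h2
    have hlen := hs.2.2.1 (u + 1) (by omega) h2
    rw [exthi_succ]
    by_cases hu : u = 0
    · subst hu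
      exact le_min (le_trans hs.2.1 (le_of_eq (exthi_zero J lo).symm)) (by linarith [hlen.2])
    · have hn := hs.2.2.2.1 (u + 1) (by omega) h2
      simp only [Nat.add_sub_cancel] at hn
      exact le_min (le_trans hn.2 (ih (by omega) (by omega))) (by linarith [hlen.2])

/-- The exactified scenario is an exact-length admissible scenario. -/
lemma ext_scenario {J : CCRMOwP} (hJ : J.IsValid) {lo hi : ℕ → ℝ} {d : ℝ}
    (hs : J.Scenario lo hi d) :
    J.ExactScenario (fun s => exthi J lo s - J.Δ s) (exthi J lo) d := by
  obtain ⟨hT, hdlo, hdle, hΔmono, hΔnn, hΔ1, hrest⟩ := hJ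
  refine ⟨⟨?_, ?_, ?_, ?_, ?_, ?_⟩, ?_⟩
  · -- dlo ≤ exthi 1 - Δ 1
    have h1 : J.dlo + J.Δ 1 ≤ exthi J lo 1 := by
      rw [exthi_succ, exthi_zero]
      exact le_min (by linarith) (by linarith [hs.1])
    show J.dlo ≤ exthi J lo 1 - J.Δ 1
    linarith
  · exact exthi_le_dhi J lo 1
  · intro t h1 h2
    have := hΔnn t h1 h2
    constructor
    · show exthi J lo t - J.Δ t ≤ exthi J lo t; linarith
    · show exthi J lo t - (exthi J lo t - J.Δ t) ≤ J.Δ t; linarith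
  · intro t h1 h2
    obtain ⟨u, rfl⟩ := Nat.exists_eq_succ_of_ne_zero (show t ≠ 0 by omega)
    have hu1 : 1 ≤ u := by omega
    have he : u.succ - 1 = u := rfl
    rw [he]
    constructor
    · -- exthi u - Δ u ≤ exthi (u+1) - Δ (u+1)
      have hΔ : J.Δ (u + 1) ≤ J.Δ u := hΔmono u hu1 h2
      have hle : exthi J lo u - J.Δ u ≤ lo u := by
        have := exthi_le_lo_add J lo hu1; linarith
      have hn := hs.2.2.2.1 (u + 1) (by omega) h2
      rw [show u + 1 - 1 = u from rfl] at hn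
      have hm : exthi J lo u - J.Δ u + J.Δ (u + 1) ≤ exthi J lo (u + 1) := by
        rw [exthi_succ]
        exact le_min (by linarith) (by linarith [hn.1])
      show exthi J lo u - J.Δ u ≤ exthi J lo u.succ - J.Δ u.succ
      have hq : u.succ = u + 1 := rfl
      rw [hq]
      linarith
    · rw [show u.succ = u + 1 from rfl, exthi_succ]
      exact min_le_left _ _
  · -- exthi T - Δ T ≤ d
    have h1 := exthi_le_lo_add J lo hT
    have h2 := hs.2.2.2.2.1
    show exthi J lo J.T - J.Δ J.T ≤ d
    linarith
  · exact le_trans hs.2.2.2.2.2 (hi_le_exthi hs J.T hT le_rfl)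
  · intro t h1 h2
    show exthi J lo t - (exthi J lo t - J.Δ t) = J.Δ t
    ring

/-- The canonical exact-length scenario. -/
lemma exists_exact (J : CCRMOwP) (hJ : J.IsValid) :
    J.ExactScenario (fun _ => J.dlo) (fun t => J.dlo + J.Δ t) J.dlo := by
  obtain ⟨hT, hdlo, hdle, hΔmono, hΔnn, hΔ1, hrest⟩ := hJ
  refine ⟨⟨le_refl _, show J.dlo + J.Δ 1 ≤ J.dhi by linarith, ?_, ?_, le_refl _, ?_⟩, ?_⟩
  · intro t h1 h2
    have := hΔnn t h1 h2
    refine ⟨show J.dlo ≤ J.dlo + J.Δ t by linarith,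
      show J.dlo + J.Δ t - J.dlo ≤ J.Δ t by linarith⟩
  · intro t h1 h2
    obtain ⟨u, rfl⟩ := Nat.exists_eq_succ_of_ne_zero (show t ≠ 0 by omega)
    rw [show u.succ - 1 = u from rfl, show u.succ = u + 1 from rfl]
    have := hΔmono u (by omega) h2
    exact ⟨le_refl _, by show J.dlo + J.Δ (u+1) ≤ J.dlo + J.Δ u; linarith⟩
  · have := hΔnn J.T hT le_rfl
    show J.dlo ≤ J.dlo + J.Δ J.T
    linarith
  · intro t h1 h2
    show J.dlo + J.Δ t - J.dlo = J.Δ t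
    ring

end CCRMOwP

namespace CCRMOwP

/-- A uniform positive lower bound on the hindsight profit. -/
lemma hindsight_lb (J : CCRMOwP) (hJ : J.IsValid) :
    ∃ h0 : ℝ, 0 < h0 ∧ ∀ d, J.dlo ≤ d → h0 ≤ J.hindsight d := by
  classical
  have hcb : ∀ t, 1 ≤ t → t ≤ J.T → 0 < J.cost t ∧ J.cost t < J.p :=
    fun t h1 h2 => cost_bounds hJ h1 h2
  obtain ⟨hT, hdlo, hdle, hΔmono, hΔnn, hΔ1, hK, hg0, hgK, hgmono, hγmono, hγ1, hγK,
    hcost, hVnn, hVsum⟩ := hJ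
  have hex : ∃ t, 0 < J.Vcap t ∧ 1 ≤ t ∧ t ≤ J.T := by
    by_contra h
    push_neg at h
    have hz : ∑ t ∈ Finset.Icc 1 J.T, J.Vcap t = 0 := by
      apply Finset.sum_eq_zero
      intro t ht
      simp only [Finset.mem_Icc] at ht
      have h1 := hVnn t ht.1 ht.2
      by_contra hne
      have hpos : 0 < J.Vcap t := lt_of_le_of_ne h1 (Ne.symm hne)
      have := h t hpos ht.1
      omega
    linarith
  obtain ⟨hV0, h10, hT0⟩ := Nat.find_spec hex
  set t0 := Nat.find hex with ht0def
  have hsum0 : ∑ i ∈ Finset.Icc 1 (t0 - 1), J.Vcap i = 0 := by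
    apply Finset.sum_eq_zero
    intro i hi
    simp only [Finset.mem_Icc] at hi
    have hiT : i ≤ J.T := by omega
    have hmin := Nat.find_min hex (show i < t0 by omega)
    have hnn := hVnn i hi.1 hiT
    by_contra hne
    exact hmin ⟨lt_of_le_of_ne hnn (Ne.symm hne), hi.1, hiT⟩
  obtain ⟨hc0, hcp⟩ := hcb t0 h10 hT0
  refine ⟨(J.p - J.cost t0) * min (J.Vcap t0) J.dlo, mul_pos (by linarith) (lt_min hV0 hdlo), ?_⟩
  intro d hd
  have hd0 : 0 < d := lt_of_lt_of_le hdlo hd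
  have hterm : (J.p - J.cost t0) * min (J.Vcap t0) J.dlo ≤
      (J.p - J.cost t0) * min (J.Vcap t0)
        (max (d - ∑ i ∈ Finset.Icc 1 (t0 - 1), J.Vcap i) 0) := by
    apply mul_le_mul_of_nonneg_left _ (by linarith)
    rw [hsum0, sub_zero, max_eq_left hd0.le]
    exact min_le_min le_rfl hd
  refine le_trans hterm ?_
  show _ ≤ J.hindsight d
  rw [hindsight]
  apply Finset.single_le_sum (f := fun t =>
    (J.p - J.cost t) * min (J.Vcap t) (max (d - ∑ i ∈ Finset.Icc 1 (t - 1), J.Vcap i) 0))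
    _ (Finset.mem_Icc.mpr ⟨h10, hT0⟩)
  intro t ht
  simp only [Finset.mem_Icc] at ht
  obtain ⟨hc, hp⟩ := hcb t ht.1 ht.2
  exact mul_nonneg (by linarith) (le_min (hVnn t ht.1 ht.2) (le_max_right _ _))

/-- Bounds on the profit of any history-dependent policy on any scenario. -/
lemma profit_bounds (J : CCRMOwP) (hJ : J.IsValid) {π : ℕ → (ℕ → ℝ) → (ℕ → ℝ) → ℝ}
    {lo hi : ℕ → ℝ} {d : ℝ} (hπ : J.IsHistPolicy π) (hs : J.Scenario lo hi d) :
    -(∑ t ∈ Finset.Icc 1 J.T, J.cost t * J.Vcap t) ≤ J.profit π lo hi d ∧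
      J.profit π lo hi d ≤ J.p * J.dhi := by
  have hd := scen_d_bounds hJ hs
  have hdlo := hJ.2.1
  have hT := hJ.1
  have hp : 0 < J.p := lt_trans (cost_bounds hJ le_rfl hT).1 (cost_bounds hJ le_rfl hT).2
  have ha : ∀ t ∈ Finset.Icc 1 J.T, 0 ≤ π t lo hi ∧ π t lo hi ≤ J.Vcap t := by
    intro t ht
    simp only [Finset.mem_Icc] at ht
    exact hπ.2 t lo hi ht.1 ht.2 (fun s h1 h2 => hs.2.2.1 s h1 (le_trans h2 ht.2))
  have hsum_nn : 0 ≤ ∑ t ∈ Finset.Icc 1 J.T, π t lo hi :=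
    Finset.sum_nonneg fun t ht => (ha t ht).1
  have hcs_le : ∑ t ∈ Finset.Icc 1 J.T, J.cost t * π t lo hi ≤
      ∑ t ∈ Finset.Icc 1 J.T, J.cost t * J.Vcap t := by
    apply Finset.sum_le_sum
    intro t ht
    simp only [Finset.mem_Icc] at ht
    exact mul_le_mul_of_nonneg_left (ha t (Finset.mem_Icc.mpr ht)).2
      (cost_bounds hJ ht.1 ht.2).1.le
  have hcs_nn : 0 ≤ ∑ t ∈ Finset.Icc 1 J.T, J.cost t * π t lo hi := by
    apply Finset.sum_nonneg
    intro t ht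
    simp only [Finset.mem_Icc] at ht
    exact mul_nonneg (cost_bounds hJ ht.1 ht.2).1.le (ha t (Finset.mem_Icc.mpr ht)).1
  have hmin_nn : 0 ≤ min d (∑ t ∈ Finset.Icc 1 J.T, π t lo hi) :=
    le_min (by linarith [hd.1]) hsum_nn
  have hmin_le : min d (∑ t ∈ Finset.Icc 1 J.T, π t lo hi) ≤ J.dhi :=
    le_trans (min_le_left _ _) hd.2
  have h1 : 0 ≤ J.p * min d (∑ t ∈ Finset.Icc 1 J.T, π t lo hi) :=
    mul_nonneg hp.le hmin_nn
  have h2 : J.p * min d (∑ t ∈ Finset.Icc 1 J.T, π t lo hi) ≤ J.p * J.dhi :=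
    mul_le_mul_of_nonneg_left hmin_le hp.le
  rw [profit]
  constructor <;> linarith

/-- The exactifying transformation of a policy. -/
noncomputable def hatPolicy (J : CCRMOwP) (π : ℕ → (ℕ → ℝ) → (ℕ → ℝ) → ℝ) :
    ℕ → (ℕ → ℝ) → (ℕ → ℝ) → ℝ :=
  fun t lo _ => π t (fun s => exthi J lo s - J.Δ s) (exthi J lo)

lemma hatPolicy_hist (J : CCRMOwP) (hJ : J.IsValid) {π : ℕ → (ℕ → ℝ) → (ℕ → ℝ) → ℝ}
    (hπ : J.IsHistPolicy π) : J.IsHistPolicy (J.hatPolicy π) := by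
  constructor
  · intro t lo hi lo' hi' hagree
    apply hπ.1 t
    intro s h1 h2
    have he : exthi J lo s = exthi J lo' s :=
      exthi_congr J s (fun u hu1 hu2 => (hagree u hu1 (le_trans hu2 h2)).1)
    exact ⟨by rw [he], he⟩
  · intro t lo hi h1 h2 hlen
    apply hπ.2 t _ _ h1 h2
    intro s hs1 hs2
    have hΔ : 0 ≤ J.Δ s := hJ.2.2.2.2.1 s hs1 (le_trans hs2 h2)
    constructor
    · show exthi J lo s - J.Δ s ≤ exthi J lo s; linarith
    · show exthi J lo s - (exthi J lo s - J.Δ s) ≤ J.Δ s; linarith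

lemma hatPolicy_profit (J : CCRMOwP) (π : ℕ → (ℕ → ℝ) → (ℕ → ℝ) → ℝ)
    (lo hi : ℕ → ℝ) (d : ℝ) :
    J.profit (J.hatPolicy π) lo hi d =
      J.profit π (fun s => exthi J lo s - J.Δ s) (exthi J lo) d := rfl

end CCRMOwP

namespace CCRMOwP

lemma ratio_val_bounds (J : CCRMOwP) (hJ : J.IsValid) {h0 : ℝ} (hh0 : 0 < h0)
    (hlb : ∀ d, J.dlo ≤ d → h0 ≤ J.hindsight d)
    {π : ℕ → (ℕ → ℝ) → (ℕ → ℝ) → ℝ} {lo hi : ℕ → ℝ} {d : ℝ}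
    (hπ : J.IsHistPolicy π) (hs : J.Scenario lo hi d) :
    -(∑ t ∈ Finset.Icc 1 J.T, J.cost t * J.Vcap t) / h0 ≤
        J.profit π lo hi d / J.hindsight d ∧
      J.profit π lo hi d / J.hindsight d ≤ J.p * J.dhi / h0 := by
  obtain ⟨hP1, hP2⟩ := profit_bounds J hJ hπ hs
  have hd := scen_d_bounds hJ hs
  have hT := hJ.1
  have hdlo := hJ.2.1
  have hp : 0 < J.p := lt_trans (cost_bounds hJ le_rfl hT).1 (cost_bounds hJ le_rfl hT).2
  have hC : 0 ≤ ∑ t ∈ Finset.Icc 1 J.T, J.cost t * J.Vcap t := by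
    apply Finset.sum_nonneg
    intro t ht
    simp only [Finset.mem_Icc] at ht
    exact mul_nonneg (cost_bounds hJ ht.1 ht.2).1.le (hJ.2.2.2.2.2.2.2.2.2.2.2.2.2.2.1 t ht.1 ht.2)
  have hH : h0 ≤ J.hindsight d := hlb d hd.1
  have hHpos : 0 < J.hindsight d := lt_of_lt_of_le hh0 hH
  constructor
  · have l1 : (∑ t ∈ Finset.Icc 1 J.T, J.cost t * J.Vcap t) / J.hindsight d ≤
        (∑ t ∈ Finset.Icc 1 J.T, J.cost t * J.Vcap t) / h0 := by
      gcongr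
    have l2 : -(∑ t ∈ Finset.Icc 1 J.T, J.cost t * J.Vcap t) / J.hindsight d ≤
        J.profit π lo hi d / J.hindsight d := by
      apply div_le_div_of_nonneg_right hP1 hHpos.le
    have l3 : -(∑ t ∈ Finset.Icc 1 J.T, J.cost t * J.Vcap t) / h0 ≤
        -(∑ t ∈ Finset.Icc 1 J.T, J.cost t * J.Vcap t) / J.hindsight d := by
      rw [neg_div, neg_div]
      linarith
    linarith
  · have hnum : 0 ≤ J.p * J.dhi := mul_nonneg hp.le (by linarith [hd.1, hd.2])
    exact div_le_div₀ hnum hP2 hh0 hH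

end CCRMOwP

/-- **Observation (Worst-case prediction sequences have maximal interval lengths).**
The supremum over history-dependent policies of the robust competitive ratio equals the
supremum over history-dependent policies of the restricted robust competitive ratio; moreover,
for every history-dependent policy `π` there is a history-dependent policy `π̂` with
`φ_{π̂} ≥ φ̃_π`. -/
theorem ccrmowp_exact_length_worst_case (J : CCRMOwP) (hJ : J.IsValid) :
    sSup {r | ∃ π, J.IsHistPolicy π ∧ r = J.ratio π} =
      sSup {r | ∃ π, J.IsHistPolicy π ∧ r = J.ratioEx π} ∧
    ∀ π, J.IsHistPolicy π → ∃ π', J.IsHistPolicy π' ∧ J.ratioEx π ≤ J.ratio π' := by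
  classical
  obtain ⟨h0, hh0, hlb⟩ := CCRMOwP.hindsight_lb J hJ
  have hVnn : ∀ t, 1 ≤ t → t ≤ J.T → 0 ≤ J.Vcap t :=
    hJ.2.2.2.2.2.2.2.2.2.2.2.2.2.2.1
  set C := ∑ t ∈ Finset.Icc 1 J.T, J.cost t * J.Vcap t with hCdef
  set L := -C / h0 with hLdef
  set U := J.p * J.dhi / h0 with hUdef
  have hcan := CCRMOwP.exists_exact J hJ
  -- the sets of ratio values
  have hval : ∀ π, J.IsHistPolicy π → ∀ r ∈
      {r | ∃ lo hi d, J.Scenario lo hi d ∧ r = J.profit π lo hi d / J.hindsight d},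
      L ≤ r ∧ r ≤ U := by
    rintro π hπ r ⟨lo, hi, d, hs, rfl⟩
    exact CCRMOwP.ratio_val_bounds J hJ hh0 hlb hπ hs
  have hsub : ∀ π : ℕ → (ℕ → ℝ) → (ℕ → ℝ) → ℝ,
      {r | ∃ lo hi d, J.ExactScenario lo hi d ∧ r = J.profit π lo hi d / J.hindsight d} ⊆
      {r | ∃ lo hi d, J.Scenario lo hi d ∧ r = J.profit π lo hi d / J.hindsight d} := by
    rintro π r ⟨lo, hi, d, hs, rfl⟩
    exact ⟨lo, hi, d, hs.1, rfl⟩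
  have hbddB : ∀ π, J.IsHistPolicy π → BddBelow
      {r | ∃ lo hi d, J.Scenario lo hi d ∧ r = J.profit π lo hi d / J.hindsight d} :=
    fun π hπ => ⟨L, fun r hr => (hval π hπ r hr).1⟩
  have hne_ex : ∀ π : ℕ → (ℕ → ℝ) → (ℕ → ℝ) → ℝ,
      Set.Nonempty {r | ∃ lo hi d, J.ExactScenario lo hi d ∧
        r = J.profit π lo hi d / J.hindsight d} :=
    fun π => ⟨_, ⟨_, _, _, hcan, rfl⟩⟩
  have hne_reg : ∀ π : ℕ → (ℕ → ℝ) → (ℕ → ℝ) → ℝ,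
      Set.Nonempty {r | ∃ lo hi d, J.Scenario lo hi d ∧
        r = J.profit π lo hi d / J.hindsight d} :=
    fun π => ⟨_, ⟨_, _, _, hcan.1, rfl⟩⟩
  have hratio_le : ∀ π, J.IsHistPolicy π → J.ratio π ≤ J.ratioEx π := by
    intro π hπ
    rw [CCRMOwP.ratio, CCRMOwP.ratioEx]
    exact csInf_le_csInf (hbddB π hπ) (hne_ex π) (hsub π)
  have hhat : ∀ π, J.IsHistPolicy π → J.ratioEx π ≤ J.ratio (J.hatPolicy π) := by
    intro π hπ
    rw [CCRMOwP.ratio, CCRMOwP.ratioEx]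
    apply csInf_le_csInf
    · exact BddBelow.mono (hsub π) (hbddB π hπ)
    · exact hne_reg (J.hatPolicy π)
    · rintro r ⟨lo, hi, d, hs, rfl⟩
      exact ⟨_, _, d, CCRMOwP.ext_scenario hJ hs, by rw [CCRMOwP.hatPolicy_profit]⟩
  have hratio_leU : ∀ π, J.IsHistPolicy π → J.ratio π ≤ U := by
    intro π hπ
    rw [CCRMOwP.ratio]
    exact csInf_le_of_le (hbddB π hπ) ⟨_, _, _, hcan.1, rfl⟩
      (hval π hπ _ ⟨_, _, _, hcan.1, rfl⟩).2
  have hratioEx_leU : ∀ π, J.IsHistPolicy π → J.ratioEx π ≤ U := by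
    intro π hπ
    rw [CCRMOwP.ratioEx]
    exact csInf_le_of_le (BddBelow.mono (hsub π) (hbddB π hπ)) ⟨_, _, _, hcan, rfl⟩
      (hval π hπ _ ⟨_, _, _, hcan.1, rfl⟩).2
  have hpol0 : J.IsHistPolicy (fun _ _ _ => 0) :=
    ⟨fun _ _ _ _ _ _ => rfl, fun t lo hi h1 h2 _ => ⟨le_rfl, hVnn t h1 h2⟩⟩
  have hAne : Set.Nonempty {r | ∃ π, J.IsHistPolicy π ∧ r = J.ratio π} :=
    ⟨_, ⟨_, hpol0, rfl⟩⟩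
  have hBne : Set.Nonempty {r | ∃ π, J.IsHistPolicy π ∧ r = J.ratioEx π} :=
    ⟨_, ⟨_, hpol0, rfl⟩⟩
  have hAbdd : BddAbove {r | ∃ π, J.IsHistPolicy π ∧ r = J.ratio π} := by
    refine ⟨U, ?_⟩
    rintro a ⟨π, hπ, rfl⟩
    exact hratio_leU π hπ
  have hBbdd : BddAbove {r | ∃ π, J.IsHistPolicy π ∧ r = J.ratioEx π} := by
    refine ⟨U, ?_⟩
    rintro b ⟨π, hπ, rfl⟩
    exact hratioEx_leU π hπ
  refine ⟨le_antisymm ?_ ?_, fun π hπ => ⟨J.hatPolicy π, CCRMOwP.hatPolicy_hist J hJ hπ, hhat π hπ⟩⟩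
  · apply csSup_le hAne
    rintro a ⟨π, hπ, rfl⟩
    exact (hratio_le π hπ).trans (le_csSup hBbdd ⟨π, hπ, rfl⟩)
  · apply csSup_le hBne
    rintro b ⟨π, hπ, rfl⟩
    exact (hhat π hπ).trans
      (le_csSup hAbdd ⟨J.hatPolicy π, CCRMOwP.hatPolicy_hist J hJ hπ, rfl⟩)
end

section
/- Phase reduction in the last phase: consider a single-phase feasibility problem with linear side constraints as described. A feasible policy exists if and only if the following three families of inequalities hold. (1) For every s_m ∈ F_{0→m}(σ₀) and every i ∈ {1,…,n} with W(s_m)_{i,K} > 0: W(s_m)_{i,K}·U_{0→m}(σ₀, s_m) + W(s_m)_{i,0} + Σ_{j=1}^{K−1} W(s_m)_{i,j}·x_j ≤ 0. (2) For every s_m ∈ F_{0→m}(σ₀) and every i ∈ {1,…,n} with W(s_m)_{i,K} < 0: W(s_m)_{i,K}·V_{0→m}(σ₀, s_m) + W(s_m)_{i,0} + Σ_{j=1}^{K−1} W(s_m)_{i,j}·x_j ≤ 0. (3) For every α ∈ {1,…,m}, all i, i′ ∈ {1,…,n}, all s_α, s′_α ∈ S_α for which there exists s_{α−1} ∈ F_{0→α−1}(σ₀)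 with s_α ∈ F_{α−1}(s_{α−1}) and s′_α ∈ F_{α−1}(s_{α−1}), and all s_m ∈ F_{α→m}(s_α) and s′_m ∈ F_{α→m}(s′_α) with W(s_m)_{i,K} < 0 and W(s′_m)_{i′,K} > 0: W(s′_m)_{i′,K}·W(s_m)_{i,K}·[V_{α→m}(s_α, s_m) − U_{α→m}(s′_α, s′_m)] + W(s_m)_{i,0}·W(s′_m)_{i′,K} − W(s_m)_{i,K}·W(s′_m)_{i′,0} + Σ_{j=1}^{K−1} [W(s_m)_{i,j}·W(s′_m)_{i′,K} − W(s_m)_{i,K}·W(s′_m)_{i′,j}]·x_j ≤ 0. -/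
/-- A single-phase feasibility problem with linear side constraints: a minimax decision
process on times `0,…,m` whose final constraints are linear inequalities involving a fixed
vector `x ∈ ℝ^{K−1}` and the final inventory level. -/
structure SinglePhase where
  /-- horizon: times run over `0,…,m` -/
  m : ℕ
  /-- ambient type of environment states -/
  State : Type
  /-- the ambient type of states is finite -/
  fintype_state : Fintype State
  /-- the set of environment states available at each time -/
  S : ℕ → Set State
  /-- the initial environment state -/
  σ0 : State
  /-- the environment state transition map -/
  F : ℕ → State → Set State
  /-- lower action bounds -/
  U : ℕ → State → ℝ
  /-- upper action bounds -/
  V : ℕ → State → ℝ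
  /-- number of columns of the constraint matrices is `K+1` (indices `0,…,K`) -/
  K : ℕ
  /-- number of rows of the constraint matrices -/
  n : ℕ
  /-- the fixed vector `x = (x_1, …, x_{K−1})` -/
  xvec : ℕ → ℝ
  /-- for each final state, a real matrix with rows `1,…,n` and columns `0,…,K` -/
  W : State → ℕ → ℕ → ℝ

namespace SinglePhase

variable (P : SinglePhase)

/-- The structural hypotheses on a single-phase feasibility problem. -/
def IsValid : Prop :=
  1 ≤ P.m ∧ 1 ≤ P.K ∧ 1 ≤ P.n ∧
  (∀ t, t ≤ P.m → (P.S t).Nonempty) ∧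
  P.σ0 ∈ P.S 0 ∧
  (∀ t s, t + 1 ≤ P.m → s ∈ P.S t → (P.F t s).Nonempty ∧ P.F t s ⊆ P.S (t + 1)) ∧
  (∀ t s, t + 1 ≤ P.m → s ∈ P.S t → P.U t s ≤ P.V t s) ∧
  (∀ s, s ∈ P.S P.m → ∀ i, 1 ≤ i → i ≤ P.n → P.W s i P.K ≠ 0)

/-- A compatible environment state trajectory on `[α, β]`. -/
def EnvCompat (α β : ℕ) (s : ℕ → P.State) : Prop :=
  (∀ t, α ≤ t → t ≤ β → s t ∈ P.S t) ∧
  (∀ t, α ≤ t → t < β → s (t + 1) ∈ P.F t (s t))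

/-- `F_{α→β}(a)`. -/
def Reach (α β : ℕ) (a : P.State) : Set P.State :=
  {b | ∃ s : ℕ → P.State, P.EnvCompat α β s ∧ s α = a ∧ s β = b}

/-- `U_{α→β}(a, b)`. -/
noncomputable def Umax (α β : ℕ) (a b : P.State) : ℝ :=
  sSup {u | ∃ s : ℕ → P.State, P.EnvCompat α β s ∧ s α = a ∧ s β = b ∧
    u = ∑ t ∈ Finset.Ico α β, P.U t (s t)}

/-- `V_{α→β}(a, b)`. -/
noncomputable def Vmin (α β : ℕ) (a b : P.State) : ℝ :=
  sInf {v | ∃ s : ℕ → P.State, P.EnvCompat α β s ∧ s α = a ∧ s β = b ∧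
    v = ∑ t ∈ Finset.Ico α β, P.V t (s t)}

/-- A feasible policy for the single-phase problem: every compatible trajectory starting
from `(σ₀, 0)` obeys the action bounds and the final linear constraints. -/
def FeasiblePolicy (π : ℕ → P.State → ℝ → ℝ) : Prop :=
  ∀ s : ℕ → P.State, ∀ y : ℕ → ℝ,
    P.EnvCompat 0 P.m s → s 0 = P.σ0 → y 0 = 0 →
    (∀ t, t < P.m → y (t + 1) = y t + π t (s t) (y t)) →
    (∀ t, t < P.m → P.U t (s t) ≤ y (t + 1) - y t ∧ y (t + 1) - y t ≤ P.V t (s t)) ∧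
    (∀ i, 1 ≤ i → i ≤ P.n →
      P.W (s P.m) i 0 + (∑ j ∈ Finset.Icc 1 (P.K - 1), P.W (s P.m) i j * P.xvec j) +
        P.W (s P.m) i P.K * y P.m ≤ 0)

end SinglePhase
namespace SinglePhase

variable (P : SinglePhase)

/-- The set of trajectory cost sums for a cost function `c`. -/
def SumSet (c : ℕ → P.State → ℝ) (α β : ℕ) (a b : P.State) : Set ℝ :=
  {u | ∃ s : ℕ → P.State, P.EnvCompat α β s ∧ s α = a ∧ s β = b ∧
    u = ∑ t ∈ Finset.Ico α β, c t (s t)}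

lemma sumSet_finite (c : ℕ → P.State → ℝ) (α β : ℕ) (a b : P.State) :
    (P.SumSet c α β a b).Finite := by
  haveI := P.fintype_state
  apply Set.Finite.subset (Set.finite_range
    (fun g : {x // x ∈ Finset.Ico α β} → P.State =>
      ∑ t ∈ (Finset.Ico α β).attach, c t.1 (g t)))
  rintro u ⟨s, _, _, _, rfl⟩
  exact ⟨fun t => s t.1, by simpa using Finset.sum_attach (Finset.Ico α β) (fun t => c t (s t))⟩

lemma sumSet_nonempty (c : ℕ → P.State → ℝ) {α β : ℕ} {a b : P.State}
    (h : b ∈ P.Reach α β a) : (P.SumSet c α β a b).Nonempty := by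
  obtain ⟨s, hs, ha, hb⟩ := h
  exact ⟨_, s, hs, ha, hb, rfl⟩

lemma sumSet_reach {c : ℕ → P.State → ℝ} {α β : ℕ} {a b : P.State} {u : ℝ}
    (h : u ∈ P.SumSet c α β a b) : b ∈ P.Reach α β a := by
  obtain ⟨s, hs, ha, hb, _⟩ := h
  exact ⟨s, hs, ha, hb⟩

lemma Umax_eq (α β : ℕ) (a b : P.State) : P.Umax α β a b = sSup (P.SumSet P.U α β a b) := rfl

lemma Vmin_eq (α β : ℕ) (a b : P.State) : P.Vmin α β a b = sInf (P.SumSet P.V α β a b) := rfl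

lemma Umax_mem {α β : ℕ} {a b : P.State} (h : b ∈ P.Reach α β a) :
    P.Umax α β a b ∈ P.SumSet P.U α β a b :=
  (P.sumSet_nonempty P.U h).csSup_mem (P.sumSet_finite P.U α β a b)

lemma le_Umax {α β : ℕ} {a b : P.State} {u : ℝ} (h : u ∈ P.SumSet P.U α β a b) :
    u ≤ P.Umax α β a b :=
  le_csSup (P.sumSet_finite P.U α β a b).bddAbove h

lemma Vmin_mem {α β : ℕ} {a b : P.State} (h : b ∈ P.Reach α β a) :
    P.Vmin α β a b ∈ P.SumSet P.V α β a b :=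
  (P.sumSet_nonempty P.V h).csInf_mem (P.sumSet_finite P.V α β a b)

lemma Vmin_le {α β : ℕ} {a b : P.State} {v : ℝ} (h : v ∈ P.SumSet P.V α β a b) :
    P.Vmin α β a b ≤ v :=
  csInf_le (P.sumSet_finite P.V α β a b).bddBelow h

lemma reach_self {β : ℕ} {a : P.State} (h : a ∈ P.S β) : a ∈ P.Reach β β a := by
  refine ⟨fun _ => a, ⟨fun t h1 h2 => ?_, fun t h1 h2 => absurd (lt_of_le_of_lt h1 h2) (lt_irrefl _)⟩, rfl, rfl⟩
  obtain rfl : t = β := le_antisymm h2 h1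
  exact h

lemma reach_self_eq {β : ℕ} {a b : P.State} (h : b ∈ P.Reach β β a) : b = a := by
  obtain ⟨s, _, h1, h2⟩ := h
  rw [← h1, ← h2]

lemma sumSet_self (c : ℕ → P.State → ℝ) {β : ℕ} {a : P.State} (h : a ∈ P.S β) :
    P.SumSet c β β a a = {0} := by
  ext u
  constructor
  · rintro ⟨s, _, _, _, rfl⟩
    simp
  · rintro rfl
    obtain ⟨s, hs, h1, h2⟩ := P.reach_self h
    exact ⟨s, hs, h1, h2, by simp⟩

lemma Umax_self {β : ℕ} {a : P.State} (h : a ∈ P.S β) : P.Umax β β a a = 0 := by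
  rw [Umax_eq, P.sumSet_self P.U h, csSup_singleton]

lemma Vmin_self {β : ℕ} {a : P.State} (h : a ∈ P.S β) : P.Vmin β β a a = 0 := by
  rw [Vmin_eq, P.sumSet_self P.V h, csInf_singleton]

lemma sumSet_prepend (c : ℕ → P.State → ℝ) {t β : ℕ} {a a' b : P.State} {v : ℝ}
    (ht : t < β) (hs : a ∈ P.S t) (hf : a' ∈ P.F t a)
    (hv : v ∈ P.SumSet c (t + 1) β a' b) : c t a + v ∈ P.SumSet c t β a b := by
  obtain ⟨r, ⟨hr1, hr2⟩, hra, hrb, rfl⟩ := hv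
  refine ⟨fun u => if u = t then a else r u, ⟨?_, ?_⟩, by simp, ?_, ?_⟩
  · intro u hu1 hu2
    by_cases h : u = t
    · subst h; simpa using hs
    · simp only [h, if_false]
      exact hr1 u (by omega) hu2
  · intro u hu1 hu2
    by_cases h : u = t
    · subst h
      simp only [show ¬(u + 1 = u) by omega, if_false, if_pos rfl]
      rw [hra]; exact hf
    · simp only [show ¬(u + 1 = t) by omega, h, if_false]
      exact hr2 u (by omega) hu2
  · simp only [show ¬(β = t) by omega, if_false]; exact hrb
  · rw [Finset.sum_eq_sum_Ico_succ_bot ht]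
    congr 1
    · simp
    · refine Finset.sum_congr rfl (fun u hu => ?_)
      rw [Finset.mem_Ico] at hu
      simp only [if_neg (show ¬u = t by omega)]

lemma reach_prepend {t β : ℕ} {a a' b : P.State}
    (ht : t < β) (hs : a ∈ P.S t) (hf : a' ∈ P.F t a)
    (h : b ∈ P.Reach (t + 1) β a') : b ∈ P.Reach t β a :=
  P.sumSet_reach (P.sumSet_prepend P.U ht hs hf (P.sumSet_nonempty P.U h).choose_spec)

lemma Umax_prepend {t β : ℕ} {a a' b : P.State}
    (ht : t < β) (hs : a ∈ P.S t) (hf : a' ∈ P.F t a)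
    (h : b ∈ P.Reach (t + 1) β a') :
    P.U t a + P.Umax (t + 1) β a' b ≤ P.Umax t β a b :=
  P.le_Umax (P.sumSet_prepend P.U ht hs hf (P.Umax_mem h))

lemma Vmin_prepend {t β : ℕ} {a a' b : P.State}
    (ht : t < β) (hs : a ∈ P.S t) (hf : a' ∈ P.F t a)
    (h : b ∈ P.Reach (t + 1) β a') :
    P.Vmin t β a b ≤ P.V t a + P.Vmin (t + 1) β a' b :=
  P.Vmin_le (P.sumSet_prepend P.V ht hs hf (P.Vmin_mem h))

end SinglePhase
lemma singlePhase_telescope (f : ℕ → ℝ) {α β : ℕ} (h : α ≤ β) :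
    ∑ t ∈ Finset.Ico α β, (f (t + 1) - f t) = f β - f α := by
  induction β, h using Nat.le_induction with
  | base => simp
  | succ b hb ih => rw [Finset.sum_Ico_succ_top hb, ih]; ring

lemma singlePhase_lower_iff (a Pc y : ℝ) (ha : a < 0) : Pc + a * y ≤ 0 ↔ -Pc / a ≤ y := by
  rw [div_le_iff_of_neg ha]
  constructor <;> intro h <;> nlinarith

lemma singlePhase_upper_iff (a Pc y : ℝ) (ha : 0 < a) : Pc + a * y ≤ 0 ↔ y ≤ -Pc / a := by
  rw [le_div_iff₀ ha]
  constructor <;> intro h <;> nlinarith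

lemma singlePhase_sum_split (f g x : ℕ → ℝ) (T : Finset ℕ) (a a' : ℝ) :
    ∑ j ∈ T, (f j * a' - a * g j) * x j
      = a' * (∑ j ∈ T, f j * x j) - a * (∑ j ∈ T, g j * x j) := by
  rw [Finset.mul_sum, Finset.mul_sum, ← Finset.sum_sub_distrib]
  exact Finset.sum_congr rfl (fun j _ => by ring)

lemma singlePhase_h3_convert (a a' w0 w0' SA SB vm um : ℝ) (ha : a < 0) (ha' : 0 < a')
    (h : a' * a * (vm - um) + w0 * a' - a * w0' + (a' * SA - a * SB) ≤ 0) :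
    -(w0 + SA) / a - vm ≤ -(w0' + SB) / a' - um := by
  have e1 : -(w0 + SA) / a * a = -(w0 + SA) := div_mul_cancel₀ _ (ne_of_lt ha)
  have e2 : -(w0' + SB) / a' * a' = -(w0' + SB) := div_mul_cancel₀ _ (ne_of_gt ha')
  have haa : a * a' < 0 := mul_neg_of_neg_of_pos ha ha'
  nlinarith [h, e1, e2, haa]

namespace SinglePhase

variable (P : SinglePhase)

/-- Trace of the inventory levels generated by a policy along a state trajectory. -/
noncomputable def yOf (π : ℕ → P.State → ℝ → ℝ) (s : ℕ → P.State) : ℕ → ℝ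
  | 0 => 0
  | (t + 1) => yOf π s t + π t (s t) (yOf π s t)

/-- Gluing a prefix and a suffix trajectory at time `α`. -/
def glueT (α : ℕ) (p q : ℕ → P.State) : ℕ → P.State := fun t => if t < α then p t else q t

lemma glue_compat {α m : ℕ} {p q : ℕ → P.State} (hα : 1 ≤ α) (hαm : α ≤ m)
    (hp : P.EnvCompat 0 (α - 1) p) (hq : P.EnvCompat α m q)
    (hf : q α ∈ P.F (α - 1) (p (α - 1))) :
    P.EnvCompat 0 m (P.glueT α p q) ∧ P.glueT α p q 0 = p 0 ∧ P.glueT α p q m = q m := by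
  refine ⟨⟨?_, ?_⟩, ?_, ?_⟩
  · intro t _ h2
    by_cases h : t < α
    · simpa [glueT, h] using hp.1 t (by omega) (by omega)
    · simpa [glueT, h] using hq.1 t (by omega) h2
  · intro t _ h2
    rcases lt_trichotomy (t + 1) α with h | h | h
    · have h' : t < α := by omega
      simpa [glueT, h, h'] using hp.2 t (by omega) (by omega)
    · have h' : t < α := by omega
      simp only [glueT, if_neg (show ¬ t + 1 < α by omega), if_pos h', h]
      rw [show t = α - 1 by omega]
      simpa using hf
    · have h' : ¬ t < α := by omega
      simpa [glueT, h', show ¬ t + 1 < α by omega] using hq.2 t (by omega) h2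
  · simp [glueT, show (0:ℕ) < α by omega]
  · simp [glueT, show ¬ m < α by omega]

lemma glue_sum (c : ℕ → P.State → ℝ) {α m : ℕ} (p q : ℕ → P.State) :
    ∑ t ∈ Finset.Ico α m, c t (P.glueT α p q t) = ∑ t ∈ Finset.Ico α m, c t (q t) := by
  refine Finset.sum_congr rfl (fun t ht => ?_)
  rw [Finset.mem_Ico] at ht
  simp [glueT, show ¬ t < α by omega]

lemma glue_prefix {α : ℕ} (p q : ℕ → P.State) {t : ℕ} (h : t < α) :
    P.glueT α p q t = p t := by simp [glueT, h]

/-- The threshold value determined by row `i` of the final constraint matrix. -/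
noncomputable def Bval (sm : P.State) (i : ℕ) : ℝ :=
  -(P.W sm i 0 + ∑ j ∈ Finset.Icc 1 (P.K - 1), P.W sm i j * P.xvec j) / P.W sm i P.K

/-- Lower thresholds for the inventory at time `t` in state `s`. -/
def LSet (t : ℕ) (s : P.State) : Set ℝ :=
  {r | ∃ i sm, 1 ≤ i ∧ i ≤ P.n ∧ sm ∈ P.Reach t P.m s ∧ P.W sm i P.K < 0 ∧
    r = P.Bval sm i - P.Vmin t P.m s sm}

/-- Upper thresholds for the inventory at time `t` in state `s`. -/
def USet (t : ℕ) (s : P.State) : Set ℝ :=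
  {r | ∃ i sm, 1 ≤ i ∧ i ≤ P.n ∧ sm ∈ P.Reach t P.m s ∧ 0 < P.W sm i P.K ∧
    r = P.Bval sm i - P.Umax t P.m s sm}

lemma lSet_finite (t : ℕ) (s : P.State) : (P.LSet t s).Finite := by
  haveI := P.fintype_state
  apply Set.Finite.subset (((Set.finite_Icc 1 P.n).prod (Set.finite_univ (α := P.State))).image
    (fun p => P.Bval p.2 p.1 - P.Vmin t P.m s p.2))
  rintro r ⟨i, sm, h1, h2, _, _, rfl⟩
  exact ⟨(i, sm), ⟨⟨h1, h2⟩, trivial⟩, rfl⟩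

/-- The set of candidate next inventory levels. -/
def NextSet (t : ℕ) (s : P.State) (y : ℝ) : Set ℝ :=
  insert (y + P.U t s) {r | ∃ s' ∈ P.F t s, r ∈ P.LSet (t + 1) s'}

lemma nextSet_finite (t : ℕ) (s : P.State) (y : ℝ) : (P.NextSet t s y).Finite := by
  haveI := P.fintype_state
  refine Set.Finite.insert _ (Set.Finite.subset (Set.finite_iUnion
    (fun s' : P.State => P.lSet_finite (t + 1) s')) ?_)
  rintro r ⟨s', _, hr⟩
  exact Set.mem_iUnion.2 ⟨s', hr⟩

lemma nextSet_nonempty (t : ℕ) (s : P.State) (y : ℝ) : (P.NextSet t s y).Nonempty :=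
  ⟨_, Set.mem_insert _ _⟩

/-- The candidate feasible policy: move to the largest mandatory lower threshold. -/
noncomputable def policy : ℕ → P.State → ℝ → ℝ :=
  fun t s y => sSup (P.NextSet t s y) - y

lemma policy_sup (t : ℕ) (s : P.State) (y : ℝ) :
    y + P.policy t s y = sSup (P.NextSet t s y) := by
  simp [policy]

lemma Bval_def (sm : P.State) (i : ℕ) :
    P.Bval sm i = -(P.W sm i 0 + ∑ j ∈ Finset.Icc 1 (P.K - 1), P.W sm i j * P.xvec j)
      / P.W sm i P.K := rfl

lemma mem_nextSet_left (t : ℕ) (s : P.State) (y : ℝ) :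
    y + P.U t s ∈ P.NextSet t s y := Set.mem_insert _ _

lemma mem_nextSet_right {t : ℕ} {s s' : P.State} {r : ℝ} (y : ℝ)
    (hs' : s' ∈ P.F t s) (hr : r ∈ P.LSet (t + 1) s') : r ∈ P.NextSet t s y :=
  Set.mem_insert_iff.2 (Or.inr ⟨s', hs', hr⟩)

lemma nextSet_sup_mem (t : ℕ) (s : P.State) (y : ℝ) :
    sSup (P.NextSet t s y) ∈ P.NextSet t s y :=
  (P.nextSet_nonempty t s y).csSup_mem (P.nextSet_finite t s y)

lemma le_nextSet_sup {t : ℕ} {s : P.State} {y r : ℝ} (h : r ∈ P.NextSet t s y) :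
    r ≤ sSup (P.NextSet t s y) :=
  le_csSup (P.nextSet_finite t s y).bddAbove h

end SinglePhase
/-- **Lemma (Phase reduction in the last phase).** A single-phase feasibility problem with
linear side constraints admits a feasible policy if and only if the three displayed families
of linear inequalities hold. -/
theorem singlePhase_feasible_iff (P : SinglePhase) (hP : P.IsValid) :
    (∃ π : ℕ → P.State → ℝ → ℝ, P.FeasiblePolicy π) ↔
    ((∀ sm ∈ P.Reach 0 P.m P.σ0, ∀ i, 1 ≤ i → i ≤ P.n → 0 < P.W sm i P.K →
        P.W sm i P.K * P.Umax 0 P.m P.σ0 sm + P.W sm i 0 +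
          (∑ j ∈ Finset.Icc 1 (P.K - 1), P.W sm i j * P.xvec j) ≤ 0) ∧
     (∀ sm ∈ P.Reach 0 P.m P.σ0, ∀ i, 1 ≤ i → i ≤ P.n → P.W sm i P.K < 0 →
        P.W sm i P.K * P.Vmin 0 P.m P.σ0 sm + P.W sm i 0 +
          (∑ j ∈ Finset.Icc 1 (P.K - 1), P.W sm i j * P.xvec j) ≤ 0) ∧
     (∀ α, 1 ≤ α → α ≤ P.m → ∀ i i', 1 ≤ i → i ≤ P.n → 1 ≤ i' → i' ≤ P.n →
        ∀ sα s'α : P.State,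
          (∃ sp ∈ P.Reach 0 (α - 1) P.σ0, sα ∈ P.F (α - 1) sp ∧ s'α ∈ P.F (α - 1) sp) →
          ∀ sm ∈ P.Reach α P.m sα, ∀ s'm ∈ P.Reach α P.m s'α,
            P.W sm i P.K < 0 → 0 < P.W s'm i' P.K →
            P.W s'm i' P.K * P.W sm i P.K *
                (P.Vmin α P.m sα sm - P.Umax α P.m s'α s'm) +
              P.W sm i 0 * P.W s'm i' P.K - P.W sm i P.K * P.W s'm i' 0 +
              (∑ j ∈ Finset.Icc 1 (P.K - 1),
                (P.W sm i j * P.W s'm i' P.K - P.W sm i P.K * P.W s'm i' j) * P.xvec j) ≤ 0)) := by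
  obtain ⟨hm, hK, hn, hS, hσ0, hF, hUV, hW⟩ := hP
  constructor
  · rintro ⟨π, hπ⟩
    have main : ∀ s : ℕ → P.State, P.EnvCompat 0 P.m s → s 0 = P.σ0 →
        (∀ t, t < P.m → P.U t (s t) ≤ P.yOf π s (t + 1) - P.yOf π s t ∧
          P.yOf π s (t + 1) - P.yOf π s t ≤ P.V t (s t)) ∧
        (∀ i, 1 ≤ i → i ≤ P.n →
          P.W (s P.m) i 0 + (∑ j ∈ Finset.Icc 1 (P.K - 1), P.W (s P.m) i j * P.xvec j) +
            P.W (s P.m) i P.K * P.yOf π s P.m ≤ 0) :=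
      fun s hc h0 => hπ s (P.yOf π s) hc h0 rfl (fun t _ => rfl)
    refine ⟨?_, ?_, ?_⟩
    · -- family (1)
      intro sm hsm i hi1 hi2 hpos
      obtain ⟨s, hc, h0, hconc, hsum⟩ := P.Umax_mem hsm
      obtain ⟨hb, hfin⟩ := main s hc h0
      have hy : P.Umax 0 P.m P.σ0 sm ≤ P.yOf π s P.m := by
        have ht1 := singlePhase_telescope (P.yOf π s) (Nat.zero_le P.m)
        have h2 : ∑ t ∈ Finset.Ico 0 P.m, P.U t (s t)
            ≤ ∑ t ∈ Finset.Ico 0 P.m, (P.yOf π s (t + 1) - P.yOf π s t) :=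
          Finset.sum_le_sum (fun t ht => (hb t (Finset.mem_Ico.1 ht).2).1)
        have hy0 : P.yOf π s 0 = 0 := rfl
        rw [hsum]
        linarith
      have hfi := hfin i hi1 hi2
      rw [hconc] at hfi
      have k := mul_le_mul_of_nonneg_left hy hpos.le
      linarith
    · -- family (2)
      intro sm hsm i hi1 hi2 hneg
      obtain ⟨s, hc, h0, hconc, hsum⟩ := P.Vmin_mem hsm
      obtain ⟨hb, hfin⟩ := main s hc h0
      have hy : P.yOf π s P.m ≤ P.Vmin 0 P.m P.σ0 sm := by
        have ht1 := singlePhase_telescope (P.yOf π s) (Nat.zero_le P.m)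
        have h2 : ∑ t ∈ Finset.Ico 0 P.m, (P.yOf π s (t + 1) - P.yOf π s t)
            ≤ ∑ t ∈ Finset.Ico 0 P.m, P.V t (s t) :=
          Finset.sum_le_sum (fun t ht => (hb t (Finset.mem_Ico.1 ht).2).2)
        have hy0 : P.yOf π s 0 = 0 := rfl
        rw [hsum]
        linarith
      have hfi := hfin i hi1 hi2
      rw [hconc] at hfi
      have k := mul_le_mul_of_nonpos_left hy hneg.le
      linarith
    · -- family (3)
      intro α hα1 hαm i i' hi1 hi2 hi'1 hi'2 sα s'α hsib sm hsm s'm hs'm hneg hpos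
      obtain ⟨sp, hsp, hfα, hf'α⟩ := hsib
      obtain ⟨p, hpc, hp0, hpe⟩ := hsp
      obtain ⟨q, hqc, hq0, hqe, hqsum⟩ := P.Vmin_mem hsm
      obtain ⟨q', hq'c, hq'0, hq'e, hq'sum⟩ := P.Umax_mem hs'm
      have hf1 : q α ∈ P.F (α - 1) (p (α - 1)) := by rw [hq0, hpe]; exact hfα
      have hf2 : q' α ∈ P.F (α - 1) (p (α - 1)) := by rw [hq'0, hpe]; exact hf'α
      obtain ⟨hg1c, hg10, hg1m⟩ := P.glue_compat hα1 hαm hpc hqc hf1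
      obtain ⟨hg2c, hg20, hg2m⟩ := P.glue_compat hα1 hαm hpc hq'c hf2
      obtain ⟨hb1, hfin1⟩ := main _ hg1c (by rw [hg10, hp0])
      obtain ⟨hb2, hfin2⟩ := main _ hg2c (by rw [hg20, hp0])
      have hyeq : ∀ t, t ≤ α → P.yOf π (P.glueT α p q) t = P.yOf π (P.glueT α p q') t := by
        intro t
        induction t with
        | zero => intro _; rfl
        | succ t ih =>
          intro h
          have h1 : t < α := by omega
          have hseq : P.glueT α p q t = P.glueT α p q' t := by
            rw [P.glue_prefix p q h1, P.glue_prefix p q' h1]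
          show P.yOf π _ t + π t _ _ = P.yOf π _ t + π t _ _
          rw [ih (by omega), hseq]
      have hV : P.yOf π (P.glueT α p q) P.m - P.yOf π (P.glueT α p q) α
          ≤ P.Vmin α P.m sα sm := by
        have ht1 := singlePhase_telescope (P.yOf π (P.glueT α p q)) hαm
        have h2 : ∑ t ∈ Finset.Ico α P.m,
              (P.yOf π (P.glueT α p q) (t + 1) - P.yOf π (P.glueT α p q) t)
            ≤ ∑ t ∈ Finset.Ico α P.m, P.V t (P.glueT α p q t) :=
          Finset.sum_le_sum (fun t ht => (hb1 t (Finset.mem_Ico.1 ht).2).2)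
        rw [hqsum, ← P.glue_sum P.V p q]
        linarith
      have hU : P.Umax α P.m s'α s'm
          ≤ P.yOf π (P.glueT α p q') P.m - P.yOf π (P.glueT α p q') α := by
        have ht1 := singlePhase_telescope (P.yOf π (P.glueT α p q')) hαm
        have h2 : ∑ t ∈ Finset.Ico α P.m, P.U t (P.glueT α p q' t)
            ≤ ∑ t ∈ Finset.Ico α P.m,
              (P.yOf π (P.glueT α p q') (t + 1) - P.yOf π (P.glueT α p q') t) :=
          Finset.sum_le_sum (fun t ht => (hb2 t (Finset.mem_Ico.1 ht).2).1)
        rw [hq'sum, ← P.glue_sum P.U p q']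
        linarith
      rw [← hyeq α le_rfl] at hU
      have he1 : P.glueT α p q P.m = sm := by rw [hg1m, hqe]
      have he2 : P.glueT α p q' P.m = s'm := by rw [hg2m, hq'e]
      have hc1 := hfin1 i hi1 hi2
      have hc2 := hfin2 i' hi'1 hi'2
      rw [he1] at hc1
      rw [he2] at hc2
      rw [singlePhase_sum_split (fun j => P.W sm i j) (fun j => P.W s'm i' j) P.xvec
        (Finset.Icc 1 (P.K - 1)) (P.W sm i P.K) (P.W s'm i' P.K)]
      have K1 := mul_le_mul_of_nonneg_left hc1 hpos.le
      have K2 := mul_le_mul_of_nonpos_left hc2 hneg.le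
      have K3 := mul_le_mul_of_nonneg_left (mul_le_mul_of_nonpos_left hV hneg.le) hpos.le
      have K4 := mul_le_mul_of_nonpos_left (mul_le_mul_of_nonneg_left hU hpos.le) hneg.le
      nlinarith [K1, K2, K3, K4]
  · rintro ⟨H1, H2, H3⟩
    refine ⟨P.policy, ?_⟩
    intro s y hcompat hs0 hy0 hrec
    have hSt : ∀ t, t ≤ P.m → s t ∈ P.S t := fun t ht => hcompat.1 t (Nat.zero_le t) ht
    have hreach0 : ∀ t, t ≤ P.m → s t ∈ P.Reach 0 t P.σ0 := by
      intro t ht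
      exact ⟨s, ⟨fun u hu1 hu2 => hcompat.1 u hu1 (le_trans hu2 ht),
        fun u hu1 hu2 => hcompat.2 u hu1 (lt_of_lt_of_le hu2 ht)⟩, hs0, rfl⟩
    have hy' : ∀ t, t < P.m → y (t + 1) = sSup (P.NextSet t (s t) (y t)) := by
      intro t ht
      rw [hrec t ht]
      exact P.policy_sup t (s t) (y t)
    have inv : ∀ t, t ≤ P.m →
        (∀ r ∈ P.LSet t (s t), r ≤ y t) ∧ (∀ r ∈ P.USet t (s t), y t ≤ r) := by
      intro t
      induction t with
      | zero =>
        intro _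
        constructor
        · rintro r ⟨i, sm, hi1, hi2, hsm, hneg, rfl⟩
          rw [hs0] at hsm
          have h2 := H2 sm hsm i hi1 hi2 hneg
          have h3 : -(P.W sm i 0 + ∑ j ∈ Finset.Icc 1 (P.K - 1), P.W sm i j * P.xvec j)
              / P.W sm i P.K ≤ P.Vmin 0 P.m P.σ0 sm :=
            (singlePhase_lower_iff _ _ _ hneg).1 (by linarith)
          rw [hs0, hy0, P.Bval_def]
          linarith
        · rintro r ⟨i, sm, hi1, hi2, hsm, hpos, rfl⟩
          rw [hs0] at hsm
          have h1 := H1 sm hsm i hi1 hi2 hpos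
          have h3 : P.Umax 0 P.m P.σ0 sm ≤
              -(P.W sm i 0 + ∑ j ∈ Finset.Icc 1 (P.K - 1), P.W sm i j * P.xvec j)
              / P.W sm i P.K :=
            (singlePhase_upper_iff _ _ _ hpos).1 (by linarith)
          rw [hs0, hy0, P.Bval_def]
          linarith
      | succ t ih =>
        intro h
        have htm : t < P.m := h
        have ihh := ih htm.le
        have hstS : s t ∈ P.S t := hSt t htm.le
        have hnext : s (t + 1) ∈ P.F t (s t) := hcompat.2 t (Nat.zero_le t) htm
        constructor
        · rintro r ⟨i, sm, hi1, hi2, hsm, hneg, rfl⟩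
          rw [hy' t htm]
          exact P.le_nextSet_sup
            (P.mem_nextSet_right (y t) hnext ⟨i, sm, hi1, hi2, hsm, hneg, rfl⟩)
        · rintro r ⟨i', s'm, hi'1, hi'2, hs'm, hpos, rfl⟩
          rw [hy' t htm]
          rcases Set.mem_insert_iff.1 (P.nextSet_sup_mem t (s t) (y t)) with hcase | hcase
          · rw [hcase]
            have hr : s'm ∈ P.Reach t P.m (s t) := P.reach_prepend htm hstS hnext hs'm
            have hup := P.Umax_prepend htm hstS hnext hs'm
            have hiu := ihh.2 _ ⟨i', s'm, hi'1, hi'2, hr, hpos, rfl⟩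
            linarith
          · obtain ⟨s', hs', i, sm, hi1, hi2, hsm, hneg2, heq⟩ := hcase
            have hH := H3 (t + 1) (by omega) (by omega) i i' hi1 hi2 hi'1 hi'2
              s' (s (t + 1)) ⟨s t, hreach0 t htm.le, hs', hnext⟩
              sm hsm s'm hs'm hneg2 hpos
            rw [singlePhase_sum_split (fun j => P.W sm i j) (fun j => P.W s'm i' j) P.xvec
              (Finset.Icc 1 (P.K - 1)) (P.W sm i P.K) (P.W s'm i' P.K)] at hH
            have hkey := singlePhase_h3_convert _ _ _ _ _ _ _ _ hneg2 hpos hH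
            rw [heq, P.Bval_def, P.Bval_def]
            exact hkey
    refine ⟨?_, ?_⟩
    · intro t ht
      have ihh := inv t ht.le
      constructor
      · have hle := P.le_nextSet_sup (P.mem_nextSet_left t (s t) (y t))
        rw [hy' t ht]
        linarith
      · rw [hy' t ht]
        rcases Set.mem_insert_iff.1 (P.nextSet_sup_mem t (s t) (y t)) with hcase | hcase
        · rw [hcase]
          have := hUV t (s t) ht (hSt t ht.le)
          linarith
        · obtain ⟨s', hs', i, sm, hi1, hi2, hsm, hneg2, heq⟩ := hcase
          have hr : sm ∈ P.Reach t P.m (s t) :=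
            P.reach_prepend ht (hSt t ht.le) hs' hsm
          have hvp := P.Vmin_prepend ht (hSt t ht.le) hs' hsm
          have hil := ihh.1 _ ⟨i, sm, hi1, hi2, hr, hneg2, rfl⟩
          rw [heq]
          linarith
    · intro i hi1 hi2
      have ihh := inv P.m le_rfl
      have hsmS : s P.m ∈ P.S P.m := hSt P.m le_rfl
      have hz := hW (s P.m) hsmS i hi1 hi2
      rcases lt_trichotomy (P.W (s P.m) i P.K) 0 with ha | ha | ha
      · have hil := ihh.1 _ ⟨i, s P.m, hi1, hi2, P.reach_self hsmS, ha, rfl⟩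
        rw [P.Vmin_self hsmS, P.Bval_def] at hil
        have h2 := (singlePhase_lower_iff (P.W (s P.m) i P.K)
          (P.W (s P.m) i 0 + ∑ j ∈ Finset.Icc 1 (P.K - 1), P.W (s P.m) i j * P.xvec j)
          (y P.m) ha).2 (by linarith)
        linarith
      · exact absurd ha hz
      · have hiu := ihh.2 _ ⟨i, s P.m, hi1, hi2, P.reach_self hsmS, ha, rfl⟩
        rw [P.Umax_self hsmS, P.Bval_def] at hiu
        have h2 := (singlePhase_upper_iff (P.W (s P.m) i P.K)
          (P.W (s P.m) i 0 + ∑ j ∈ Finset.Icc 1 (P.K - 1), P.W (s P.m) i j * P.xvec j)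
          (y P.m) ha).2 (by linarith)
        linarith
end

section
/- Phase reduction theorem: let W be a K-phase minimax-MDP with K ≥ 2. Then W admits a feasible policy if and only if the following (K−1)-phase minimax-MDP Ŵ admits a feasible policy. Ŵ has horizon τ_{K−1}, grid 1 = τ₀ < τ₁ < … < τ_{K−1}, the same state sets, initial state, transition maps and action bounds restricted to times at most τ_{K−1}, the same constraint matrices for phases v ∈ {1,…,K−2}, and, at the end of phase K−1, for each s ∈ S_{τ_{K−1}}, the constraints on (1, x_1, …, x_{K−1}) (where x = (x_1,…,x_{K−1}) denotes the first K−1 coordinates of the inventory vector at time τ_{K−1}) consisting of: the original constraints W_{K−1}(s)_{i,0} + Σ_{j=1}^{K−1} W_{K−1}(s)_{i,j}·x_j ≤ 0 for i ∈ {1,…,n_{K−1}}, together with the following additional families: (1) for every s_{τ_K} ∈ F_{τ_{K−1}→τ_K}(s) and every i ∈ {1,…,n_K} with W_K(s_{τ_K})_{i,K} > 0: W_K(s_{τ_K})_{i,K}·U_{τ_{K−1}→τ_K}(s, s_{τ_K}) + W_K(s_{τ_K})_{i,0} + Σ_{j=1}^{K−1} W_K(s_{τ_K})_{i,j}·x_j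 ≤ 0; (2) for every s_{τ_K} ∈ F_{τ_{K−1}→τ_K}(s) and every i with W_K(s_{τ_K})_{i,K} < 0: W_K(s_{τ_K})_{i,K}·V_{τ_{K−1}→τ_K}(s, s_{τ_K}) + W_K(s_{τ_K})_{i,0} + Σ_{j=1}^{K−1} W_K(s_{τ_K})_{i,j}·x_j ≤ 0; (3) for every α ∈ {τ_{K−1}+1,…,τ_K}, all i, i′ ∈ {1,…,n_K}, all s_α, s′_α ∈ S_α for which there exists s_{α−1} ∈ F_{τ_{K−1}→α−1}(s) with s_α ∈ F_{α−1}(s_{α−1}) and s′_α ∈ F_{α−1}(s_{α−1}), and all s_{τ_K} ∈ F_{α→τ_K}(s_α), s′_{τ_K} ∈ F_{α→τ_K}(s′_α) with W_K(s_{τ_K})_{i,K} < 0 and W_K(s′_{τ_K})_{i′,K} > 0: W_K(s′_{τ_K})_{i′,K}·W_K(s_{τ_K})_{i,K}·[V_{α→τ_K}(s_α, s_{τ_K}) − U_{α→τ_K}(s′_α, s′_{τ_K})] + W_K(s_{τ_K})_{i,0}·W_K(s′_{τ_K})_{i′,K} − W_K(s_{τ_K})_{i,K}·W_K(s′_{τ_K})_{i′,0}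 + Σ_{j=1}^{K−1} [W_K(s_{τ_K})_{i,j}·W_K(s′_{τ_K})_{i′,K} − W_K(s_{τ_K})_{i,K}·W_K(s′_{τ_K})_{i′,j}]·x_j ≤ 0. -/
/-- A multi-phase minimax-MDP. Inventory vectors are represented as functions `ℕ → ℝ`
whose relevant coordinates are `1,…,K`. -/
structure MultiPhaseMDP where
  /-- time horizon -/
  T : ℕ
  /-- number of phases -/
  K : ℕ
  /-- the grid vector `τ₀ = 1 < τ₁ < … < τ_K = T` -/
  grid : ℕ → ℕ
  /-- ambient type of environment states -/
  State : Type
  /-- the ambient type of states is finite -/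
  fintype_state : Fintype State
  /-- the set of environment states available at each time -/
  S : ℕ → Set State
  /-- the initial environment state -/
  s1 : State
  /-- the environment state transition map -/
  F : ℕ → State → Set State
  /-- lower action bounds -/
  U : ℕ → State → ℝ
  /-- upper action bounds -/
  V : ℕ → State → ℝ
  /-- the number of constraints at the end of each phase -/
  n : ℕ → ℕ
  /-- the constraint matrices: `W v s i j` for phase `v`, state `s`, row `i ∈ {1,…,n v}`,
  column `j ∈ {0,…,K}` -/
  W : ℕ → State → ℕ → ℕ → ℝ

namespace MultiPhaseMDP

variable (M : MultiPhaseMDP)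

/-- The structural hypotheses on a multi-phase minimax-MDP. -/
def IsValid : Prop :=
  1 ≤ M.K ∧ M.grid 0 = 1 ∧ M.grid M.K = M.T ∧
  (∀ v, v < M.K → M.grid v < M.grid (v + 1)) ∧
  (∀ t, 1 ≤ t → t ≤ M.T → (M.S t).Nonempty) ∧
  M.s1 ∈ M.S 1 ∧
  (∀ t s, 1 ≤ t → t + 1 ≤ M.T → s ∈ M.S t → (M.F t s).Nonempty ∧ M.F t s ⊆ M.S (t + 1)) ∧
  (∀ t s, 1 ≤ t → t + 1 ≤ M.T → s ∈ M.S t → M.U t s ≤ M.V t s) ∧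
  (∀ v, 1 ≤ v → v ≤ M.K → 1 ≤ M.n v) ∧
  (∀ v, 1 ≤ v → v ≤ M.K → ∀ s ∈ M.S (M.grid v), ∀ i, 1 ≤ i → i ≤ M.n v → M.W v s i v ≠ 0)

/-- A `π`-compatible trajectory on `[1, m]` with phases `1,…,Kb`: the environment evolves
compatibly, the inventory vector starts at `0`, and during phase `v` only the `v`-th
coordinate is incremented by the chosen action. -/
def Compat (π : ℕ → M.State → (ℕ → ℝ) → ℝ) (m Kb : ℕ)
    (s : ℕ → M.State) (x : ℕ → ℕ → ℝ) : Prop :=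
  (∀ j, x 1 j = 0) ∧
  s 1 = M.s1 ∧
  (∀ t, 1 ≤ t → t ≤ m → s t ∈ M.S t) ∧
  (∀ t, 1 ≤ t → t < m → s (t + 1) ∈ M.F t (s t)) ∧
  (∀ v, 1 ≤ v → v ≤ Kb → ∀ t, M.grid (v - 1) ≤ t → t < M.grid v → ∀ j,
    x (t + 1) j = x t j + (if j = v then π t (s t) (x t) else 0))

/-- Feasibility of the full `K`-phase instance: every `π`-compatible trajectory obeys the
action bounds and, at the end of each phase `v`, the linear constraints given by `W v`. -/
def FeasiblePolicy (π : ℕ → M.State → (ℕ → ℝ) → ℝ) : Prop :=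
  ∀ s x, M.Compat π M.T M.K s x →
    (∀ t, 1 ≤ t → t < M.T →
      M.U t (s t) ≤ π t (s t) (x t) ∧ π t (s t) (x t) ≤ M.V t (s t)) ∧
    (∀ v, 1 ≤ v → v ≤ M.K → ∀ i, 1 ≤ i → i ≤ M.n v →
      M.W v (s (M.grid v)) i 0 +
        (∑ j ∈ Finset.Icc 1 M.K, M.W v (s (M.grid v)) i j * x (M.grid v) j) ≤ 0)

/-- A compatible environment state trajectory on `[α, β]`. -/
def EnvCompat (α β : ℕ) (s : ℕ → M.State) : Prop :=
  (∀ t, α ≤ t → t ≤ β → s t ∈ M.S t) ∧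
  (∀ t, α ≤ t → t < β → s (t + 1) ∈ M.F t (s t))

/-- `F_{α→β}(a)`. -/
def Reach (α β : ℕ) (a : M.State) : Set M.State :=
  {b | ∃ s : ℕ → M.State, M.EnvCompat α β s ∧ s α = a ∧ s β = b}

/-- `U_{α→β}(a, b)`. -/
noncomputable def Umax (α β : ℕ) (a b : M.State) : ℝ :=
  sSup {u | ∃ s : ℕ → M.State, M.EnvCompat α β s ∧ s α = a ∧ s β = b ∧
    u = ∑ t ∈ Finset.Ico α β, M.U t (s t)}

/-- `V_{α→β}(a, b)`. -/
noncomputable def Vmin (α β : ℕ) (a b : M.State) : ℝ :=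
  sInf {v | ∃ s : ℕ → M.State, M.EnvCompat α β s ∧ s α = a ∧ s β = b ∧
    v = ∑ t ∈ Finset.Ico α β, M.V t (s t)}

/-- Feasibility of the reduced `(K−1)`-phase instance `Ŵ`: trajectories run up to time
`τ_{K−1}` through phases `1,…,K−1`; action bounds hold up to time `τ_{K−1} − 1`; the original
constraints of phases `1,…,K−2` hold; and at time `τ_{K−1}` the original phase-(K−1)
constraints hold together with the three additional families of linear constraints coming
from the future-imposed conditions of the final phase. -/
def FeasibleReduced (π : ℕ → M.State → (ℕ → ℝ) → ℝ) : Prop :=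
  ∀ s x, M.Compat π (M.grid (M.K - 1)) (M.K - 1) s x →
    (∀ t, 1 ≤ t → t < M.grid (M.K - 1) →
      M.U t (s t) ≤ π t (s t) (x t) ∧ π t (s t) (x t) ≤ M.V t (s t)) ∧
    (∀ v, 1 ≤ v → v ≤ M.K - 2 → ∀ i, 1 ≤ i → i ≤ M.n v →
      M.W v (s (M.grid v)) i 0 +
        (∑ j ∈ Finset.Icc 1 (M.K - 1), M.W v (s (M.grid v)) i j * x (M.grid v) j) ≤ 0) ∧
    (∀ i, 1 ≤ i → i ≤ M.n (M.K - 1) →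
      M.W (M.K - 1) (s (M.grid (M.K - 1))) i 0 +
        (∑ j ∈ Finset.Icc 1 (M.K - 1),
          M.W (M.K - 1) (s (M.grid (M.K - 1))) i j * x (M.grid (M.K - 1)) j) ≤ 0) ∧
    (∀ sm ∈ M.Reach (M.grid (M.K - 1)) (M.grid M.K) (s (M.grid (M.K - 1))),
      ∀ i, 1 ≤ i → i ≤ M.n M.K → 0 < M.W M.K sm i M.K →
        M.W M.K sm i M.K * M.Umax (M.grid (M.K - 1)) (M.grid M.K) (s (M.grid (M.K - 1))) sm +
          M.W M.K sm i 0 +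
          (∑ j ∈ Finset.Icc 1 (M.K - 1), M.W M.K sm i j * x (M.grid (M.K - 1)) j) ≤ 0) ∧
    (∀ sm ∈ M.Reach (M.grid (M.K - 1)) (M.grid M.K) (s (M.grid (M.K - 1))),
      ∀ i, 1 ≤ i → i ≤ M.n M.K → M.W M.K sm i M.K < 0 →
        M.W M.K sm i M.K * M.Vmin (M.grid (M.K - 1)) (M.grid M.K) (s (M.grid (M.K - 1))) sm +
          M.W M.K sm i 0 +
          (∑ j ∈ Finset.Icc 1 (M.K - 1), M.W M.K sm i j * x (M.grid (M.K - 1)) j) ≤ 0) ∧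
    (∀ α, M.grid (M.K - 1) + 1 ≤ α → α ≤ M.grid M.K →
      ∀ i i', 1 ≤ i → i ≤ M.n M.K → 1 ≤ i' → i' ≤ M.n M.K →
      ∀ sα s'α : M.State,
        (∃ sp ∈ M.Reach (M.grid (M.K - 1)) (α - 1) (s (M.grid (M.K - 1))),
          sα ∈ M.F (α - 1) sp ∧ s'α ∈ M.F (α - 1) sp) →
        ∀ sm ∈ M.Reach α (M.grid M.K) sα, ∀ s'm ∈ M.Reach α (M.grid M.K) s'α,
          M.W M.K sm i M.K < 0 → 0 < M.W M.K s'm i' M.K →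
          M.W M.K s'm i' M.K * M.W M.K sm i M.K *
              (M.Vmin α (M.grid M.K) sα sm - M.Umax α (M.grid M.K) s'α s'm) +
            M.W M.K sm i 0 * M.W M.K s'm i' M.K - M.W M.K sm i M.K * M.W M.K s'm i' 0 +
            (∑ j ∈ Finset.Icc 1 (M.K - 1),
              (M.W M.K sm i j * M.W M.K s'm i' M.K -
                M.W M.K sm i M.K * M.W M.K s'm i' j) * x (M.grid (M.K - 1)) j) ≤ 0)

section Aux
open Finset

variable {M : MultiPhaseMDP}

lemma grid_mono (hM : M.IsValid) : ∀ v w, v ≤ w → w ≤ M.K → M.grid v ≤ M.grid w := by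
  intro v w hvw hwK
  induction w with
  | zero =>
    have : v = 0 := by omega
    subst this; exact le_rfl
  | succ w ih =>
    rcases Nat.lt_or_ge v (w+1) with h | h
    · have h1 : M.grid v ≤ M.grid w := by
        rcases Nat.eq_or_lt_of_le (Nat.le_of_lt_succ h) with rfl | hlt
        · exact le_rfl
        · exact ih (Nat.le_of_lt_succ h) (by omega)
      exact h1.trans (le_of_lt (hM.2.2.2.1 w (by omega)))
    · have : v = w + 1 := by omega
      subst this; exact le_rfl

lemma grid_one_le (hM : M.IsValid) {v : ℕ} (hv : v ≤ M.K) : 1 ≤ M.grid v := by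
  have h := grid_mono hM 0 v (Nat.zero_le _) hv
  have h0 := hM.2.1
  omega

lemma exists_phase (hM : M.IsValid) :
    ∀ Kb, Kb ≤ M.K → ∀ t, 1 ≤ t → t < M.grid Kb →
      ∃ v, 1 ≤ v ∧ v ≤ Kb ∧ M.grid (v - 1) ≤ t ∧ t < M.grid v := by
  intro Kb
  induction Kb with
  | zero => intro _ t ht1 ht2; rw [hM.2.1] at ht2; omega
  | succ Kb ih =>
    intro hK t ht1 ht2
    rcases Nat.lt_or_ge t (M.grid Kb) with h | h
    · obtain ⟨v, h1, h2, h3, h4⟩ := ih (by omega) t ht1 h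
      exact ⟨v, h1, by omega, h3, h4⟩
    · exact ⟨Kb + 1, by omega, le_rfl, by simpa using h, ht2⟩

/-- coordinate `j` stays `0` throughout a compatible trajectory if `j` is not a phase index. -/
lemma compat_coord_zero (hM : M.IsValid) {π : ℕ → M.State → (ℕ → ℝ) → ℝ} {m Kb : ℕ}
    {s : ℕ → M.State} {x : ℕ → ℕ → ℝ} (hc : M.Compat π m Kb s x) (hKb : Kb ≤ M.K)
    {j : ℕ} (hj : ∀ v, 1 ≤ v → v ≤ Kb → j ≠ v) :
    ∀ t, 1 ≤ t → t ≤ M.grid Kb → x t j = 0 := by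
  intro t
  induction t with
  | zero => omega
  | succ t ih =>
    intro _ ht2
    rcases Nat.eq_or_lt_of_le (by omega : 1 ≤ t + 1) with h | h
    · rw [← h]; exact hc.1 j
    · have ht1 : 1 ≤ t := by omega
      obtain ⟨v, hv1, hv2, hv3, hv4⟩ := exists_phase hM Kb hKb t ht1 (by omega)
      rw [hc.2.2.2.2 v hv1 hv2 t hv3 hv4 j, if_neg (hj v hv1 hv2),
        ih ht1 (le_of_lt (by omega)), add_zero]

/-- The set of path sums is finite. -/
lemma sumSet_finite (M : MultiPhaseMDP) (g : ℕ → M.State → ℝ) (α β : ℕ) (a b : M.State) :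
    ({u | ∃ s : ℕ → M.State, M.EnvCompat α β s ∧ s α = a ∧ s β = b ∧
      u = ∑ t ∈ Finset.Ico α β, g t (s t)}).Finite := by
  classical
  letI := M.fintype_state
  apply Set.Finite.subset (Set.finite_range
    (fun h : {t : ℕ // t ∈ Finset.Ico α β} → M.State =>
      ∑ t ∈ (Finset.Ico α β).attach, g t.1 (h t)))
  rintro u ⟨s, _, _, _, rfl⟩
  refine ⟨fun t => s t.1, ?_⟩
  simpa using Finset.sum_attach (Finset.Ico α β) (fun t => g t (s t))

end Aux
section Aux2

variable {M : MultiPhaseMDP}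

lemma le_Umax {α β : ℕ} {a b : M.State} (s : ℕ → M.State) (h1 : M.EnvCompat α β s)
    (h2 : s α = a) (h3 : s β = b) :
    ∑ t ∈ Finset.Ico α β, M.U t (s t) ≤ M.Umax α β a b :=
  le_csSup (sumSet_finite M M.U α β a b).bddAbove ⟨s, h1, h2, h3, rfl⟩

lemma Umax_exists {α β : ℕ} {a b : M.State} (hb : b ∈ M.Reach α β a) :
    ∃ s : ℕ → M.State, M.EnvCompat α β s ∧ s α = a ∧ s β = b ∧
      M.Umax α β a b = ∑ t ∈ Finset.Ico α β, M.U t (s t) := by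
  obtain ⟨r, hr1, hr2, hr3⟩ := hb
  have hne : {u | ∃ s : ℕ → M.State, M.EnvCompat α β s ∧ s α = a ∧ s β = b ∧
      u = ∑ t ∈ Finset.Ico α β, M.U t (s t)}.Nonempty := ⟨_, r, hr1, hr2, hr3, rfl⟩
  exact hne.csSup_mem (sumSet_finite M M.U α β a b)

lemma Vmin_le {α β : ℕ} {a b : M.State} (s : ℕ → M.State) (h1 : M.EnvCompat α β s)
    (h2 : s α = a) (h3 : s β = b) :
    M.Vmin α β a b ≤ ∑ t ∈ Finset.Ico α β, M.V t (s t) :=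
  csInf_le (sumSet_finite M M.V α β a b).bddBelow ⟨s, h1, h2, h3, rfl⟩

lemma Vmin_exists {α β : ℕ} {a b : M.State} (hb : b ∈ M.Reach α β a) :
    ∃ s : ℕ → M.State, M.EnvCompat α β s ∧ s α = a ∧ s β = b ∧
      M.Vmin α β a b = ∑ t ∈ Finset.Ico α β, M.V t (s t) := by
  obtain ⟨r, hr1, hr2, hr3⟩ := hb
  have hne : {u | ∃ s : ℕ → M.State, M.EnvCompat α β s ∧ s α = a ∧ s β = b ∧
      u = ∑ t ∈ Finset.Ico α β, M.V t (s t)}.Nonempty := ⟨_, r, hr1, hr2, hr3, rfl⟩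
  exact hne.csInf_mem (sumSet_finite M M.V α β a b)

lemma envCompat_const {β : ℕ} {a : M.State} (ha : a ∈ M.S β) :
    M.EnvCompat β β (fun _ => a) := by
  constructor
  · intro t h1 h2
    have : t = β := le_antisymm h2 h1
    rw [this]; exact ha
  · intro t h1 h2; omega

lemma reach_self {β : ℕ} {a : M.State} (ha : a ∈ M.S β) : a ∈ M.Reach β β a :=
  ⟨fun _ => a, envCompat_const ha, rfl, rfl⟩

lemma Umax_refl {β : ℕ} {a : M.State} (ha : a ∈ M.S β) : M.Umax β β a a = 0 := by
  have hne : {u | ∃ s : ℕ → M.State, M.EnvCompat β β s ∧ s β = a ∧ s β = a ∧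
      u = ∑ t ∈ Finset.Ico β β, M.U t (s t)}.Nonempty :=
    ⟨_, (fun _ => a), envCompat_const ha, rfl, rfl, rfl⟩
  apply le_antisymm
  · apply csSup_le hne
    rintro u ⟨s, _, _, _, rfl⟩; simp
  · simpa using le_Umax (α := β) (β := β) (fun _ => a) (envCompat_const ha) rfl rfl

lemma Vmin_refl {β : ℕ} {a : M.State} (ha : a ∈ M.S β) : M.Vmin β β a a = 0 := by
  have hne : {u | ∃ s : ℕ → M.State, M.EnvCompat β β s ∧ s β = a ∧ s β = a ∧
      u = ∑ t ∈ Finset.Ico β β, M.V t (s t)}.Nonempty :=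
    ⟨_, (fun _ => a), envCompat_const ha, rfl, rfl, rfl⟩
  apply le_antisymm
  · simpa using Vmin_le (α := β) (β := β) (fun _ => a) (envCompat_const ha) rfl rfl
  · apply le_csInf hne
    rintro u ⟨s, _, _, _, rfl⟩; simp

/-- prepend one step to an environment trajectory -/
lemma envCompat_cons {t β : ℕ} {a b : M.State} (htβ : t < β) (ha : a ∈ M.S t)
    (hb : b ∈ M.F t a) {r : ℕ → M.State} (hr : M.EnvCompat (t+1) β r) (hrt : r (t+1) = b) :
    M.EnvCompat t β (fun u => if u ≤ t then a else r u) := by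
  constructor
  · intro u h1 h2
    by_cases h : u ≤ t
    · have hut : u = t := le_antisymm h h1
      simp only [if_pos h]; rw [hut]; exact ha
    · simp only [if_neg h]
      exact hr.1 u (by omega) h2
  · intro u h1 h2
    by_cases h : u ≤ t
    · have hut : u = t := le_antisymm h h1
      simp only [if_pos h, if_neg (show ¬ u + 1 ≤ t by omega)]
      rw [hut, hrt]; exact hut ▸ hb
    · simp only [if_neg h, if_neg (show ¬ u + 1 ≤ t by omega)]
      exact hr.2 u (by omega) h2

lemma reach_step {t β : ℕ} {a b sm : M.State} (htβ : t < β) (ha : a ∈ M.S t)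
    (hb : b ∈ M.F t a) (hsm : sm ∈ M.Reach (t+1) β b) : sm ∈ M.Reach t β a := by
  obtain ⟨r, hr, hr1, hr2⟩ := hsm
  refine ⟨fun u => if u ≤ t then a else r u, envCompat_cons htβ ha hb hr hr1, by simp, ?_⟩
  simp only [if_neg (show ¬ β ≤ t by omega)]
  exact hr2

lemma Umax_step {t β : ℕ} {a b sm : M.State} (htβ : t < β) (ha : a ∈ M.S t)
    (hb : b ∈ M.F t a) (hsm : sm ∈ M.Reach (t+1) β b) :
    M.U t a + M.Umax (t+1) β b sm ≤ M.Umax t β a sm := by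
  obtain ⟨r, hr, hr1, hr2, hr3⟩ := Umax_exists hsm
  have hle := le_Umax (α := t) (β := β) (a := a) (b := sm) (fun u => if u ≤ t then a else r u)
    (envCompat_cons htβ ha hb hr hr1) (by simp)
    (by simp only [if_neg (show ¬ β ≤ t by omega)]; exact hr2)
  have hsum : ∑ u ∈ Finset.Ico t β, M.U u (if u ≤ t then a else r u)
      = M.U t a + ∑ u ∈ Finset.Ico (t+1) β, M.U u (r u) := by
    rw [Finset.sum_eq_sum_Ico_succ_bot htβ]
    simp only [if_pos le_rfl]
    congr 1
    apply Finset.sum_congr rfl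
    intro u hu
    rw [Finset.mem_Ico] at hu
    rw [if_neg (by omega)]
  rw [hr3]
  calc M.U t a + ∑ u ∈ Finset.Ico (t+1) β, M.U u (r u)
      = ∑ u ∈ Finset.Ico t β, M.U u (if u ≤ t then a else r u) := hsum.symm
    _ ≤ M.Umax t β a sm := hle

lemma Vmin_step {t β : ℕ} {a b sm : M.State} (htβ : t < β) (ha : a ∈ M.S t)
    (hb : b ∈ M.F t a) (hsm : sm ∈ M.Reach (t+1) β b) :
    M.Vmin t β a sm ≤ M.V t a + M.Vmin (t+1) β b sm := by
  obtain ⟨r, hr, hr1, hr2, hr3⟩ := Vmin_exists hsm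
  have hle := Vmin_le (α := t) (β := β) (a := a) (b := sm) (fun u => if u ≤ t then a else r u)
    (envCompat_cons htβ ha hb hr hr1) (by simp)
    (by simp only [if_neg (show ¬ β ≤ t by omega)]; exact hr2)
  have hsum : ∑ u ∈ Finset.Ico t β, M.V u (if u ≤ t then a else r u)
      = M.V t a + ∑ u ∈ Finset.Ico (t+1) β, M.V u (r u) := by
    rw [Finset.sum_eq_sum_Ico_succ_bot htβ]
    simp only [if_pos le_rfl]
    congr 1
    apply Finset.sum_congr rfl
    intro u hu
    rw [Finset.mem_Ico] at hu
    rw [if_neg (by omega)]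
  rw [hr3]
  calc M.Vmin t β a sm
      ≤ ∑ u ∈ Finset.Ico t β, M.V u (if u ≤ t then a else r u) := hle
    _ = M.V t a + ∑ u ∈ Finset.Ico (t+1) β, M.V u (r u) := hsum

/-- extend an environment trajectory forward, choosing arbitrary successors -/
lemma exists_env_ext (hM : M.IsValid) :
    ∀ (d α : ℕ) (a : M.State), 1 ≤ α → α + d ≤ M.T → a ∈ M.S α →
      ∃ r : ℕ → M.State, M.EnvCompat α (α + d) r ∧ r α = a := by
  intro d
  induction d with
  | zero =>
    intro α a h1 h2 ha
    exact ⟨fun _ => a, by simpa using envCompat_const ha, rfl⟩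
  | succ d ih =>
    intro α a h1 h2 ha
    obtain ⟨hne, hsub⟩ := hM.2.2.2.2.2.2.1 α a h1 (by omega) ha
    obtain ⟨b, hb⟩ := hne
    obtain ⟨r, hr, hrα⟩ := ih (α + 1) b (by omega) (by omega) (hsub hb)
    have henv : M.EnvCompat α (α + 1 + d) (fun u => if u ≤ α then a else r u) :=
      envCompat_cons (by omega) ha hb hr hrα
    refine ⟨fun u => if u ≤ α then a else r u, ?_, by simp⟩
    have : α + (d + 1) = α + 1 + d := by omega
    rw [this]; exact henv
end Aux2
section Aux3

/-- the affine part of final-phase constraint row `i` at state `sm` (coordinates `1..K-1`). -/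
noncomputable def lin (M : MultiPhaseMDP) (x : ℕ → ℝ) (sm : M.State) (i : ℕ) : ℝ :=
  M.W M.K sm i 0 + ∑ j ∈ Finset.Icc 1 (M.K - 1), M.W M.K sm i j * x j

variable {M : MultiPhaseMDP}

lemma lin_congr {x1 x2 : ℕ → ℝ} (h : ∀ j, 1 ≤ j → j ≤ M.K - 1 → x1 j = x2 j)
    (sm : M.State) (i : ℕ) : M.lin x1 sm i = M.lin x2 sm i := by
  unfold lin
  congr 1
  apply Finset.sum_congr rfl
  intro j hj
  rw [Finset.mem_Icc] at hj
  rw [h j hj.1 hj.2]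

/-- candidate action set at time `t`, state `a`, final-phase inventory `y`. -/
noncomputable def ASet (M : MultiPhaseMDP) (x : ℕ → ℝ) (t : ℕ) (a : M.State) (y : ℝ) :
    Set ℝ :=
  insert (M.U t a)
    {r | ∃ b ∈ M.F t a, ∃ sm ∈ M.Reach (t+1) (M.grid M.K) b, ∃ i, (1 ≤ i ∧ i ≤ M.n M.K) ∧
      M.W M.K sm i M.K < 0 ∧
      r = -(M.lin x sm i) / M.W M.K sm i M.K - M.Vmin (t+1) (M.grid M.K) b sm - y}

lemma ASet_finite (x : ℕ → ℝ) (t : ℕ) (a : M.State) (y : ℝ) : (M.ASet x t a y).Finite := by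
  classical
  letI := M.fintype_state
  apply Set.Finite.insert
  apply Set.Finite.subset (Set.Finite.image
    (f := fun p : M.State × M.State × ℕ =>
      -(M.lin x p.2.1 p.2.2) / M.W M.K p.2.1 p.2.2 M.K -
        M.Vmin (t+1) (M.grid M.K) p.1 p.2.1 - y)
    ((Set.finite_univ (α := M.State)).prod
      ((Set.finite_univ (α := M.State)).prod (Set.finite_Icc 1 (M.n M.K)))))
  rintro r ⟨b, hb, sm, hsm, i, ⟨hi1, hi2⟩, hneg, rfl⟩
  exact ⟨(b, sm, i), ⟨Set.mem_univ _, Set.mem_univ _, hi1, hi2⟩, rfl⟩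

lemma ASet_nonempty (x : ℕ → ℝ) (t : ℕ) (a : M.State) (y : ℝ) :
    (M.ASet x t a y).Nonempty := ⟨_, Set.mem_insert _ _⟩

lemma ASet_congr {x1 x2 : ℕ → ℝ} (h : ∀ j, 1 ≤ j → j ≤ M.K - 1 → x1 j = x2 j)
    (t : ℕ) (a : M.State) (y : ℝ) : M.ASet x1 t a y = M.ASet x2 t a y := by
  have hl : ∀ sm i, M.lin x1 sm i = M.lin x2 sm i := fun sm i => lin_congr h sm i
  unfold ASet
  simp only [hl]

lemma neg_thresh {Wc L A1 A2 B : ℝ} (hW : Wc < 0) :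
    -L / Wc - A1 - A2 ≤ B ↔ Wc * (B + A1 + A2) + L ≤ 0 := by
  rw [sub_le_iff_le_add, sub_le_iff_le_add, div_le_iff_of_neg hW]
  constructor <;> intro h <;> nlinarith [h]

lemma pos_thresh {Wc L A1 A2 B : ℝ} (hW : 0 < Wc) :
    B ≤ -L / Wc - A1 - A2 ↔ Wc * (B + A1 + A2) + L ≤ 0 := by
  rw [le_sub_iff_add_le, le_sub_iff_add_le, le_div_iff₀ hW]
  constructor <;> intro h <;> nlinarith [h]

lemma cross_div {Wn Wp Ln Lp Vm Um : ℝ} (hn : Wn < 0) (hp : 0 < Wp)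
    (h : Wp * Wn * (Vm - Um) + Wp * Ln - Wn * Lp ≤ 0) :
    -Ln / Wn - Vm ≤ -Lp / Wp - Um := by
  have hn0 : Wn ≠ 0 := ne_of_lt hn
  have hp0 : Wp ≠ 0 := ne_of_gt hp
  have e1 : (-Ln / Wn - Vm) * (Wn * Wp) = -Ln * Wp - Vm * (Wn * Wp) := by
    field_simp
  have e2 : (-Lp / Wp - Um) * (Wn * Wp) = -Lp * Wn - Um * (Wn * Wp) := by
    field_simp
  have hs : Wn * Wp < 0 := mul_neg_of_neg_of_pos hn hp
  have key : (-Lp / Wp - Um) * (Wn * Wp) ≤ (-Ln / Wn - Vm) * (Wn * Wp) := by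
    rw [e1, e2]; nlinarith [h]
  nlinarith [key, hs]

/-- the safety invariant during the final phase. -/
def Safe (M : MultiPhaseMDP) (x : ℕ → ℝ) (t : ℕ) (a : M.State) (y : ℝ) : Prop :=
  ∀ sm ∈ M.Reach t (M.grid M.K) a, ∀ i, 1 ≤ i → i ≤ M.n M.K →
    (0 < M.W M.K sm i M.K →
      M.W M.K sm i M.K * (y + M.Umax t (M.grid M.K) a sm) + M.lin x sm i ≤ 0) ∧
    (M.W M.K sm i M.K < 0 →
      M.W M.K sm i M.K * (y + M.Vmin t (M.grid M.K) a sm) + M.lin x sm i ≤ 0)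

lemma action_spec (hM : M.IsValid) {x : ℕ → ℝ} {t : ℕ} {a : M.State} {y : ℝ}
    (ht1 : 1 ≤ t) (htT : t + 1 ≤ M.grid M.K) (ha : a ∈ M.S t)
    (hSafe : M.Safe x t a y)
    (hCross : ∀ b ∈ M.F t a, ∀ b' ∈ M.F t a,
      ∀ sm ∈ M.Reach (t+1) (M.grid M.K) b, ∀ s'm ∈ M.Reach (t+1) (M.grid M.K) b',
      ∀ i i', 1 ≤ i → i ≤ M.n M.K → 1 ≤ i' → i' ≤ M.n M.K →
      M.W M.K sm i M.K < 0 → 0 < M.W M.K s'm i' M.K →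
      M.W M.K s'm i' M.K * M.W M.K sm i M.K *
          (M.Vmin (t+1) (M.grid M.K) b sm - M.Umax (t+1) (M.grid M.K) b' s'm) +
        M.W M.K s'm i' M.K * M.lin x sm i - M.W M.K sm i M.K * M.lin x s'm i' ≤ 0) :
    M.U t a ≤ sSup (M.ASet x t a y) ∧ sSup (M.ASet x t a y) ≤ M.V t a ∧
      ∀ b ∈ M.F t a, M.Safe x (t+1) b (y + sSup (M.ASet x t a y)) := by
  have hgT : M.grid M.K = M.T := hM.2.2.1
  have htT' : t + 1 ≤ M.T := by omega
  have hUV : M.U t a ≤ M.V t a := hM.2.2.2.2.2.2.2.1 t a ht1 htT' ha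
  have hbdd := (ASet_finite (M := M) x t a y).bddAbove
  have hne := ASet_nonempty (M := M) x t a y
  have h1 : M.U t a ≤ sSup (M.ASet x t a y) := le_csSup hbdd (Set.mem_insert _ _)
  have h2 : sSup (M.ASet x t a y) ≤ M.V t a := by
    apply csSup_le hne
    rintro r (rfl | ⟨b, hb, sm, hsm, i, ⟨hi1, hi2⟩, hneg, rfl⟩)
    · exact hUV
    · rw [neg_thresh hneg]
      have hSf := (hSafe sm (reach_step (by omega) ha hb hsm) i hi1 hi2).2 hneg
      have hVs := Vmin_step (by omega) ha hb hsm
      nlinarith [mul_le_mul_of_nonpos_left hVs (le_of_lt hneg)]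
  refine ⟨h1, h2, ?_⟩
  intro b hb sm hsm i hi1 hi2
  constructor
  · intro hpos
    have hub : sSup (M.ASet x t a y) ≤
        -(M.lin x sm i) / M.W M.K sm i M.K - M.Umax (t+1) (M.grid M.K) b sm - y := by
      apply csSup_le hne
      rintro r (rfl | ⟨b', hb', s'm, hs'm, i', ⟨hi'1, hi'2⟩, hneg', rfl⟩)
      · rw [pos_thresh hpos]
        have hSf := (hSafe sm (reach_step (by omega) ha hb hsm) i hi1 hi2).1 hpos
        have hUs := Umax_step (by omega) ha hb hsm
        nlinarith [mul_le_mul_of_nonneg_left hUs (le_of_lt hpos)]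
      · have hcd := cross_div hneg' hpos
          (hCross b' hb' b hb s'm hs'm sm hsm i' i hi'1 hi'2 hi1 hi2 hneg' hpos)
        linarith [hcd]
    rw [pos_thresh hpos] at hub
    nlinarith [hub]
  · intro hneg
    have hmem : (-(M.lin x sm i) / M.W M.K sm i M.K -
        M.Vmin (t+1) (M.grid M.K) b sm - y) ∈ M.ASet x t a y :=
      Set.mem_insert_of_mem _ ⟨b, hb, sm, hsm, i, ⟨hi1, hi2⟩, hneg, rfl⟩
    have hlb := le_csSup hbdd hmem
    rw [neg_thresh hneg] at hlb
    nlinarith [hlb]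

end Aux3
section Aux4

variable {M : MultiPhaseMDP}

lemma forward_ext (hM : M.IsValid) (hK : 2 ≤ M.K)
    {π : ℕ → M.State → (ℕ → ℝ) → ℝ} (hfeas : M.FeasiblePolicy π)
    {s : ℕ → M.State} {x : ℕ → ℕ → ℝ}
    (hc : M.Compat π (M.grid (M.K - 1)) (M.K - 1) s x)
    {r : ℕ → M.State} (hr : M.EnvCompat (M.grid (M.K - 1)) (M.grid M.K) r)
    (hrm : r (M.grid (M.K - 1)) = s (M.grid (M.K - 1))) :
    ∃ s' : ℕ → M.State, ∃ x' : ℕ → ℕ → ℝ,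
      M.Compat π M.T M.K s' x' ∧
      (∀ t, t ≤ M.grid (M.K - 1) → s' t = s t) ∧
      (∀ t, t ≤ M.grid (M.K - 1) → x' t = x t) ∧
      (∀ t, M.grid (M.K - 1) ≤ t → s' t = r t) ∧
      (∀ t j, M.grid (M.K - 1) ≤ t → ¬ j = M.K → x' t j = x (M.grid (M.K - 1)) j) ∧
      (∀ α β, M.grid (M.K - 1) ≤ α → α ≤ β → β ≤ M.grid M.K →
        x' α M.K + (∑ u ∈ Finset.Ico α β, M.U u (r u)) ≤ x' β M.K ∧
        x' β M.K ≤ x' α M.K + (∑ u ∈ Finset.Ico α β, M.V u (r u))) ∧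
      (∀ t, M.grid (M.K - 1) ≤ t → ∀ j,
        x' (t + 1) j = x' t j + (if j = M.K then π t (r t) (x' t) else 0)) := by
  classical
  set m := M.grid (M.K - 1) with hmdef
  have hgT : M.grid M.K = M.T := hM.2.2.1
  have hK1 : M.K - 1 + 1 = M.K := by omega
  have hmN : m < M.grid M.K := by
    have h := hM.2.2.2.1 (M.K - 1) (by omega)
    rwa [hK1] at h
  have hm1 : 1 ≤ m := grid_one_le hM (by omega)
  let g : ℕ → ℕ → ℝ := fun k => Nat.rec (motive := fun _ => ℕ → ℝ) (x m)
    (fun k xk j => xk j + if j = M.K then π (m + k) (r (m + k)) xk else 0) k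
  let x' : ℕ → ℕ → ℝ := fun t => if t ≤ m then x t else g (t - m)
  let s' : ℕ → M.State := fun t => if t ≤ m then s t else r t
  have hg0 : g 0 = x m := rfl
  have hgs : ∀ k j, g (k+1) j = g k j +
      (if j = M.K then π (m + k) (r (m + k)) (g k) else 0) := fun _ _ => rfl
  have hx'le : ∀ t, t ≤ m → x' t = x t := by
    intro t ht; simp only [x', if_pos ht]
  have hs'le : ∀ t, t ≤ m → s' t = s t := by
    intro t ht; simp only [s', if_pos ht]
  have hs'ge : ∀ t, m ≤ t → s' t = r t := by
    intro t ht
    by_cases h : t ≤ m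
    · have htm : t = m := le_antisymm h ht
      simp only [s', if_pos h]
      rw [htm]
      exact hrm.symm
    · simp only [s', if_neg h]
  have hx'm : ∀ k, x' (m + k) = g k := by
    intro k
    cases k with
    | zero => simp only [x', Nat.add_zero, if_pos le_rfl]; rfl
    | succ k =>
      simp only [x', if_neg (show ¬ m + (k+1) ≤ m by omega)]
      rw [show m + (k + 1) - m = k + 1 by omega]
  have hrec : ∀ t, m ≤ t → ∀ j,
      x' (t + 1) j = x' t j + (if j = M.K then π t (r t) (x' t) else 0) := by
    intro t ht j
    obtain ⟨k, rfl⟩ : ∃ k, t = m + k := ⟨t - m, by omega⟩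
    rw [show m + k + 1 = m + (k + 1) by omega, hx'm (k+1), hx'm k]
  have hgconst : ∀ k j, ¬ j = M.K → g k j = x m j := by
    intro k
    induction k with
    | zero => intro j _; rfl
    | succ k ih =>
      intro j hj
      rw [hgs k j, if_neg hj, ih j hj, add_zero]
  have hx'const : ∀ t j, m ≤ t → ¬ j = M.K → x' t j = x m j := by
    intro t j ht hj
    obtain ⟨k, rfl⟩ : ∃ k, t = m + k := ⟨t - m, by omega⟩
    rw [hx'm k]; exact hgconst k j hj
  have hcompat : M.Compat π M.T M.K s' x' := by
    refine ⟨?_, ?_, ?_, ?_, ?_⟩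
    · intro j; rw [hx'le 1 hm1]; exact hc.1 j
    · rw [hs'le 1 hm1]; exact hc.2.1
    · intro t ht1 ht2
      by_cases h : t ≤ m
      · rw [hs'le t h]; exact hc.2.2.1 t ht1 h
      · rw [hs'ge t (by omega)]
        exact hr.1 t (by omega) (by omega)
    · intro t ht1 ht2
      by_cases h : t + 1 ≤ m
      · rw [hs'le (t+1) h, hs'le t (by omega)]
        exact hc.2.2.2.1 t ht1 (by omega)
      · rw [hs'ge (t+1) (by omega)]
        by_cases h2 : t ≤ m
        · rw [hs'le t h2]
          have htm : t = m := by omega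
          rw [htm, ← hrm]
          exact hr.2 m le_rfl (by omega)
        · rw [hs'ge t (by omega)]
          exact hr.2 t (by omega) (by omega)
    · intro v hv1 hv2 t hgt1 hgt2 j
      by_cases hvK : v ≤ M.K - 1
      · have hgvm : M.grid v ≤ m := grid_mono hM v (M.K - 1) hvK (by omega)
        rw [hx'le (t+1) (by omega), hx'le t (by omega), hs'le t (by omega)]
        exact hc.2.2.2.2 v hv1 hvK t hgt1 hgt2 j
      · have hvK' : v = M.K := by omega
        subst hvK'
        have htm : m ≤ t := hgt1
        rw [hs'ge t htm]
        exact hrec t htm j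
  obtain ⟨hbounds, _⟩ := hfeas s' x' hcompat
  have hstep : ∀ t, m ≤ t → t < M.grid M.K →
      M.U t (r t) ≤ π t (r t) (x' t) ∧ π t (r t) (x' t) ≤ M.V t (r t) := by
    intro t ht1 ht2
    have hb := hbounds t (by omega) (by omega)
    rwa [hs'ge t ht1] at hb
  have hsum : ∀ α d, m ≤ α → α + d ≤ M.grid M.K →
      x' α M.K + (∑ u ∈ Finset.Ico α (α + d), M.U u (r u)) ≤ x' (α + d) M.K ∧
      x' (α + d) M.K ≤ x' α M.K + (∑ u ∈ Finset.Ico α (α + d), M.V u (r u)) := by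
    intro α d hα
    induction d with
    | zero => intro _; simp
    | succ d ih =>
      intro hd
      obtain ⟨ih1, ih2⟩ := ih (by omega)
      have hkey := hrec (α + d) (by omega) M.K
      rw [if_pos rfl] at hkey
      have hst := hstep (α + d) (by omega) (by omega)
      rw [show α + (d+1) = (α + d) + 1 by omega]
      rw [Finset.sum_Ico_succ_top (by omega : α ≤ α + d),
        Finset.sum_Ico_succ_top (by omega : α ≤ α + d)]
      constructor
      · rw [hkey]; linarith [hst.1]
      · rw [hkey]; linarith [hst.2]
  refine ⟨s', x', hcompat, hs'le, hx'le, hs'ge, hx'const, ?_, hrec⟩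
  intro α β hα hαβ hβ
  obtain ⟨d, rfl⟩ : ∃ d, β = α + d := ⟨β - α, by omega⟩
  exact hsum α d hα hβ

end Aux4
section Aux5

variable {M : MultiPhaseMDP}

lemma envCompat_glue {m α N : ℕ} (hmα : m + 1 ≤ α) (hαN : α ≤ N)
    {p q : ℕ → M.State} {sp sα : M.State}
    (hpE : M.EnvCompat m (α - 1) p) (hpT : p (α - 1) = sp)
    (hqE : M.EnvCompat α N q) (hqα : q α = sα) (hF : sα ∈ M.F (α - 1) sp) :
    M.EnvCompat m N (fun u => if u ≤ α - 1 then p u else q u) := by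
  constructor
  · intro u hu1 hu2
    by_cases h : u ≤ α - 1
    · simp only [if_pos h]; exact hpE.1 u hu1 h
    · simp only [if_neg h]; exact hqE.1 u (by omega) hu2
  · intro u hu1 hu2
    by_cases h : u + 1 ≤ α - 1
    · simp only [if_pos h, if_pos (show u ≤ α - 1 by omega)]
      exact hpE.2 u hu1 (by omega)
    · by_cases h2 : u ≤ α - 1
      · have hu : u = α - 1 := by omega
        simp only [if_pos h2, if_neg h]
        rw [hu, hpT, show α - 1 + 1 = α by omega, hqα]
        exact hF
      · simp only [if_neg h2, if_neg h]
        exact hqE.2 u (by omega) hu2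

lemma sum_split_K (hK : 2 ≤ M.K) (w : ℕ → ℝ) (xv : ℕ → ℝ) :
    ∑ j ∈ Finset.Icc 1 M.K, w j * xv j
      = (∑ j ∈ Finset.Icc 1 (M.K - 1), w j * xv j) + w M.K * xv M.K := by
  have h := Finset.sum_Icc_succ_top (a := 1) (b := M.K - 1) (by omega)
    (fun j => w j * xv j)
  rw [show M.K - 1 + 1 = M.K by omega] at h
  exact h

lemma forward_dir (hM : M.IsValid) (hK : 2 ≤ M.K)
    {π : ℕ → M.State → (ℕ → ℝ) → ℝ} (hfeas : M.FeasiblePolicy π) :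
    M.FeasibleReduced π := by
  classical
  intro s x hc
  set m := M.grid (M.K - 1) with hmdef
  have hgT : M.grid M.K = M.T := hM.2.2.1
  have hK1 : M.K - 1 + 1 = M.K := by omega
  have hmN : m < M.grid M.K := by
    have h := hM.2.2.2.1 (M.K - 1) (by omega)
    rwa [hK1] at h
  have hm1 : 1 ≤ m := grid_one_le hM (by omega)
  have hsm : s m ∈ M.S m := hc.2.2.1 m hm1 le_rfl
  have hxK0 : ∀ t, 1 ≤ t → t ≤ m → x t M.K = 0 :=
    compat_coord_zero hM hc (by omega) (fun v hv1 hv2 => by omega)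
  -- a default extension of the environment
  obtain ⟨r0, hr0, hr0m⟩ := exists_env_ext hM (M.grid M.K - m) m (s m) hm1
    (by omega) hsm
  rw [show m + (M.grid M.K - m) = M.grid M.K by omega] at hr0
  obtain ⟨s₀, x₀, hcomp₀, hs₀le, hx₀le, hs₀ge, hx₀c, hx₀sum, _⟩ :=
    forward_ext hM hK hfeas hc hr0 hr0m
  obtain ⟨hb₀, hcon₀⟩ := hfeas s₀ x₀ hcomp₀
  refine ⟨?_, ?_, ?_, ?_, ?_, ?_⟩
  · -- action bounds before time m
    intro t ht1 ht2
    have h := hb₀ t ht1 (by omega)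
    rwa [hs₀le t (by omega), hx₀le t (by omega)] at h
  · -- constraints for phases v ≤ K - 2
    intro v hv1 hv2 i hi1 hi2
    have hgvm : M.grid v ≤ m := grid_mono hM v (M.K - 1) (by omega) (by omega)
    have h := hcon₀ v hv1 (by omega) i hi1 hi2
    rw [hs₀le _ hgvm, hx₀le _ hgvm,
      sum_split_K hK (fun j => M.W v (s (M.grid v)) i j) (x (M.grid v)),
      hxK0 (M.grid v) (grid_one_le hM (by omega)) hgvm, mul_zero, add_zero] at h
    linarith [h]
  · -- constraints for phase K - 1
    intro i hi1 hi2
    have h := hcon₀ (M.K - 1) (by omega) (by omega) i hi1 hi2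
    rw [hs₀le _ le_rfl, hx₀le _ le_rfl,
      sum_split_K hK (fun j => M.W (M.K - 1) (s m) i j) (x m),
      hxK0 m hm1 le_rfl, mul_zero, add_zero] at h
    linarith [h]
  · -- family (1): positive rows and Umax
    intro sm hsmR i hi1 hi2 hpos
    obtain ⟨r, hrE, hrm, hrT, hrsum⟩ := Umax_exists hsmR
    obtain ⟨s', x', hcomp, hsle, hxle, hsge, hxc, hxsum, _⟩ :=
      forward_ext hM hK hfeas hc hrE hrm
    obtain ⟨hb, hcon⟩ := hfeas s' x' hcomp
    have hconK := hcon M.K (by omega) le_rfl i hi1 hi2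
    have hsT : s' (M.grid M.K) = sm := by
      rw [hsge _ (le_of_lt hmN)]; exact hrT
    have hxm0 : x' m M.K = 0 := by
      rw [hxle m le_rfl]; exact hxK0 m hm1 le_rfl
    have hge := (hxsum m (M.grid M.K) le_rfl (le_of_lt hmN) le_rfl).1
    rw [hxm0, zero_add] at hge
    have hUle : M.Umax m (M.grid M.K) (s m) sm ≤ x' (M.grid M.K) M.K := by
      rw [hrsum]; exact hge
    rw [hsT, sum_split_K hK (fun j => M.W M.K sm i j) (x' (M.grid M.K))] at hconK
    have hcoord : (∑ j ∈ Finset.Icc 1 (M.K - 1), M.W M.K sm i j * x' (M.grid M.K) j)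
        = ∑ j ∈ Finset.Icc 1 (M.K - 1), M.W M.K sm i j * x m j := by
      apply Finset.sum_congr rfl
      intro j hj
      rw [Finset.mem_Icc] at hj
      rw [hxc (M.grid M.K) j (le_of_lt hmN) (by omega)]
    rw [hcoord] at hconK
    linarith [mul_le_mul_of_nonneg_left hUle (le_of_lt hpos)]
  · -- family (2): negative rows and Vmin
    intro sm hsmR i hi1 hi2 hneg
    obtain ⟨r, hrE, hrm, hrT, hrsum⟩ := Vmin_exists hsmR
    obtain ⟨s', x', hcomp, hsle, hxle, hsge, hxc, hxsum, _⟩ :=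
      forward_ext hM hK hfeas hc hrE hrm
    obtain ⟨hb, hcon⟩ := hfeas s' x' hcomp
    have hconK := hcon M.K (by omega) le_rfl i hi1 hi2
    have hsT : s' (M.grid M.K) = sm := by
      rw [hsge _ (le_of_lt hmN)]; exact hrT
    have hxm0 : x' m M.K = 0 := by
      rw [hxle m le_rfl]; exact hxK0 m hm1 le_rfl
    have hle := (hxsum m (M.grid M.K) le_rfl (le_of_lt hmN) le_rfl).2
    rw [hxm0, zero_add] at hle
    have hVle : x' (M.grid M.K) M.K ≤ M.Vmin m (M.grid M.K) (s m) sm := by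
      rw [hrsum]; exact hle
    rw [hsT, sum_split_K hK (fun j => M.W M.K sm i j) (x' (M.grid M.K))] at hconK
    have hcoord : (∑ j ∈ Finset.Icc 1 (M.K - 1), M.W M.K sm i j * x' (M.grid M.K) j)
        = ∑ j ∈ Finset.Icc 1 (M.K - 1), M.W M.K sm i j * x m j := by
      apply Finset.sum_congr rfl
      intro j hj
      rw [Finset.mem_Icc] at hj
      rw [hxc (M.grid M.K) j (le_of_lt hmN) (by omega)]
    rw [hcoord] at hconK
    linarith [mul_le_mul_of_nonpos_left hVle (le_of_lt hneg)]
  · -- family (3): the cross constraints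
    intro α hα1 hα2 i i' hi1 hi2 hi'1 hi'2 sα s'α hsp sm hsmR s'm hs'mR hneg hpos
    obtain ⟨sp, hspR, hsαF, hs'αF⟩ := hsp
    obtain ⟨p, hpE, hpm, hpT⟩ := hspR
    obtain ⟨q, hqE, hqα, hqT, hqsum⟩ := Vmin_exists hsmR
    obtain ⟨q', hq'E, hq'α, hq'T, hq'sum⟩ := Umax_exists hs'mR
    have hr₁E : M.EnvCompat m (M.grid M.K) (fun u => if u ≤ α - 1 then p u else q u) :=
      envCompat_glue hα1 hα2 hpE hpT hqE hqα hsαF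
    have hr₂E : M.EnvCompat m (M.grid M.K) (fun u => if u ≤ α - 1 then p u else q' u) :=
      envCompat_glue hα1 hα2 hpE hpT hq'E hq'α hs'αF
    have hr₁m : (if m ≤ α - 1 then p m else q m) = s m := by
      rw [if_pos (show m ≤ α - 1 by omega)]; exact hpm
    have hr₂m : (if m ≤ α - 1 then p m else q' m) = s m := by
      rw [if_pos (show m ≤ α - 1 by omega)]; exact hpm
    obtain ⟨s₁, x₁, hcomp₁, hs₁le, hx₁le, hs₁ge, hx₁c, hx₁sum, hrec₁⟩ :=
      forward_ext hM hK hfeas hc hr₁E hr₁m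
    obtain ⟨s₂, x₂, hcomp₂, hs₂le, hx₂le, hs₂ge, hx₂c, hx₂sum, hrec₂⟩ :=
      forward_ext hM hK hfeas hc hr₂E hr₂m
    obtain ⟨hb₁, hcon₁⟩ := hfeas s₁ x₁ hcomp₁
    obtain ⟨hb₂, hcon₂⟩ := hfeas s₂ x₂ hcomp₂
    -- common inventory at time α
    have hcommon : ∀ d, m + d ≤ α → x₁ (m + d) = x₂ (m + d) := by
      intro d
      induction d with
      | zero => intro _; rw [Nat.add_zero, hx₁le m le_rfl, hx₂le m le_rfl]
      | succ d ih =>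
        intro hd
        have ih' := ih (by omega)
        funext j
        rw [show m + (d + 1) = (m + d) + 1 by omega,
          hrec₁ (m + d) (by omega) j, hrec₂ (m + d) (by omega) j, ih',
          if_pos (show m + d ≤ α - 1 by omega)]
        rw [if_pos (show m + d ≤ α - 1 by omega)]
    have hyα : x₁ α M.K = x₂ α M.K := by
      have h := hcommon (α - m) (by omega)
      rw [show m + (α - m) = α by omega] at h
      rw [h]
    -- constraint for trajectory 1 (row i at sm, negative)
    have hconK₁ := hcon₁ M.K (by omega) le_rfl i hi1 hi2
    have hsT₁ : s₁ (M.grid M.K) = sm := by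
      rw [hs₁ge _ (le_of_lt hmN), if_neg (show ¬ M.grid M.K ≤ α - 1 by omega)]
      exact hqT
    have hb₁sum := (hx₁sum α (M.grid M.K) (by omega) (by omega) le_rfl).2
    have hVsum : (∑ u ∈ Finset.Ico α (M.grid M.K),
        M.V u (if u ≤ α - 1 then p u else q u))
        = M.Vmin α (M.grid M.K) sα sm := by
      rw [hqsum]
      apply Finset.sum_congr rfl
      intro u hu
      rw [Finset.mem_Ico] at hu
      rw [if_neg (show ¬ u ≤ α - 1 by omega)]
    rw [hVsum] at hb₁sum
    rw [hsT₁, sum_split_K hK (fun j => M.W M.K sm i j) (x₁ (M.grid M.K))] at hconK₁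
    have hcoord₁ : (∑ j ∈ Finset.Icc 1 (M.K - 1), M.W M.K sm i j * x₁ (M.grid M.K) j)
        = ∑ j ∈ Finset.Icc 1 (M.K - 1), M.W M.K sm i j * x m j := by
      apply Finset.sum_congr rfl
      intro j hj
      rw [Finset.mem_Icc] at hj
      rw [hx₁c (M.grid M.K) j (le_of_lt hmN) (by omega)]
    rw [hcoord₁] at hconK₁
    have h1 : M.W M.K sm i M.K * (x₁ α M.K + M.Vmin α (M.grid M.K) sα sm) +
        (M.W M.K sm i 0 + ∑ j ∈ Finset.Icc 1 (M.K - 1), M.W M.K sm i j * x m j) ≤ 0 := by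
      have hmul := mul_le_mul_of_nonpos_left hb₁sum (le_of_lt hneg)
      linarith [hmul]
    -- constraint for trajectory 2 (row i' at s'm, positive)
    have hconK₂ := hcon₂ M.K (by omega) le_rfl i' hi'1 hi'2
    have hsT₂ : s₂ (M.grid M.K) = s'm := by
      rw [hs₂ge _ (le_of_lt hmN), if_neg (show ¬ M.grid M.K ≤ α - 1 by omega)]
      exact hq'T
    have hb₂sum := (hx₂sum α (M.grid M.K) (by omega) (by omega) le_rfl).1
    have hUsum : (∑ u ∈ Finset.Ico α (M.grid M.K),
        M.U u (if u ≤ α - 1 then p u else q' u))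
        = M.Umax α (M.grid M.K) s'α s'm := by
      rw [hq'sum]
      apply Finset.sum_congr rfl
      intro u hu
      rw [Finset.mem_Ico] at hu
      rw [if_neg (show ¬ u ≤ α - 1 by omega)]
    rw [hUsum] at hb₂sum
    rw [hsT₂, sum_split_K hK (fun j => M.W M.K s'm i' j) (x₂ (M.grid M.K))] at hconK₂
    have hcoord₂ : (∑ j ∈ Finset.Icc 1 (M.K - 1), M.W M.K s'm i' j * x₂ (M.grid M.K) j)
        = ∑ j ∈ Finset.Icc 1 (M.K - 1), M.W M.K s'm i' j * x m j := by
      apply Finset.sum_congr rfl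
      intro j hj
      rw [Finset.mem_Icc] at hj
      rw [hx₂c (M.grid M.K) j (le_of_lt hmN) (by omega)]
    rw [hcoord₂] at hconK₂
    have h2 : M.W M.K s'm i' M.K * (x₁ α M.K + M.Umax α (M.grid M.K) s'α s'm) +
        (M.W M.K s'm i' 0 + ∑ j ∈ Finset.Icc 1 (M.K - 1), M.W M.K s'm i' j * x m j)
        ≤ 0 := by
      have hmul := mul_le_mul_of_nonneg_left hb₂sum (le_of_lt hpos)
      rw [hyα]
      linarith [hmul]
    -- combine
    have hs3 : (∑ j ∈ Finset.Icc 1 (M.K - 1),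
        (M.W M.K sm i j * M.W M.K s'm i' M.K - M.W M.K sm i M.K * M.W M.K s'm i' j)
          * x m j)
        = M.W M.K s'm i' M.K * (∑ j ∈ Finset.Icc 1 (M.K - 1), M.W M.K sm i j * x m j)
          - M.W M.K sm i M.K *
            (∑ j ∈ Finset.Icc 1 (M.K - 1), M.W M.K s'm i' j * x m j) := by
      rw [Finset.mul_sum, Finset.mul_sum, ← Finset.sum_sub_distrib]
      apply Finset.sum_congr rfl
      intro j _
      ring
    rw [hs3]
    nlinarith [mul_nonpos_of_nonneg_of_nonpos (le_of_lt hpos) h1,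
      mul_nonpos_of_nonneg_of_nonpos (by linarith : (0:ℝ) ≤ -(M.W M.K sm i M.K)) h2]

end Aux5
section Aux6

variable {M : MultiPhaseMDP}

lemma backward_dir (hM : M.IsValid) (hK : 2 ≤ M.K)
    {π : ℕ → M.State → (ℕ → ℝ) → ℝ} (hred : M.FeasibleReduced π) :
    ∃ Pol : ℕ → M.State → (ℕ → ℝ) → ℝ, M.FeasiblePolicy Pol := by
  classical
  set m := M.grid (M.K - 1) with hmdef
  set Pol : ℕ → M.State → (ℕ → ℝ) → ℝ :=
    fun t a xv => if t < m then π t a xv else sSup (M.ASet xv t a (xv M.K)) with hPoldef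
  refine ⟨Pol, ?_⟩
  intro s x hcf
  have hgT : M.grid M.K = M.T := hM.2.2.1
  have hK1 : M.K - 1 + 1 = M.K := by omega
  have hmN : m < M.grid M.K := by
    have h := hM.2.2.2.1 (M.K - 1) (by omega)
    rwa [hK1] at h
  have hm1 : 1 ≤ m := grid_one_le hM (by omega)
  -- the trajectory is compatible with the reduced instance
  have hcr : M.Compat π m (M.K - 1) s x := by
    refine ⟨hcf.1, hcf.2.1, ?_, ?_, ?_⟩
    · intro t ht1 ht2; exact hcf.2.2.1 t ht1 (by omega)
    · intro t ht1 ht2; exact hcf.2.2.2.1 t ht1 (by omega)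
    · intro v hv1 hv2 t hgt1 hgt2 j
      have hgvm : M.grid v ≤ m := grid_mono hM v (M.K - 1) hv2 (by omega)
      have h := hcf.2.2.2.2 v hv1 (by omega) t hgt1 hgt2 j
      rw [h]
      by_cases hj : j = v
      · rw [if_pos hj, if_pos hj]
        have htm : t < m := by omega
        simp only [Pol, if_pos htm]
      · rw [if_neg hj, if_neg hj]
  obtain ⟨hrb, hrc2, hrcK1, hrF1, hrF2, hrF3⟩ := hred s x hcr
  have hxK0 : ∀ t, 1 ≤ t → t ≤ m → x t M.K = 0 :=
    compat_coord_zero hM hcr (by omega) (fun v hv1 hv2 => by omega)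
  -- coordinates other than K are frozen during the final phase
  have hxc : ∀ d, m + d ≤ M.grid M.K → ∀ j, ¬ j = M.K → x (m + d) j = x m j := by
    intro d
    induction d with
    | zero => intro _ j _; rfl
    | succ d ih =>
      intro hd j hj
      have h := hcf.2.2.2.2 M.K (by omega) le_rfl (m + d)
        (by omega) (by omega) j
      rw [show m + (d + 1) = (m + d) + 1 by omega, h, if_neg hj,
        ih (by omega) j hj, add_zero]
  -- recursion for coordinate K during the final phase
  have hxKrec : ∀ t, m ≤ t → t < M.grid M.K →
      x (t+1) M.K = x t M.K + Pol t (s t) (x t) := by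
    intro t ht1 ht2
    have h := hcf.2.2.2.2 M.K (by omega) le_rfl t (by omega) (by omega) M.K
    rw [h, if_pos rfl]
  have hcoords : ∀ t, m ≤ t → t ≤ M.grid M.K →
      ∀ j, 1 ≤ j → j ≤ M.K - 1 → x t j = x m j := by
    intro t ht1 ht2 j hj1 hj2
    obtain ⟨d, rfl⟩ : ∃ d, t = m + d := ⟨t - m, by omega⟩
    exact hxc d ht2 j (by omega)
  have hPoleq : ∀ t, m ≤ t → t ≤ M.grid M.K → Pol t (s t) (x t)
      = sSup (M.ASet (x m) t (s t) (x t M.K)) := by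
    intro t ht1 ht2
    simp only [Pol, if_neg (not_lt.mpr ht1)]
    rw [ASet_congr (fun j hj1 hj2 => hcoords t ht1 ht2 j hj1 hj2) t (s t) (x t M.K)]
  have hstR : ∀ t, m ≤ t → t ≤ M.grid M.K → s t ∈ M.Reach m t (s m) := by
    intro t ht1 ht2
    refine ⟨s, ⟨?_, ?_⟩, rfl, rfl⟩
    · intro u hu1 hu2; exact hcf.2.2.1 u (by omega) (by omega)
    · intro u hu1 hu2; exact hcf.2.2.2.1 u (by omega) (by omega)
  -- cross conditions along the trajectory
  have hcross : ∀ t, m ≤ t → t < M.grid M.K →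
      ∀ b ∈ M.F t (s t), ∀ b' ∈ M.F t (s t),
      ∀ sm ∈ M.Reach (t+1) (M.grid M.K) b, ∀ s'm ∈ M.Reach (t+1) (M.grid M.K) b',
      ∀ i i', 1 ≤ i → i ≤ M.n M.K → 1 ≤ i' → i' ≤ M.n M.K →
      M.W M.K sm i M.K < 0 → 0 < M.W M.K s'm i' M.K →
      M.W M.K s'm i' M.K * M.W M.K sm i M.K *
          (M.Vmin (t+1) (M.grid M.K) b sm - M.Umax (t+1) (M.grid M.K) b' s'm) +
        M.W M.K s'm i' M.K * M.lin (x m) sm i -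
          M.W M.K sm i M.K * M.lin (x m) s'm i' ≤ 0 := by
    intro t ht1 ht2 b hb b' hb' sm hsm s'm hs'm i i' hi1 hi2 hi'1 hi'2 hneg hpos
    have hsp : ∃ sp ∈ M.Reach m ((t+1) - 1) (s m), b ∈ M.F ((t+1) - 1) sp ∧
        b' ∈ M.F ((t+1) - 1) sp := by
      refine ⟨s t, ?_, ?_, ?_⟩ <;> rw [Nat.add_sub_cancel]
      · exact hstR t ht1 (by omega)
      · exact hb
      · exact hb'
    have h := hrF3 (t+1) (by omega) (by omega) i i' hi1 hi2 hi'1 hi'2 b b' hsp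
      sm hsm s'm hs'm hneg hpos
    have hs3 : (∑ j ∈ Finset.Icc 1 (M.K - 1),
        (M.W M.K sm i j * M.W M.K s'm i' M.K - M.W M.K sm i M.K * M.W M.K s'm i' j)
          * x m j)
        = M.W M.K s'm i' M.K * (∑ j ∈ Finset.Icc 1 (M.K - 1), M.W M.K sm i j * x m j)
          - M.W M.K sm i M.K *
            (∑ j ∈ Finset.Icc 1 (M.K - 1), M.W M.K s'm i' j * x m j) := by
      rw [Finset.mul_sum, Finset.mul_sum, ← Finset.sum_sub_distrib]
      apply Finset.sum_congr rfl
      intro j _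
      ring
    rw [hs3] at h
    simp only [lin]
    linarith [h]
  -- safety along the trajectory
  have hsafe : ∀ d, m + d ≤ M.grid M.K →
      M.Safe (x m) (m + d) (s (m + d)) (x (m + d) M.K) := by
    intro d
    induction d with
    | zero =>
      intro _
      simp only [Nat.add_zero]
      intro sm hsm i hi1 hi2
      constructor
      · intro hpos
        have h := hrF1 sm hsm i hi1 hi2 hpos
        simp only [lin]
        rw [hxK0 m hm1 le_rfl]
        linarith [h]
      · intro hneg
        have h := hrF2 sm hsm i hi1 hi2 hneg
        simp only [lin]
        rw [hxK0 m hm1 le_rfl]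
        linarith [h]
    | succ d ih =>
      intro hd
      have ihS := ih (by omega)
      have hact := action_spec hM (x := x m) (t := m + d) (a := s (m + d))
        (y := x (m + d) M.K) (by omega) (by omega)
        (hcf.2.2.1 (m + d) (by omega) (by omega)) ihS
        (hcross (m + d) (by omega) (by omega))
      have hstep := hact.2.2 (s (m + d + 1)) (hcf.2.2.2.1 (m + d) (by omega) (by omega))
      have hxeq : x (m + d + 1) M.K
          = x (m + d) M.K + sSup (M.ASet (x m) (m + d) (s (m + d)) (x (m + d) M.K)) := by
        rw [hxKrec (m + d) (by omega) (by omega), hPoleq (m + d) (by omega) (by omega)]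
      rw [show m + (d + 1) = m + d + 1 by omega, hxeq]
      exact hstep
  constructor
  · -- action bounds
    intro t ht1 ht2
    by_cases htm : t < m
    · have h := hrb t ht1 htm
      have heq : Pol t (s t) (x t) = π t (s t) (x t) := by simp only [Pol, if_pos htm]
      rw [heq]; exact h
    · have ht1' : m ≤ t := by omega
      have hsafet : M.Safe (x m) t (s t) (x t M.K) := by
        obtain ⟨d, rfl⟩ : ∃ d, t = m + d := ⟨t - m, by omega⟩
        exact hsafe d (by omega)
      have hact := action_spec hM (x := x m) (t := t) (a := s t) (y := x t M.K)
        (by omega) (by omega) (hcf.2.2.1 t (by omega) (by omega)) hsafet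
        (hcross t ht1' (by omega))
      rw [hPoleq t ht1' (by omega)]
      exact ⟨hact.1, hact.2.1⟩
  · -- end-of-phase constraints
    intro v hv1 hv2 i hi1 hi2
    by_cases hvK : v ≤ M.K - 1
    · have hgvm : M.grid v ≤ m := grid_mono hM v (M.K - 1) hvK (by omega)
      rw [sum_split_K hK (fun j => M.W v (s (M.grid v)) i j) (x (M.grid v)),
        hxK0 (M.grid v) (grid_one_le hM (by omega)) hgvm, mul_zero, add_zero]
      by_cases hv2' : v ≤ M.K - 2
      · exact hrc2 v hv1 hv2' i hi1 hi2
      · have hveq : v = M.K - 1 := by omega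
        subst hveq
        exact hrcK1 i hi1 hi2
    · have hveq : v = M.K := by omega
      subst hveq
      have hsT : s (M.grid M.K) ∈ M.S (M.grid M.K) :=
        hcf.2.2.1 _ (grid_one_le hM le_rfl) (by omega)
      have hsafeT : M.Safe (x m) (M.grid M.K) (s (M.grid M.K)) (x (M.grid M.K) M.K) := by
        have h := hsafe (M.grid M.K - m) (by omega)
        rw [show m + (M.grid M.K - m) = M.grid M.K by omega] at h
        exact h
      have hSm := hsafeT (s (M.grid M.K)) (reach_self hsT) i hi1 hi2
      have hWne := hM.2.2.2.2.2.2.2.2.2 M.K (by omega) le_rfl (s (M.grid M.K)) hsT i hi1 hi2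
      rw [sum_split_K hK (fun j => M.W M.K (s (M.grid M.K)) i j) (x (M.grid M.K))]
      have hcoordK : (∑ j ∈ Finset.Icc 1 (M.K - 1),
          M.W M.K (s (M.grid M.K)) i j * x (M.grid M.K) j)
          = ∑ j ∈ Finset.Icc 1 (M.K - 1), M.W M.K (s (M.grid M.K)) i j * x m j := by
        apply Finset.sum_congr rfl
        intro j hj
        rw [Finset.mem_Icc] at hj
        rw [hcoords (M.grid M.K) (le_of_lt hmN) le_rfl j hj.1 hj.2]
      rw [hcoordK]
      rcases lt_trichotomy (M.W M.K (s (M.grid M.K)) i M.K) 0 with hneg | hzero | hpos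
      · have h := hSm.2 hneg
        rw [Vmin_refl hsT] at h
        simp only [lin] at h
        linarith [h]
      · exact absurd hzero hWne
      · have h := hSm.1 hpos
        rw [Umax_refl hsT] at h
        simp only [lin] at h
        linarith [h]

end Aux6
end MultiPhaseMDP

/-- **Theorem (Phase reduction).** A `K`-phase minimax-MDP (`K ≥ 2`) admits a feasible policy
if and only if the associated `(K−1)`-phase minimax-MDP `Ŵ` admits a feasible policy. -/
theorem multiPhase_phase_reduction (M : MultiPhaseMDP) (hM : M.IsValid) (hK : 2 ≤ M.K) :
    (∃ π : ℕ → M.State → (ℕ → ℝ) → ℝ, M.FeasiblePolicy π) ↔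
    (∃ π : ℕ → M.State → (ℕ → ℝ) → ℝ, M.FeasibleReduced π) := by
  constructor
  · rintro ⟨p, hp⟩
    exact ⟨p, MultiPhaseMDP.forward_dir hM hK hp⟩
  · rintro ⟨p, hp⟩
    exact MultiPhaseMDP.backward_dir hM hK hp
end
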